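/- arXiv:2008.04997 — 13 statements merged into one kernel-verified Lean document; each statement's English description precedes it below -/
import Mathlib

section
/- For every finite group G there exists a finite partially ordered set P with exactly 4·|G| elements whose automorphism group Aut(P) (the group of order isomorphisms P ≃ P) is isomorphic to G. -/
/-!
Choose generators `s₀, …, s_{t-1}` of `G`, each outside the subgroup generated by the earlier
ones, and put `pⱼ = s₀ ⋯ s_{j-1}`. Order `G × {0, 1, 2, 3}` by the vertical chains
`(a, 0) < (a, 1) < (a, 2) < (a, 3)`, by `(a, 0) < (b, 2)` when `a⁻¹ b ∈ {1, s₀, …, s_{t-1}}`,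
and by `(a, 1) < (b, 3)` when `a⁻¹ b ∈ {p₀, …, p_t}`. Left translations by `G` are
automorphisms. Conversely, an automorphism preserves levels (the length of the longest chain
below a point) and vertical chains, so it acts as one bijection `φ` of `G` on every level, and
`φ` preserves both relations. Induction on `j` gives `φ (g pⱼ) = φ g pⱼ`: the prefix products are
rigid, since `pᵢ = pⱼ sₘ` with `j < i` forces `i = j + 1`. Thus `φ` commutes with right
multiplication by every `sⱼ = pⱼ⁻¹ p_{j+1}`, hence is a left translation.
-/

open Set Subgroup Function

theorem le_rank_apply {α : Type*} [Preorder α] {rank : α → ℕ} (hrank : StrictMono rank)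
    (hpred : ∀ x, 0 < rank x → ∃ y < x, rank y + 1 = rank x) {σ : α → α} (hσ : StrictMono σ)
    (x : α) : rank x ≤ rank (σ x) := by
  induction h : rank x generalizing x with
  | zero => exact Nat.zero_le _
  | succ n ih =>
    obtain ⟨y, hyx, hy⟩ := hpred x (by omega)
    exact (ih y (by omega)).trans_lt (hrank (hσ hyx))

theorem OrderIso.rank_apply {α : Type*} [Preorder α] {rank : α → ℕ} (hrank : StrictMono rank)
    (hpred : ∀ x, 0 < rank x → ∃ y < x, rank y + 1 = rank x) (σ : α ≃o α) (x : α) :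
    rank (σ x) = rank x := by
  refine le_antisymm ?_ (le_rank_apply hrank hpred σ.strictMono x)
  simpa using le_rank_apply hrank hpred σ.symm.strictMono (σ x)

theorem image_update_Iio_of_le {α : Type*} (s : ℕ → α) (a : α) {t j : ℕ} (hj : j ≤ t) :
    update s t a '' Iio j = s '' Iio j :=
  image_congr fun i hi => update_of_ne (by simp at hi; omega) a s

theorem image_update_Iio_succ {α : Type*} (s : ℕ → α) (a : α) (t : ℕ) :
    update s t a '' Iio (t + 1) = insert a (s '' Iio t) := by
  rw [← Order.succ_eq_add_one, Order.Iio_succ_eq_insert, image_insert_eq, update_self,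
    image_update_Iio_of_le s a le_rfl]

theorem closure_insert_eq_sup {G : Type*} [Group G] (a : G) (X : Set G) :
    closure (insert a X) = closure {a} ⊔ closure X := by
  rw [insert_eq, Subgroup.closure_union]

theorem exists_irredundant_closure_eq {G : Type*} [Group G] (S : Finset G) :
    ∃ (t : ℕ) (s : ℕ → G), (∀ j < t, s j ∉ closure (s '' Iio j)) ∧
      closure (s '' Iio t) = closure (S : Set G) := by
  classical
  induction S using Finset.induction_on with
  | empty => exact ⟨0, fun _ => 1, by simp, by simp⟩
  | insert a S _ ih =>
    obtain ⟨t, s, hs, hcl⟩ := ih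
    rw [Finset.coe_insert, closure_insert_eq_sup, ← hcl]
    by_cases ha : a ∈ closure (s '' Iio t)
    · refine ⟨t, s, hs, (sup_eq_right.mpr ?_).symm⟩
      exact (closure_le _).mpr (singleton_subset_iff.mpr ha)
    · refine ⟨t + 1, update s t a, fun j hj => ?_, ?_⟩
      · rw [image_update_Iio_of_le s a (Nat.le_of_lt_succ hj)]
        rcases (Nat.lt_succ_iff_lt_or_eq.mp hj) with hj | rfl
        · rw [update_of_ne hj.ne]; exact hs j hj
        · rwa [update_self]
      · rw [image_update_Iio_succ, closure_insert_eq_sup]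

structure GenSeq (G : Type*) [Group G] where
  length : ℕ
  gen : ℕ → G
  gen_notMem : ∀ j < length, gen j ∉ closure (gen '' Iio j)
  closure_eq_top : closure (gen '' Iio length) = ⊤

theorem GenSeq.nonempty (G : Type*) [Group G] [Group.FG G] : Nonempty (GenSeq G) := by
  obtain ⟨S, hS⟩ := Group.fg_def.mp ‹_›
  obtain ⟨t, s, hs, hcl⟩ := exists_irredundant_closure_eq S
  exact ⟨⟨t, s, hs, hcl.trans hS⟩⟩

namespace GenSeq

variable {G : Type*} [Group G] (gs : GenSeq G)

def subgroup (j : ℕ) : Subgroup G := closure (gs.gen '' Iio j)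

def partialProd : ℕ → G
  | 0 => 1
  | j + 1 => partialProd j * gs.gen j

theorem subgroup_mono : Monotone gs.subgroup := fun _ _ h =>
  closure_mono (image_mono (Iio_subset_Iio h))

theorem gen_mem_subgroup {i j : ℕ} (h : i < j) : gs.gen i ∈ gs.subgroup j :=
  subset_closure ⟨i, h, rfl⟩

theorem gen_notMem_subgroup {j : ℕ} (hj : j < gs.length) : gs.gen j ∉ gs.subgroup j :=
  gs.gen_notMem j hj

theorem partialProd_mem_subgroup (j : ℕ) : gs.partialProd j ∈ gs.subgroup j := by
  induction j with
  | zero => exact one_mem _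
  | succ j ih => exact mul_mem (gs.subgroup_mono j.le_succ ih) (gs.gen_mem_subgroup j.lt_succ_self)

theorem partialProd_succ_notMem {j : ℕ} (hj : j < gs.length) :
    gs.partialProd (j + 1) ∉ gs.subgroup j := fun h =>
  gs.gen_notMem_subgroup hj <| by
    simpa [partialProd] using mul_mem (inv_mem (gs.partialProd_mem_subgroup j)) h

theorem partialProd_notMem_of_lt {i j : ℕ} (hij : i < j) (hj : j ≤ gs.length) :
    gs.partialProd j ∉ gs.subgroup i := by
  obtain ⟨k, rfl⟩ := Nat.exists_eq_add_of_lt hij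
  exact fun h => gs.partialProd_succ_notMem (by omega) (gs.subgroup_mono (by omega) h)

theorem partialProd_injOn : InjOn gs.partialProd (Iic gs.length) := by
  intro i hi j hj h
  by_contra hne
  rcases Nat.lt_or_gt_of_ne hne with hij | hji
  · exact gs.partialProd_notMem_of_lt hij hj (h ▸ gs.partialProd_mem_subgroup i)
  · exact gs.partialProd_notMem_of_lt hji hi (h ▸ gs.partialProd_mem_subgroup j)

theorem eq_succ_of_partialProd_eq_mul_gen {i j m : ℕ} (hji : j < i) (hi : i ≤ gs.length)
    (hm : m < gs.length) (h : gs.partialProd i = gs.partialProd j * gs.gen m) : i = j + 1 := by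
  obtain ⟨k, rfl⟩ : ∃ k, i = k + 1 := ⟨i - 1, by omega⟩
  have hjk : gs.partialProd j ∈ gs.subgroup k :=
    gs.subgroup_mono (by omega) (gs.partialProd_mem_subgroup j)
  rcases lt_trichotomy m k with hmk | rfl | hkm
  · exact absurd (h ▸ mul_mem hjk (gs.gen_mem_subgroup hmk)) (gs.partialProd_succ_notMem hi)
  · have : gs.partialProd m = gs.partialProd j := mul_right_cancel h
    rw [gs.partialProd_injOn (mem_Iic.mpr (by omega)) (mem_Iic.mpr (by omega)) this]
  · refine absurd ?_ (gs.gen_notMem_subgroup hm)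
    have := mul_mem (inv_mem (gs.subgroup_mono hkm.le hjk))
      (gs.subgroup_mono hkm (gs.partialProd_mem_subgroup (k + 1)))
    rwa [h, inv_mul_cancel_left] at this

def gens : Set G := insert 1 (gs.gen '' Iio gs.length)

def prods : Set G := gs.partialProd '' Iic gs.length

end GenSeq

def rightEquivariantSubgroup {G : Type*} [Group G] (φ : G → G) : Subgroup G where
  carrier := {c | ∀ g, φ (g * c) = φ g * c}
  one_mem' := by simp
  mul_mem' {a b} ha hb g := by rw [← mul_assoc, hb, ha, mul_assoc]
  inv_mem' {a} ha g := by rw [eq_mul_inv_iff_mul_eq, ← ha, inv_mul_cancel_right]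

namespace GenSeq

variable {G : Type*} [Group G] (gs : GenSeq G)

section Rigidity

variable {φ : G → G} (hφ : Injective φ)
  (h₁ : ∀ a b, a⁻¹ * b ∈ gs.gens → (φ a)⁻¹ * φ b ∈ gs.gens)
  (h₂ : ∀ a b, a⁻¹ * b ∈ gs.prods → (φ a)⁻¹ * φ b ∈ gs.prods)
include hφ h₁ h₂

theorem partialProd_succ_mem_rightEquivariantSubgroup {j : ℕ} (hj : j < gs.length)
    (ih : ∀ i ≤ j, gs.partialProd i ∈ rightEquivariantSubgroup φ) :
    gs.partialProd (j + 1) ∈ rightEquivariantSubgroup φ := by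
  intro g
  -- `φ (g * p (j + 1))` is `φ g * p i` for some `i` by `h₂`, and `φ g * p j * e` with
  -- `e ∈ gs.gens` by `h₁`; rigidity of the prefix products then forces `i = j + 1`.
  have hmul (c x y : G) : (c * x)⁻¹ * (c * y) = x⁻¹ * y := by group
  obtain ⟨i, hi, hpi⟩ := h₂ g (g * gs.partialProd (j + 1)) (by
    rw [inv_mul_cancel_left]; exact ⟨j + 1, mem_Iic.mpr hj, rfl⟩)
  rw [eq_inv_mul_iff_mul_eq] at hpi
  have hgens := h₁ (g * gs.partialProd j) (g * gs.partialProd (j + 1)) (by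
    rw [hmul, partialProd, inv_mul_cancel_left]; exact mem_insert_of_mem _ ⟨j, hj, rfl⟩)
  rw [ih j le_rfl, ← hpi, hmul] at hgens
  have hji : j < i := by
    by_contra! hij
    rw [← ih i hij] at hpi
    have := gs.partialProd_injOn hi (mem_Iic.mpr hj) (mul_left_cancel (hφ hpi))
    omega
  suffices i = j + 1 by rw [← hpi, this]
  rcases hgens with h | ⟨m, hm, h⟩
  · have := gs.partialProd_injOn hi (mem_Iic.mpr hj.le) (inv_mul_eq_one.mp h).symm
    omega
  · exact gs.eq_succ_of_partialProd_eq_mul_gen hji hi hm (eq_mul_of_inv_mul_eq h.symm)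

theorem partialProd_mem_rightEquivariantSubgroup {j : ℕ} (hj : j ≤ gs.length) :
    gs.partialProd j ∈ rightEquivariantSubgroup φ := by
  induction j using Nat.strong_induction_on with
  | _ j ih =>
    cases j with
    | zero => exact one_mem _
    | succ j =>
      exact gs.partialProd_succ_mem_rightEquivariantSubgroup hφ h₁ h₂ hj
        fun i hi => ih i (by omega) (by omega)

theorem apply_eq_apply_one_mul (g : G) : φ g = φ 1 * g := by
  have hgen : gs.gen '' Iio gs.length ⊆ rightEquivariantSubgroup φ := by
    rintro _ ⟨j, hj, rfl⟩
    have := mul_mem (inv_mem (gs.partialProd_mem_rightEquivariantSubgroup hφ h₁ h₂ hj.le))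
      (gs.partialProd_mem_rightEquivariantSubgroup hφ h₁ h₂ (Nat.succ_le_of_lt hj))
    rwa [partialProd, inv_mul_cancel_left] at this
  have hg : g ∈ rightEquivariantSubgroup φ := by
    rw [← closure_le, gs.closure_eq_top, top_le_iff] at hgen
    exact hgen ▸ mem_top g
  simpa using hg 1

end Rigidity

-- Entry `(i, j)` is the set of all `a⁻¹ * b` with `⟨a, i⟩ ≤ ⟨b, j⟩` in `gs.Poset`.
def rel : Fin 4 → Fin 4 → Set G :=
  ![![{1}, {1}, gs.gens, gs.gens ∪ gs.prods],
    ![∅,   {1}, {1},     gs.prods],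
    ![∅,   ∅,   {1},     {1}],
    ![∅,   ∅,   ∅,       {1}]]

theorem one_mem_gens : (1 : G) ∈ gs.gens := mem_insert _ _

theorem one_mem_prods : (1 : G) ∈ gs.prods := ⟨0, Nat.zero_le _, rfl⟩

theorem mul_mem_rel {i j k : Fin 4} {a b : G} (ha : a ∈ gs.rel i j) (hb : b ∈ gs.rel j k) :
    a * b ∈ gs.rel i k := by
  fin_cases i <;> fin_cases j <;> fin_cases k <;> simp_all [rel, one_mem_gens, one_mem_prods]

theorem eq_and_eq_one_of_mem_rel {i j : Fin 4} {a : G} (h : a ∈ gs.rel i j)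
    (h' : a⁻¹ ∈ gs.rel j i) : i = j ∧ a = 1 := by
  fin_cases i <;> fin_cases j <;> simp_all [rel]

theorem le_of_mem_rel {i j : Fin 4} {a : G} (h : a ∈ gs.rel i j) : i ≤ j := by
  fin_cases i <;> fin_cases j <;> simp_all [rel]

theorem rel_self (i : Fin 4) : gs.rel i i = {1} := by
  fin_cases i <;> rfl

theorem one_mem_rel {i j : Fin 4} (h : i ≤ j) : (1 : G) ∈ gs.rel i j := by
  fin_cases i <;> fin_cases j <;> simp_all [rel, one_mem_gens, one_mem_prods]

theorem rel_of_val_eq_succ {i j : Fin 4} (h : (j : ℕ) = i + 1) : gs.rel i j = {1} := by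
  fin_cases i <;> fin_cases j <;> simp_all [rel]

-- A copy of `G × Fin 4`, indexed by `gs` because `gs` determines its order.
@[ext]
structure Poset (gs : GenSeq G) where
  elt : G
  level : Fin 4

namespace Poset

variable {gs}

instance : PartialOrder gs.Poset where
  le x y := x.elt⁻¹ * y.elt ∈ gs.rel x.level y.level
  le_refl x := by simp [rel_self]
  le_trans x y z hxy hyz := by simpa [mul_assoc] using gs.mul_mem_rel hxy hyz
  le_antisymm x y hxy hyx := by
    obtain ⟨h2, h1⟩ := gs.eq_and_eq_one_of_mem_rel hxy (by simpa using hyx)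
    exact Poset.ext (inv_mul_eq_one.mp h1) h2

theorem le_def {x y : gs.Poset} : x ≤ y ↔ x.elt⁻¹ * y.elt ∈ gs.rel x.level y.level := Iff.rfl

def equivProd : gs.Poset ≃ G × Fin 4 where
  toFun x := (x.elt, x.level)
  invFun p := ⟨p.1, p.2⟩

instance [Fintype G] : Fintype gs.Poset := .ofEquiv _ equivProd.symm

theorem card_eq [Fintype G] : Fintype.card gs.Poset = Fintype.card G * 4 := by
  rw [Fintype.card_congr equivProd, Fintype.card_prod, Fintype.card_fin]

theorem level_strictMono : StrictMono fun x : gs.Poset => (x.level : ℕ) := by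
  intro x y hlt
  have hle : x.level ≤ y.level := gs.le_of_mem_rel hlt.le
  refine Fin.lt_def.mp (hle.lt_of_ne fun heq => hlt.ne (Poset.ext ?_ heq))
  have := le_def.mp hlt.le
  rw [heq, rel_self] at this
  exact inv_mul_eq_one.mp this

theorem exists_pred (x : gs.Poset) (hx : 0 < (x.level : ℕ)) :
    ∃ y < x, (y.level : ℕ) + 1 = x.level := by
  obtain ⟨a, ⟨_ | k, hk⟩⟩ := x
  · exact absurd hx (lt_irrefl 0)
  · refine ⟨⟨a, ⟨k, by omega⟩⟩, lt_of_le_of_ne ?_ fun h => ?_, rfl⟩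
    · exact le_def.mpr (by simpa using gs.one_mem_rel (Fin.mk_le_mk.mpr k.le_succ))
    · simpa using congrArg (fun x : gs.Poset => (x.level : ℕ)) h

theorem level_apply (σ : gs.Poset ≃o gs.Poset) (x : gs.Poset) : (σ x).level = x.level :=
  Fin.ext (σ.rank_apply level_strictMono exists_pred x)

theorem elt_eq_of_le {x y : gs.Poset} (h : x ≤ y) (hxy : (y.level : ℕ) = x.level + 1) :
    x.elt = y.elt := by
  have := le_def.mp h
  rw [gs.rel_of_val_eq_succ hxy] at this
  exact inv_mul_eq_one.mp this

theorem elt_apply_mk (σ : gs.Poset ≃o gs.Poset) (a : G) (i : Fin 4) :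
    (σ ⟨a, i⟩).elt = (σ ⟨a, 0⟩).elt := by
  have step (i j : Fin 4) (hij : (j : ℕ) = i + 1) : (σ ⟨a, i⟩).elt = (σ ⟨a, j⟩).elt := by
    have hle : (⟨a, i⟩ : gs.Poset) ≤ ⟨a, j⟩ :=
      le_def.mpr (by simpa using gs.one_mem_rel (Fin.le_iff_val_le_val.mpr (by omega)))
    exact elt_eq_of_le (σ.monotone hle) (by simp [level_apply, hij])
  have h01 := step 0 1 rfl
  have h12 := step 1 2 rfl
  have h23 := step 2 3 rfl
  fin_cases i <;> simp_all

theorem mem_rel_elt_apply (σ : gs.Poset ≃o gs.Poset) {a b : G} {i j : Fin 4}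
    (h : a⁻¹ * b ∈ gs.rel i j) : (σ ⟨a, 0⟩).elt⁻¹ * (σ ⟨b, 0⟩).elt ∈ gs.rel i j := by
  have := le_def.mp (σ.monotone (show (⟨a, i⟩ : gs.Poset) ≤ ⟨b, j⟩ from h))
  rw [level_apply, level_apply, elt_apply_mk σ a i, elt_apply_mk σ b j] at this
  exact this

theorem apply_eq (σ : gs.Poset ≃o gs.Poset) (x : gs.Poset) :
    σ x = ⟨(σ ⟨1, 0⟩).elt * x.elt, x.level⟩ := by
  have hinj : Injective fun a => (σ ⟨a, 0⟩).elt := fun a b h =>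
    congrArg Poset.elt (σ.injective (Poset.ext h (by simp only [level_apply])))
  have := gs.apply_eq_apply_one_mul hinj (fun a b h => mem_rel_elt_apply σ (i := 0) (j := 2) h)
    (fun a b h => mem_rel_elt_apply σ (i := 1) (j := 3) h) x.elt
  refine Poset.ext ?_ (level_apply σ x)
  rw [← this, ← elt_apply_mk σ x.elt x.level]

def translate : G →* (gs.Poset ≃o gs.Poset) where
  toFun a :=
    { toFun x := ⟨a * x.elt, x.level⟩
      invFun x := ⟨a⁻¹ * x.elt, x.level⟩
      left_inv x := by simp
      right_inv x := by simp
      map_rel_iff' := by simp [le_def, mul_assoc] }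
  map_one' := by ext <;> simp
  map_mul' a b := by ext <;> simp [mul_assoc]

theorem translate_bijective : Bijective (translate (gs := gs)) := by
  refine ⟨fun a b h => ?_, fun σ => ⟨(σ ⟨1, 0⟩).elt, ?_⟩⟩
  · simpa [translate] using congrArg (fun σ => (σ ⟨1, 0⟩).elt) h
  · exact DFunLike.ext _ _ fun x => (apply_eq σ x).symm

end Poset

noncomputable def posetAutEquiv : (gs.Poset ≃o gs.Poset) ≃* G :=
  (MulEquiv.ofBijective Poset.translate Poset.translate_bijective).symm

end GenSeq

/-- For every finite group `G` there exists a finite partially ordered set `P` with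
exactly `4 * |G|` elements whose automorphism group (the group of order isomorphisms
`P ≃o P` under composition) is isomorphic to `G`. -/
theorem exists_poset_card_four_mul_aut_iso (G : Type*) [Group G] [Fintype G] :
    ∃ (P : Type) (_ : PartialOrder P) (_ : Fintype P),
      Fintype.card P = 4 * Fintype.card G ∧ Nonempty ((P ≃o P) ≃* G) := by
  obtain ⟨gs⟩ := GenSeq.nonempty (Shrink.{0} G)
  refine ⟨gs.Poset, inferInstance, inferInstance, ?_, ⟨gs.posetAutEquiv.trans Shrink.mulEquiv⟩⟩
  rw [GenSeq.Poset.card_eq, Fintype.card_shrink, mul_comm]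
end

section
/- For every finite group G there exists a topological space X with exactly 4·|G| points whose group of self-homeomorphisms is isomorphic to G. -/
/-!
Pick elements `1 = a 0, a 1, …, a r` generating the finite group `H`, none of them in the subgroup
generated by its predecessors, and put `T = {a 0, …, a r}`, `E = {(a m)⁻¹ * a (m + 1)}`. On four
copies of `H` take the partial order in which every fibre `{g} × {0, 1, 2, 3}` is a chain, and in
addition `(g, 0) < (h, 2)` when `g⁻¹ * h ∈ T` and `(g, i) < (h, 3)` for `i ≤ 1` when `g⁻¹ * h ∈ E`.

Homeomorphisms of the Alexandrov topology are the order automorphisms. The level is strictly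
monotone and every fibre meets all four levels, so automorphisms preserve levels; consecutive levels
are related only inside a fibre, so they preserve fibres too. Hence an automorphism acts as
`(g, i) ↦ (σ g, i)` for a bijection `σ` of `H` preserving the relations `g⁻¹ * h ∈ T` and
`g⁻¹ * h ∈ E`. By irredundancy, the step `(a i)⁻¹ * a (i + 1)` is the only element of
`(a i)⁻¹ • T ∩ (E ∪ {1})` that is neither `1` nor an earlier step, so by induction `σ` commutes with
right multiplication by every `a i`. As these generate `H`, `σ` is a left translation.
-/

/-- The group of self-homeomorphisms of a topological space, under composition. -/
instance homeomorphGroup (X : Type*) [TopologicalSpace X] : Group (X ≃ₜ X) where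
  mul f g := g.trans f
  one := Homeomorph.refl X
  inv := Homeomorph.symm
  mul_assoc _ _ _ := Homeomorph.ext fun _ => rfl
  one_mul _ := Homeomorph.ext fun _ => rfl
  mul_one _ := Homeomorph.ext fun _ => rfl
  inv_mul_cancel f := Homeomorph.ext fun x => f.symm_apply_apply x

def Topology.IsUpperSet.homeomorphMulEquivOrderIso (α : Type*) [Preorder α] [TopologicalSpace α]
    [Topology.IsUpperSet α] : (α ≃ₜ α) ≃* (α ≃o α) where
  toFun f := f.toEquiv.toOrderIso (Topology.IsUpperSet.monotone_iff_continuous.2 f.continuous)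
    (Topology.IsUpperSet.monotone_iff_continuous.2 f.symm.continuous)
  invFun f :=
    { toEquiv := f.toEquiv
      continuous_toFun := Topology.IsUpperSet.monotone_iff_continuous.1 f.monotone
      continuous_invFun := Topology.IsUpperSet.monotone_iff_continuous.1 f.symm.monotone }
  left_inv _ := rfl
  right_inv _ := rfl
  map_mul' _ _ := rfl

open Set Pointwise

section

variable {H : Type*}

section Group

variable [Group H]

def equivariantSubgroup (σ : H → H) : Subgroup H where
  carrier := {x | ∀ g, σ (g * x) = σ g * x}
  one_mem' g := by simp
  mul_mem' {x y} hx hy g := by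
    simp only [mem_ofPred_eq] at *
    rw [← mul_assoc, hy, hx, mul_assoc]
  inv_mem' {x} hx g := by
    simp only [mem_ofPred_eq] at *
    rw [eq_mul_inv_iff_mul_eq, ← hx, inv_mul_cancel_right]

lemma apply_eq_apply_one_mul_of_closure_eq_top {σ : H → H} {S : Set H}
    (hS : Subgroup.closure S = ⊤) (hσ : S ⊆ equivariantSubgroup σ) (g : H) : σ g = σ 1 * g := by
  have hg : g ∈ equivariantSubgroup σ := (Subgroup.closure_le _).2 hσ (hS ▸ Subgroup.mem_top g)
  simpa using hg 1

def Preserves (σ : H → H) (S : Set H) : Prop :=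
  ∀ g h, (σ g)⁻¹ * σ h ∈ S ↔ g⁻¹ * h ∈ S

namespace Preserves

variable {σ : H → H} {S K : Set H}

lemma inter (hS : Preserves σ S) (hK : Preserves σ K) : Preserves σ (S ∩ K) := fun g h => by
  simp only [mem_inter_iff, hS g h, hK g h]

lemma diff (hS : Preserves σ S) (hK : Preserves σ K) : Preserves σ (S \ K) := fun g h => by
  simp only [mem_sdiff, hS g h, hK g h]

lemma mul (hσ : Function.Surjective σ) (hS : Preserves σ S) (hK : Preserves σ K) :
    Preserves σ (S * K) := by
  have mem_mul_iff : ∀ g h : H, g⁻¹ * h ∈ S * K ↔ ∃ z, g⁻¹ * z ∈ S ∧ z⁻¹ * h ∈ K := fun g h =>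
    ⟨fun ⟨s, hs, k, hk, hsk⟩ => ⟨g * s, by simpa using hs, by
        rwa [mul_inv_rev, mul_assoc, ← hsk, inv_mul_cancel_left]⟩,
      fun ⟨z, hz, hz'⟩ => ⟨_, hz, _, hz', by group⟩⟩
  intro g h
  rw [mem_mul_iff, mem_mul_iff]
  constructor
  · rintro ⟨z, hz, hz'⟩
    obtain ⟨z, rfl⟩ := hσ z
    exact ⟨z, (hS g z).1 hz, (hK z h).1 hz'⟩
  · rintro ⟨z, hz, hz'⟩
    exact ⟨σ z, (hS g z).2 hz, (hK z h).2 hz'⟩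

end Preserves

lemma preserves_singleton_iff {σ : H → H} (hσ : Function.Injective σ) {x : H} :
    Preserves σ {x} ↔ x ∈ equivariantSubgroup σ := by
  simp only [Preserves, mem_singleton_iff, inv_mul_eq_iff_eq_mul]
  exact ⟨fun h g => (h g (g * x)).2 rfl, fun h g k => by rw [← h g, hσ.eq_iff]⟩

lemma preserves_of_subset {σ : H → H} (hσ : Function.Injective σ) {S : Set H}
    (hS : S ⊆ equivariantSubgroup σ) : Preserves σ S := fun g h => by
  constructor
  · intro hx
    have hgh : g * ((σ g)⁻¹ * σ h) = h := hσ (by rw [hS hx g, mul_inv_cancel_left])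
    rwa [← hgh, inv_mul_cancel_left]
  · intro hx
    rwa [← mul_inv_cancel_left g h, hS hx g, inv_mul_cancel_left]

def chainStep (a : ℕ → H) (m : ℕ) : H := (a m)⁻¹ * a (m + 1)

structure IsIrredundantChain (a : ℕ → H) (r : ℕ) : Prop where
  zero : a 0 = 1
  not_mem_closure : ∀ i, 0 < i → i ≤ r → a i ∉ Subgroup.closure (a '' Iio i)

lemma apply_mem_closure_image_Iio {a : ℕ → H} {k i : ℕ} (h : k < i) :
    a k ∈ Subgroup.closure (a '' Iio i) :=
  Subgroup.subset_closure (mem_image_of_mem a h)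

namespace IsIrredundantChain

variable {a : ℕ → H} {r : ℕ}

lemma le_of_inv_mul_eq_chainStep (hc : IsIrredundantChain a r) {p j m : ℕ} (hj : j ≤ r)
    (hm : m < r) (h : (a p)⁻¹ * a j = chainStep a m) : m ≤ p := by
  by_contra! hpm
  unfold chainStep at h
  rcases lt_trichotomy j (m + 1) with hjm | rfl | hjm
  · refine hc.not_mem_closure (m + 1) m.succ_pos hm ?_
    have : a (m + 1) = a m * (a p)⁻¹ * a j := by rw [mul_assoc, h]; group
    rw [this]
    exact mul_mem (mul_mem (apply_mem_closure_image_Iio m.lt_succ_self)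
      (inv_mem (apply_mem_closure_image_Iio (by omega)))) (apply_mem_closure_image_Iio hjm)
  · refine hc.not_mem_closure m (by omega) hm.le ?_
    rw [← inv_inj.1 (mul_right_cancel h)]
    exact apply_mem_closure_image_Iio hpm
  · refine hc.not_mem_closure j (by omega) hj ?_
    have : a j = a p * (a m)⁻¹ * a (m + 1) := by rw [mul_assoc, ← h]; group
    rw [this]
    exact mul_mem (mul_mem (apply_mem_closure_image_Iio (by omega))
      (inv_mem (apply_mem_closure_image_Iio (by omega)))) (apply_mem_closure_image_Iio hjm)

lemma chainStep_ne_one (hc : IsIrredundantChain a r) {i : ℕ} (hi : i < r) :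
    chainStep a i ≠ 1 := by
  intro h
  refine hc.not_mem_closure (i + 1) i.succ_pos hi ?_
  rw [← inv_mul_eq_one.1 h]
  exact apply_mem_closure_image_Iio i.lt_succ_self

lemma inter_sdiff_eq_singleton_chainStep (hc : IsIrredundantChain a r) {i : ℕ} (hi : i < r) :
    ({(a i)⁻¹} * a '' Iic r ∩ insert 1 (chainStep a '' Iio r)) \ insert 1 (chainStep a '' Iio i)
      = {chainStep a i} := by
  ext x
  simp only [singleton_mul, mem_sdiff, mem_inter_iff, mem_insert_iff, mem_image, mem_Iic, mem_Iio,
    mem_singleton_iff]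
  constructor
  · rintro ⟨⟨⟨_, ⟨j, hj, rfl⟩, rfl⟩, hx | ⟨m, hm, hx⟩⟩, hne⟩
    · exact absurd (Or.inl hx) hne
    · have hmi := hc.le_of_inv_mul_eq_chainStep hj hm hx.symm
      rcases hmi.lt_or_eq with hmi | rfl
      · exact absurd (Or.inr ⟨m, hmi, hx⟩) hne
      · exact hx.symm
  · rintro rfl
    refine ⟨⟨⟨a (i + 1), ⟨i + 1, hi, rfl⟩, rfl⟩, Or.inr ⟨i, hi, rfl⟩⟩, ?_⟩
    rintro (h | ⟨m, hm, h⟩)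
    · exact hc.chainStep_ne_one hi h
    · exact absurd (hc.le_of_inv_mul_eq_chainStep (j := m + 1) (by omega) hi h) (by omega)

lemma chainStep_mem_equivariantSubgroup (hc : IsIrredundantChain a r) {σ : H ≃ H}
    (hT : Preserves σ (a '' Iic r)) (hE : Preserves σ (insert 1 (chainStep a '' Iio r)))
    {i : ℕ} (hi : i < r) (ha : ∀ k ≤ i, a k ∈ equivariantSubgroup σ) :
    chainStep a i ∈ equivariantSubgroup σ := by
  have hai : {(a i)⁻¹} ⊆ (equivariantSubgroup σ : Set H) :=
    singleton_subset_iff.2 (inv_mem (ha i le_rfl))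
  have hsteps : insert 1 (chainStep a '' Iio i) ⊆ equivariantSubgroup σ :=
    insert_subset (one_mem _) (image_subset_iff.2 fun m hm =>
      mul_mem (inv_mem (ha m (le_of_lt hm))) (ha (m + 1) hm))
  rw [← preserves_singleton_iff σ.injective, ← hc.inter_sdiff_eq_singleton_chainStep hi]
  exact (((preserves_of_subset σ.injective hai).mul σ.surjective hT).inter hE).diff
    (preserves_of_subset σ.injective hsteps)

theorem apply_eq_apply_one_mul (hc : IsIrredundantChain a r)
    (hgen : Subgroup.closure (a '' Iic r) = ⊤) {σ : H ≃ H} (hT : Preserves σ (a '' Iic r))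
    (hE : Preserves σ (insert 1 (chainStep a '' Iio r))) (g : H) : σ g = σ 1 * g := by
  have ha : ∀ i ≤ r, ∀ k ≤ i, a k ∈ equivariantSubgroup σ := by
    intro i
    induction i with
    | zero =>
      rintro - k hk
      rw [Nat.le_zero.1 hk, hc.zero]
      exact one_mem _
    | succ i ih =>
      intro hi k hk
      replace ih := ih (by omega)
      rcases hk.lt_or_eq with hk | rfl
      · exact ih k (by omega)
      simpa [chainStep] using
        mul_mem (ih i le_rfl) (hc.chainStep_mem_equivariantSubgroup hT hE hi ih)
  exact apply_eq_apply_one_mul_of_closure_eq_top hgen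
    (image_subset_iff.2 fun k hk => ha k hk k le_rfl) g

lemma extend (hc : IsIrredundantChain a r) {x : H} (hx : x ∉ Subgroup.closure (a '' Iic r)) :
    IsIrredundantChain (fun i => if i ≤ r then a i else x) (r + 1) := by
  refine ⟨by simp [hc.zero], fun i hi hir => ?_⟩
  have himage : (fun i => if i ≤ r then a i else x) '' Iio i = a '' Iio i :=
    EqOn.image_eq fun k hk => if_pos (by simp only [mem_Iio] at hk; omega)
  rw [himage]
  split_ifs with h
  · exact hc.not_mem_closure i hi h
  · refine fun hmem => hx (Subgroup.closure_mono (image_mono fun k hk => ?_) hmem)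
    simp only [mem_Iio, mem_Iic] at *
    omega

end IsIrredundantChain

lemma closure_lt_closure_extend {a : ℕ → H} {r : ℕ} {x : H}
    (hx : x ∉ Subgroup.closure (a '' Iic r)) :
    Subgroup.closure (a '' Iic r) <
      Subgroup.closure ((fun i => if i ≤ r then a i else x) '' Iic (r + 1)) := by
  refine SetLike.lt_iff_le_and_exists.2 ⟨Subgroup.closure_mono ?_, x,
    Subgroup.subset_closure ⟨r + 1, self_mem_Iic, by simp⟩, hx⟩
  rintro _ ⟨k, hk, rfl⟩
  exact ⟨k, mem_Iic.2 (le_add_right hk), if_pos hk⟩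

lemma exists_isIrredundantChain_closure_eq_top [Finite H] :
    ∃ (a : ℕ → H) (r : ℕ), IsIrredundantChain a r ∧ Subgroup.closure (a '' Iic r) = ⊤ := by
  obtain ⟨K, ⟨a, r, hc, rfl⟩, hmax⟩ := (toFinite {K : Subgroup H |
      ∃ a r, IsIrredundantChain a r ∧ Subgroup.closure (a '' Iic r) = K}).exists_maximal
    ⟨_, fun _ => 1, 0, ⟨rfl, fun _ _ _ => by omega⟩, rfl⟩
  refine ⟨a, r, hc, ?_⟩
  by_contra hne
  obtain ⟨x, hx⟩ : ∃ x, x ∉ Subgroup.closure (a '' Iic r) := by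
    simpa [Subgroup.eq_top_iff'] using hne
  exact (closure_lt_closure_extend hx).not_ge (hmax ⟨_, _, hc.extend hx, rfl⟩
    (closure_lt_closure_extend hx).le)

end Group

-- `T` and `E` enter only through the order defined below.
@[ext]
structure CayleyPoset (T E : Set H) where
  elem : H
  level : Fin 4

namespace CayleyPoset

variable {T E : Set H}

def equivProd : CayleyPoset T E ≃ H × Fin 4 where
  toFun x := (x.elem, x.level)
  invFun p := ⟨p.1, p.2⟩

instance [Fintype H] : Fintype (CayleyPoset T E) := Fintype.ofEquiv _ equivProd.symm

lemma card_eq [Fintype H] : Fintype.card (CayleyPoset T E) = 4 * Fintype.card H := by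
  rw [Fintype.card_congr equivProd, Fintype.card_prod, Fintype.card_fin, mul_comm]

variable [Group H]

instance : PartialOrder (CayleyPoset T E) where
  le x y := x.level ≤ y.level ∧ (x.elem = y.elem ∨
    (x.level = 0 ∧ 2 ≤ y.level ∧ x.elem⁻¹ * y.elem ∈ T) ∨
    (x.level ≤ 1 ∧ y.level = 3 ∧ x.elem⁻¹ * y.elem ∈ E))
  le_refl x := ⟨le_rfl, Or.inl rfl⟩
  le_trans := by
    rintro ⟨g, i⟩ ⟨h, j⟩ ⟨k, l⟩ ⟨hij, hgh⟩ ⟨hjl, hhk⟩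
    dsimp only at *
    refine ⟨hij.trans hjl, ?_⟩
    rcases hgh with rfl | ⟨hi, hj, hT⟩ | ⟨hi, hj, hE⟩ <;>
      rcases hhk with rfl | ⟨hj', hl, hT'⟩ | ⟨hj', hl, hE'⟩
    · exact Or.inl rfl
    · exact Or.inr (Or.inl ⟨by omega, hl, hT'⟩)
    · exact Or.inr (Or.inr ⟨by omega, hl, hE'⟩)
    · exact Or.inr (Or.inl ⟨hi, by omega, hT⟩)
    · omega
    · omega
    · exact Or.inr (Or.inr ⟨hi, by omega, hE⟩)
    · omega
    · omega
  le_antisymm := by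
    rintro ⟨g, i⟩ ⟨h, j⟩ ⟨hij, hgh | ⟨hi, hj, -⟩ | ⟨hi, hj, -⟩⟩ ⟨hji, -⟩
    · exact CayleyPoset.ext hgh (le_antisymm hij hji)
    all_goals omega

lemma le_def {x y : CayleyPoset T E} : x ≤ y ↔ x.level ≤ y.level ∧ (x.elem = y.elem ∨
    (x.level = 0 ∧ 2 ≤ y.level ∧ x.elem⁻¹ * y.elem ∈ T) ∨
    (x.level ≤ 1 ∧ y.level = 3 ∧ x.elem⁻¹ * y.elem ∈ E)) := Iff.rfl

lemma elem_eq_of_le {x y : CayleyPoset T E} (hxy : x ≤ y)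
    (hlevel : y.level.val ≤ x.level.val + 1) : x.elem = y.elem := by
  rcases le_def.1 hxy with ⟨-, h | ⟨hx, hy, -⟩ | ⟨hx, hy, -⟩⟩
  · exact h
  all_goals omega

lemma level_strictMono : StrictMono (level : CayleyPoset T E → Fin 4) := by
  intro x y hxy
  refine (le_def.1 hxy.le).1.lt_of_ne fun hlevel => hxy.ne (CayleyPoset.ext ?_ hlevel)
  exact elem_eq_of_le hxy.le (by omega)

lemma mk_zero_le_mk_two_iff {g h : H} :
    (⟨g, 0⟩ : CayleyPoset T E) ≤ ⟨h, 2⟩ ↔ g⁻¹ * h ∈ insert 1 T := by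
  simp [le_def, inv_mul_eq_one]

lemma mk_one_le_mk_three_iff {g h : H} :
    (⟨g, 1⟩ : CayleyPoset T E) ≤ ⟨h, 3⟩ ↔ g⁻¹ * h ∈ insert 1 E := by
  simp [le_def, inv_mul_eq_one]

instance : TopologicalSpace (CayleyPoset T E) := Topology.upperSet _

instance : Topology.IsUpperSet (CayleyPoset T E) := ⟨rfl⟩

lemma mk_strictMono (g : H) : StrictMono fun i : Fin 4 => (⟨g, i⟩ : CayleyPoset T E) :=
  fun _ _ hij => lt_of_le_of_ne ⟨hij.le, Or.inl rfl⟩ fun h => hij.ne (congrArg level h)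

variable (f : CayleyPoset T E ≃o CayleyPoset T E)

lemma level_orderIso_apply (x : CayleyPoset T E) : (f x).level = x.level := by
  have le_level : ∀ (f : CayleyPoset T E ≃o CayleyPoset T E) x, x.level ≤ (f x).level :=
    fun f x => (level_strictMono.comp (f.strictMono.comp (mk_strictMono x.elem))).le_apply
  exact (le_level f x).antisymm' (by simpa using le_level f.symm (f x))

lemma elem_orderIso_apply_mk (g : H) (i : Fin 4) : (f ⟨g, i⟩).elem = (f ⟨g, 0⟩).elem := by
  induction i using Fin.induction with
  | zero => rfl
  | succ i ih =>
    rw [← ih]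
    refine (elem_eq_of_le (f.monotone (mk_strictMono g Fin.castSucc_lt_succ).le) ?_).symm
    simp [level_orderIso_apply]

lemma mk_elem_orderIso_apply_mk_zero (g : H) :
    (⟨(f ⟨g, 0⟩).elem, 0⟩ : CayleyPoset T E) = f ⟨g, 0⟩ :=
  CayleyPoset.ext rfl (level_orderIso_apply f ⟨g, 0⟩).symm

def elemEquiv : H ≃ H where
  toFun g := (f ⟨g, 0⟩).elem
  invFun g := (f.symm ⟨g, 0⟩).elem
  left_inv g := by simp only [mk_elem_orderIso_apply_mk_zero, OrderIso.symm_apply_apply]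
  right_inv g := by simp only [mk_elem_orderIso_apply_mk_zero f.symm, OrderIso.apply_symm_apply]

lemma orderIso_apply (x : CayleyPoset T E) : f x = ⟨elemEquiv f x.elem, x.level⟩ :=
  CayleyPoset.ext (elem_orderIso_apply_mk f _ _) (level_orderIso_apply f x)

lemma mk_elemEquiv_le_mk_elemEquiv_iff {g h : H} {i j : Fin 4} :
    (⟨elemEquiv f g, i⟩ : CayleyPoset T E) ≤ ⟨elemEquiv f h, j⟩ ↔
      (⟨g, i⟩ : CayleyPoset T E) ≤ ⟨h, j⟩ := by
  rw [← f.le_iff_le (x := ⟨g, i⟩), orderIso_apply f, orderIso_apply f ⟨h, j⟩]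

lemma elemEquiv_preserves :
    Preserves (elemEquiv f) (insert 1 T) ∧ Preserves (elemEquiv f) (insert 1 E) := by
  constructor <;> intro g h
  · rw [← mk_zero_le_mk_two_iff (E := E), ← mk_zero_le_mk_two_iff (E := E),
      mk_elemEquiv_le_mk_elemEquiv_iff]
  · rw [← mk_one_le_mk_three_iff (T := T), ← mk_one_le_mk_three_iff (T := T),
      mk_elemEquiv_le_mk_elemEquiv_iff]

variable (T E) in
def translate : H →* (CayleyPoset T E ≃o CayleyPoset T E) where
  toFun t :=
    { toFun x := ⟨t * x.elem, x.level⟩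
      invFun x := ⟨t⁻¹ * x.elem, x.level⟩
      left_inv x := by simp
      right_inv x := by simp
      map_rel_iff' := by simp [le_def, mul_assoc] }
  map_one' := by ext <;> simp
  map_mul' _ _ := by ext <;> simp [mul_assoc]

@[simp]
lemma translate_apply (t : H) (x : CayleyPoset T E) :
    translate T E t x = ⟨t * x.elem, x.level⟩ :=
  rfl

lemma translate_injective : Function.Injective (translate T E) := fun t u htu => by
  simpa using congrArg elem (DFunLike.congr_fun htu ⟨1, 0⟩)

end CayleyPoset

namespace IsIrredundantChain

variable [Group H] {a : ℕ → H} {r : ℕ}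

theorem translate_surjective (hc : IsIrredundantChain a r)
    (hgen : Subgroup.closure (a '' Iic r) = ⊤) :
    Function.Surjective (CayleyPoset.translate (a '' Iic r) (chainStep a '' Iio r)) := by
  intro f
  obtain ⟨hT, hE⟩ := CayleyPoset.elemEquiv_preserves f
  rw [insert_eq_of_mem (show (1 : H) ∈ a '' Iic r from ⟨0, Nat.zero_le r, hc.zero⟩)] at hT
  refine ⟨CayleyPoset.elemEquiv f 1, OrderIso.ext (funext fun x => ?_)⟩
  rw [CayleyPoset.orderIso_apply f x, hc.apply_eq_apply_one_mul hgen hT hE x.elem,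
    CayleyPoset.translate_apply]

end IsIrredundantChain

end

/-- For every finite group `G` there exists a topological space `X` with exactly
`4 * |G|` points whose group of self-homeomorphisms is isomorphic to `G`. -/
theorem exists_topSpace_card_four_mul_homeo_iso (G : Type*) [Group G] [Fintype G] :
    ∃ (X : Type) (_ : TopologicalSpace X) (_ : Fintype X),
      Fintype.card X = 4 * Fintype.card G ∧ Nonempty ((X ≃ₜ X) ≃* G) := by
  obtain ⟨a, r, hc, hgen⟩ := exists_isIrredundantChain_closure_eq_top (H := Shrink.{0} G)
  refine ⟨CayleyPoset (a '' Iic r) (chainStep a '' Iio r), inferInstance, inferInstance, ?_, ⟨?_⟩⟩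
  · rw [CayleyPoset.card_eq, Fintype.card_shrink]
  · exact (Topology.IsUpperSet.homeomorphMulEquivOrderIso _).trans <|
      (MulEquiv.ofBijective _ ⟨CayleyPoset.translate_injective,
        hc.translate_surjective hgen⟩).symm.trans Shrink.mulEquiv
end

section
/- Let p be a prime and k ≥ 1 an integer with p^k > 2. If P is a finite partially ordered set whose automorphism group Aut(P) is isomorphic to the cyclic group Z/p^k, then P has at least 2·p^k elements. -/
/-!
Let `f` generate `Aut(P) ≅ ℤ/p^k` and pick `x` not fixed by `g = f^(p^(k-1))`, so that the
`⟨f⟩`-orbit `O` of `x` has `p^k` points. An automorphism of finite order cannot move a point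
strictly upwards, so `O` is an antichain. If `|P| < 2p^k`, no point outside `O` has an orbit of
size `p^k`, so `g` fixes `P \ O` pointwise; then `x` and `g x` are incomparable and compare alike
with every other point, so swapping them is an automorphism. Since `Aut(P)` is abelian this swap
commutes with `f`, which forces `f (f x) = x`, impossible because the orbit of `x` has `p^k > 2`
points.
-/

open MulAction Subgroup Function

section OrbitOfPrimePowerOrder

variable {G α : Type*} [Group G] [MulAction G α] {p k : ℕ} [Fact p.Prime] {g : G}

theorem MulAction.exists_smul_ne_of_ne_one [FaithfulSMul G α] (hg : g ≠ 1) :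
    ∃ x : α, g • x ≠ x := by
  by_contra! hfix
  exact hg (faithfulSMul_iff.mp ‹_› g hfix)

theorem MulAction.minimalPeriod_eq_of_pow_smul_ne (hg : g ^ p ^ (k + 1) = 1) {x : α}
    (hx : g ^ p ^ k • x ≠ x) : minimalPeriod (g • ·) x = p ^ (k + 1) := by
  apply minimalPeriod_eq_prime_pow
  · rwa [IsPeriodicPt, IsFixedPt, smul_iterate]
  · simp only [IsPeriodicPt, IsFixedPt, smul_iterate, hg, one_smul]

theorem MulAction.ncard_orbit_zpowers_eq_of_pow_smul_ne [Finite α] (hg : g ^ p ^ (k + 1) = 1)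
    {x : α} (hx : g ^ p ^ k • x ≠ x) : (orbit (zpowers g) x).ncard = p ^ (k + 1) := by
  have := Fintype.ofFinite (orbit (zpowers g) x)
  rw [← minimalPeriod_eq_of_pow_smul_ne hg hx, minimalPeriod_eq_card, ← Nat.card_coe_set_eq,
    Nat.card_eq_fintype_card]

theorem MulAction.pow_smul_eq_of_notMem_orbit [Finite α] (hg : g ^ p ^ (k + 1) = 1)
    (hcard : Nat.card α < 2 * p ^ (k + 1)) {x y : α} (hx : g ^ p ^ k • x ≠ x)
    (hy : y ∉ orbit (zpowers g) x) : g ^ p ^ k • y = y := by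
  by_contra hy'
  have hdisj : Disjoint (orbit (zpowers g) x) (orbit (zpowers g) y) :=
    (orbit.eq_or_disjoint x y).resolve_left fun h => hy (h ▸ mem_orbit_self y)
  have := Set.ncard_le_ncard (Set.subset_univ (orbit (zpowers g) x ∪ orbit (zpowers g) y))
  rw [Set.ncard_univ, Set.ncard_union_eq hdisj, ncard_orbit_zpowers_eq_of_pow_smul_ne hg hx,
    ncard_orbit_zpowers_eq_of_pow_smul_ne hg hy'] at this
  omega

end OrbitOfPrimePowerOrder

theorem Function.Commute.isPeriodicPt_two_of_swap {α : Type*} [DecidableEq α] {f : α → α}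
    (hf : Injective f) {x y : α} (hxy : x ≠ y) (h : Function.Commute (Equiv.swap x y) f) :
    IsPeriodicPt f 2 x := by
  have hx := h x
  rw [Equiv.swap_apply_left] at hx
  show f (f x) = x
  by_cases hfx : f x = x
  · rw [hfx, hfx]
  by_cases hfy : f x = y
  · rw [hfy, Equiv.swap_apply_right] at hx
    rw [hfy, ← hx]
  · rw [Equiv.swap_apply_of_ne_of_ne hfx hfy] at hx
    exact absurd (hf hx) hxy

section OrderAutomorphism

variable {P : Type*} [PartialOrder P]

def AreTwins (a b : P) : Prop :=
  ∀ c, c ≠ a → c ≠ b → (a ≤ c ↔ b ≤ c) ∧ (c ≤ a ↔ c ≤ b)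

theorem IsAntichain.areTwins_apply {s : Set P} (hs : IsAntichain (· ≤ ·) s) {g : P ≃o P}
    (hfix : ∀ c ∉ s, g c = c) {x : P} (hx : x ∈ s) (hgx : g x ∈ s) : AreTwins x (g x) := by
  intro c hcx hcg
  by_cases hc : c ∈ s
  · exact ⟨iff_of_false (hs hx hc hcx.symm) (hs hgx hc hcg.symm),
      iff_of_false (hs hc hx hcx) (hs hc hgx hcg)⟩
  · rw [← hfix c hc, g.le_iff_le, g.le_iff_le, hfix c hc]
    exact ⟨Iff.rfl, Iff.rfl⟩

namespace OrderIso

theorem apply_eq_of_le_apply {f : P ≃o P} (hf : IsOfFinOrder f) {a : P} (h : a ≤ f a) :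
    f a = a := by
  obtain ⟨n, hn, hfn⟩ := hf.exists_pow_eq_one
  have hper : f^[n] a = a := by
    change (f • ·)^[n] a = a
    simp only [smul_iterate, hfn, one_smul]
  refine le_antisymm ?_ h
  calc f a = f^[1] a := rfl
    _ ≤ f^[n] a := f.monotone.monotone_iterate_of_le_map h hn
    _ = a := hper

theorem isAntichain_orbit_zpowers {f : P ≃o P} (hf : IsOfFinOrder f) (a : P) :
    IsAntichain (· ≤ ·) (orbit (zpowers f) a) := by
  rintro _ ⟨g, rfl⟩ _ ⟨h, rfl⟩ hne hle
  have hfin : IsOfFinOrder ((h * g⁻¹ : zpowers f) : P ≃o P) := hf.of_mem_zpowers (h * g⁻¹).2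
  have hmove : (h * g⁻¹) • g • a = h • a := by rw [smul_smul, inv_mul_cancel_right]
  have hle' : g • a ≤ (h * g⁻¹) • g • a := by rwa [hmove]
  exact hne (hmove.symm.trans (apply_eq_of_le_apply hfin hle')).symm

def swapOfTwins [DecidableEq P] (a b : P) (hab : ¬a ≤ b) (hba : ¬b ≤ a)
    (htwin : AreTwins a b) : P ≃o P :=
  have hmono : Monotone (Equiv.swap a b) := by
    intro c d hcd
    simp only [Equiv.swap_apply_def]
    split_ifs <;> grind [AreTwins]
  (Equiv.swap a b).toOrderIso hmono (by rwa [Equiv.symm_swap])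

theorem two_mul_le_card_of_orderOf_eq_prime_pow [Finite P] {p k : ℕ} [hp : Fact p.Prime]
    {f : P ≃o P} (hf : orderOf f = p ^ (k + 1)) (hpk : 2 < p ^ (k + 1))
    (hcomm : ∀ h : P ≃o P, Commute h f) :
    2 * p ^ (k + 1) ≤ Nat.card P := by
  have hfp : f ^ p ^ (k + 1) = 1 := hf ▸ pow_orderOf_eq_one f
  obtain ⟨x, hx⟩ := exists_smul_ne_of_ne_one (α := P) <|
    pow_ne_one_of_lt_orderOf (pow_pos hp.out.pos k).ne'
      (by rw [hf]; exact Nat.pow_lt_pow_succ hp.out.one_lt)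
  set g := f ^ p ^ k
  set O := orbit (zpowers f) x
  by_contra! hcard
  have hfix : ∀ c ∉ O, g c = c := fun c hc => pow_smul_eq_of_notMem_orbit hfp hcard hx hc
  have hanti : IsAntichain (· ≤ ·) O :=
    isAntichain_orbit_zpowers (orderOf_pos_iff.mp (by rw [hf]; omega)) x
  have hxO : x ∈ O := mem_orbit_self x
  have hgxO : g x ∈ O := ⟨⟨g, pow_mem (mem_zpowers f) _⟩, rfl⟩
  classical
  let H := swapOfTwins x (g x) (hanti hxO hgxO hx.symm) (hanti hgxO hxO hx)
    (hanti.areTwins_apply hfix hxO hgxO)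
  have hswap : Function.Commute (Equiv.swap x (g x)) f := fun c =>
    DFunLike.congr_fun (hcomm H).eq c
  have hper : minimalPeriod f x = p ^ (k + 1) := minimalPeriod_eq_of_pow_smul_ne hfp hx
  have hper_dvd := (hswap.isPeriodicPt_two_of_swap f.injective hx.symm).minimalPeriod_dvd
  have := Nat.le_of_dvd two_pos hper_dvd
  omega

end OrderIso

end OrderAutomorphism

theorem le_card_of_aut_iso_zmod_prime_pow_general (p k : ℕ) (hp : p.Prime)
    (hpk : 2 < p ^ k) (P : Type*) [PartialOrder P] [Fintype P]
    (h : Nonempty ((P ≃o P) ≃* Multiplicative (ZMod (p ^ k)))) :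
    2 * p ^ k ≤ Fintype.card P := by
  obtain ⟨e⟩ := h
  have := Fact.mk hp
  obtain ⟨k, rfl⟩ : ∃ j, k = j + 1 :=
    Nat.exists_eq_succ_of_ne_zero (by rintro rfl; simp at hpk)
  have hf : orderOf (e.symm (.ofAdd 1)) = p ^ (k + 1) := by
    rw [MulEquiv.orderOf_eq, orderOf_ofAdd_eq_addOrderOf, ZMod.addOrderOf_one]
  rw [← Nat.card_eq_fintype_card]
  exact OrderIso.two_mul_le_card_of_orderOf_eq_prime_pow hf hpk fun g =>
    e.injective (by rw [map_mul, map_mul, mul_comm])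

/-- Let `p` be a prime and `k ≥ 1` with `p ^ k > 2`. If `P` is a finite poset whose
automorphism group is isomorphic to the cyclic group `ℤ/p^k`, then `P` has at least
`2 * p ^ k` elements. -/
theorem le_card_of_aut_iso_zmod_prime_pow (p k : ℕ) (hp : p.Prime) (hk : 1 ≤ k)
    (hpk : 2 < p ^ k) (P : Type*) [PartialOrder P] [Fintype P]
    (h : Nonempty ((P ≃o P) ≃* Multiplicative (ZMod (p ^ k)))) :
    2 * p ^ k ≤ Fintype.card P :=
  le_card_of_aut_iso_zmod_prime_pow_general p k hp hpk P h
end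

section
/- Let p be a prime and k ≥ 1 an integer with p^k > 2. If P is a finite partially ordered set whose automorphism group Aut(P) is isomorphic to the cyclic group Z/p^k, then the natural action of Aut(P) on P has at least two distinct orbits of cardinality exactly p^k. -/
lemma zmod_aux (p k : ℕ) (hp : p.Prime) (hk : 1 ≤ k) (c : ZMod (p^k)) (hc : c ≠ 0) :
    ∃ s : ℕ, s • c = ((p^(k-1) : ℕ) : ZMod (p^k)) := by
  haveI : NeZero (p^k) := ⟨pow_ne_zero _ hp.pos.ne'⟩
  set v := c.val with hv
  have hv0 : v ≠ 0 := fun h => hc ((ZMod.val_eq_zero c).mp h)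
  have hvlt : v < p^k := ZMod.val_lt c
  set j := v.factorization p with hj
  set u := ordCompl[p] v with hu
  have huv : p ^ j * u = v := Nat.ordProj_mul_ordCompl_eq_self v p
  have hpu : ¬ p ∣ u := Nat.not_dvd_ordCompl hp hv0
  have hjk : j + 1 ≤ k := by
    have h1 : p ^ j ≤ v := Nat.ordProj_le p hv0
    have : p ^ j < p ^ k := lt_of_le_of_lt h1 hvlt
    exact Nat.pow_lt_pow_iff_right hp.one_lt |>.mp this
  have hco : Nat.Coprime u (p^k) :=
    (Nat.coprime_comm.mp (hp.coprime_iff_not_dvd.mpr hpu)).pow_right k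
  set w := ZMod.unitOfCoprime u hco with hw
  set s' : ZMod (p^k) := (p : ZMod (p^k)) ^ (k-1-j) * ((w⁻¹ : (ZMod (p^k))ˣ) : ZMod (p^k)) with hs'
  refine ⟨s'.val, ?_⟩
  have h1 : (s'.val : ZMod (p^k)) = s' := ZMod.natCast_rightInverse s'
  rw [nsmul_eq_mul, h1]
  have hc' : c = (p : ZMod (p^k)) ^ j * (u : ZMod (p^k)) := by
    have : ((v : ℕ) : ZMod (p^k)) = c := by rw [hv]; exact ZMod.natCast_rightInverse c
    rw [← this, ← huv]; push_cast; ring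
  have hwu : ((w : (ZMod (p^k))ˣ) : ZMod (p^k)) = (u : ZMod (p^k)) := ZMod.coe_unitOfCoprime u hco
  rw [hs', hc']
  have : (p : ZMod (p^k)) ^ (k-1-j) * ((w⁻¹ : (ZMod (p^k))ˣ) : ZMod (p^k)) * ((p : ZMod (p^k)) ^ j * u) =
      (p : ZMod (p^k)) ^ (k-1-j+j) * (((w⁻¹ : (ZMod (p^k))ˣ) : ZMod (p^k)) * u) := by ring
  rw [this]
  have hj' : k - 1 - j + j = k - 1 := Nat.sub_add_cancel (by omega)
  rw [hj', ← hwu, ← Units.val_mul, inv_mul_cancel, Units.val_one, mul_one]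
  push_cast; ring

/-- Let `p` be a prime and `k ≥ 1` with `p ^ k > 2`. If `P` is a finite poset whose
automorphism group is isomorphic to the cyclic group `ℤ/p^k`, then the natural action of
`Aut P` on `P` (by evaluation) has at least two distinct orbits of cardinality exactly
`p ^ k`. -/
theorem two_orbits_card_prime_pow_of_aut_iso_zmod (p k : ℕ) (hp : p.Prime) (hk : 1 ≤ k)
    (hpk : 2 < p ^ k) (P : Type*) [PartialOrder P] [Fintype P]
    (h : Nonempty ((P ≃o P) ≃* Multiplicative (ZMod (p ^ k)))) :
    ∃ x y : P,
      {z : P | ∃ f : P ≃o P, f x = z} ≠ {z : P | ∃ f : P ≃o P, f y = z} ∧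
      Set.ncard {z : P | ∃ f : P ≃o P, f x = z} = p ^ k ∧
      Set.ncard {z : P | ∃ f : P ≃o P, f y = z} = p ^ k := by
  classical
  obtain ⟨e⟩ := h
  haveI : NeZero (p ^ k) := ⟨pow_ne_zero _ hp.pos.ne'⟩
  haveI : Finite (P ≃o P) := Finite.of_equiv _ e.toEquiv.symm
  set σ : P ≃o P := e.symm (Multiplicative.ofAdd 1) with hσdef
  have hσ1 : e σ = Multiplicative.ofAdd 1 := e.apply_symm_apply _
  have hpow : ∀ t : ℕ, e (σ ^ t) = Multiplicative.ofAdd ((t : ZMod (p ^ k))) := by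
    intro t
    rw [map_pow, hσ1, ← ofAdd_nsmul]
    congr 1
    simp [nsmul_eq_mul]
  have hpowone : ∀ t : ℕ, σ ^ t = 1 → p ^ k ∣ t := by
    intro t ht
    apply_fun e at ht
    rw [hpow, map_one] at ht
    have h0 : ((t : ℕ) : ZMod (p ^ k)) = 0 := by
      simpa using ht
    exact (ZMod.natCast_eq_zero_iff t (p ^ k)).mp h0
  set τ : P ≃o P := σ ^ (p ^ (k - 1)) with hτdef
  have hτne : τ ≠ 1 := by
    intro hτ1
    have := hpowone _ hτ1
    have h1 := Nat.le_of_dvd (pow_pos hp.pos _) this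
    have h2 : p ^ (k - 1) < p ^ k := Nat.pow_lt_pow_right hp.one_lt (by omega)
    omega
  -- a point moved by τ
  obtain ⟨a, ha⟩ : ∃ a : P, τ a ≠ a := by
    by_contra hcon
    push_neg at hcon
    exact hτne (RelIso.ext hcon)
  -- trivial stabilizers for points moved by τ
  have hstab : ∀ x : P, τ x ≠ x → ∀ f : P ≃o P, f x = x → f = 1 := by
    intro x hx f hf
    by_contra hf1
    set c := Multiplicative.toAdd (e f) with hc
    have hefc : e f = Multiplicative.ofAdd c := rfl
    have hc0 : c ≠ 0 := by
      intro h0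
      apply hf1
      apply e.injective
      rw [map_one, hefc, h0]
      rfl
    obtain ⟨s, hs⟩ := zmod_aux p k hp hk c hc0
    have hfs : f ^ s = τ := by
      apply e.injective
      rw [map_pow, hefc, hpow, ← ofAdd_nsmul, hs]
    have hfix : ∀ m : ℕ, (f ^ m) x = x := by
      intro m
      induction m with
      | zero => simp
      | succ i ih =>
        have : (f ^ (i + 1)) x = (f ^ i) (f x) := by rw [pow_succ, RelIso.mul_apply]
        rw [this, hf, ih]
    exact hx (by rw [← hfs, hfix s])
  -- everything is a power of σ
  have hgen : ∀ f : P ≃o P, ∃ t : ℕ, f = σ ^ t := by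
    intro f
    refine ⟨(Multiplicative.toAdd (e f)).val, ?_⟩
    apply e.injective
    rw [hpow, ZMod.natCast_rightInverse _]
    rfl
  -- orbit cardinalities
  have hcard : ∀ x : P, τ x ≠ x → Set.ncard {z : P | ∃ f : P ≃o P, f x = z} = p ^ k := by
    intro x hx
    set F : ZMod (p ^ k) → P := fun c => (σ ^ c.val) x with hF
    have hFinj : Function.Injective F := by
      intro c d hcd
      have hcd' : (σ ^ c.val) x = (σ ^ d.val) x := hcd
      have h2 : ((σ ^ d.val)⁻¹ * σ ^ c.val) x = x := by
        rw [RelIso.mul_apply, hcd', RelIso.inv_apply_self]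
      have h3 := hstab x hx _ h2
      rw [inv_mul_eq_one] at h3
      have h5 := congrArg e h3.symm
      rw [hpow, hpow] at h5
      have h6 : ((c.val : ℕ) : ZMod (p ^ k)) = ((d.val : ℕ) : ZMod (p ^ k)) := by
        simpa using h5
      rwa [ZMod.natCast_rightInverse c, ZMod.natCast_rightInverse d] at h6
    have hset : {z : P | ∃ f : P ≃o P, f x = z} = Set.range F := by
      ext z
      constructor
      · rintro ⟨f, rfl⟩
        obtain ⟨t, rfl⟩ := hgen f
        refine ⟨(t : ZMod (p ^ k)), ?_⟩
        have hσeq : σ ^ ((t : ZMod (p ^ k))).val = σ ^ t := by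
          apply e.injective
          rw [hpow, hpow, ZMod.natCast_rightInverse _]
        simp only [hF, hσeq]
      · rintro ⟨c, rfl⟩
        exact ⟨σ ^ c.val, rfl⟩
    rw [hset, ← Set.image_univ, Set.ncard_image_of_injective _ hFinj, Set.ncard_univ,
      Nat.card_zmod]
  by_cases hone : ∀ z : P, τ z ≠ z → ∃ f : P ≃o P, f a = z
  · -- derive a contradiction: build the swap automorphism
    exfalso
    have hlt : ∀ f : P ≃o P, ¬ a < f a := by
      intro f hf
      have chain : ∀ m : ℕ, a < (f ^ (m + 1)) a := by
        intro m
        induction m with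
        | zero => simpa using hf
        | succ i ih =>
          have h2 : (f ^ (i + 1)) a < (f ^ (i + 1)) (f a) := (f ^ (i + 1)).strictMono hf
          have h3 : (f ^ (i + 1 + 1)) a = (f ^ (i + 1)) (f a) := by
            rw [pow_succ]; rfl
          exact ih.trans (h3 ▸ h2)
      have hpos : 0 < orderOf f := orderOf_pos f
      have h4 := chain (orderOf f - 1)
      rw [Nat.sub_add_cancel hpos, pow_orderOf_eq_one] at h4
      exact lt_irrefl a h4
    have horb_le : ∀ f g : P ≃o P, f a ≤ g a → f a = g a := by
      intro f g hfg
      rcases eq_or_lt_of_le hfg with h | h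
      · exact h
      exfalso
      have h2 := (f⁻¹ : P ≃o P).strictMono h
      rw [RelIso.inv_apply_self, ← RelIso.mul_apply] at h2
      exact hlt _ h2
    have hfixout : ∀ z : P, (∀ f : P ≃o P, f a ≠ z) → τ z = z := by
      intro z hz
      by_contra hzz
      obtain ⟨f, hf⟩ := hone z hzz
      exact hz f hf
    have hne : a ≠ τ a := fun hh => ha hh.symm
    have H1 : ¬ a ≤ τ a := fun hh => hne (horb_le 1 τ hh)
    have H2 : ¬ τ a ≤ a := fun hh => ha (horb_le τ 1 hh)
    have H3 : ∀ z : P, z ≠ a → z ≠ τ a → (a ≤ z ↔ τ a ≤ z) := by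
      intro z hz1 hz2
      by_cases hz : ∃ f : P ≃o P, f a = z
      · obtain ⟨f, rfl⟩ := hz
        constructor
        · intro hh; exact absurd (horb_le 1 f hh).symm hz1
        · intro hh; exact absurd (horb_le τ f hh).symm hz2
      · push_neg at hz
        have hzfix := hfixout z hz
        constructor
        · intro hh
          calc τ a ≤ τ z := τ.monotone hh
            _ = z := hzfix
        · intro hh
          have h2 := (τ⁻¹ : P ≃o P).monotone hh
          rw [RelIso.inv_apply_self] at h2
          have h3 : (τ⁻¹ : P ≃o P) z = z := by
            conv_lhs => rw [← hzfix]
            rw [RelIso.inv_apply_self]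
          rwa [h3] at h2
    have H4 : ∀ z : P, z ≠ a → z ≠ τ a → (z ≤ a ↔ z ≤ τ a) := by
      intro z hz1 hz2
      by_cases hz : ∃ f : P ≃o P, f a = z
      · obtain ⟨f, rfl⟩ := hz
        constructor
        · intro hh; exact absurd (horb_le f 1 hh) hz1
        · intro hh; exact absurd (horb_le f τ hh) hz2
      · push_neg at hz
        have hzfix := hfixout z hz
        constructor
        · intro hh
          calc z = τ z := hzfix.symm
            _ ≤ τ a := τ.monotone hh
        · intro hh
          have h2 := (τ⁻¹ : P ≃o P).monotone hh
          rw [RelIso.inv_apply_self] at h2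
          have h3 : (τ⁻¹ : P ≃o P) z = z := by
            conv_lhs => rw [← hzfix]
            rw [RelIso.inv_apply_self]
          rwa [h3] at h2
    have Smono : ∀ x y : P, x ≤ y →
        Equiv.swap a (τ a) x ≤ Equiv.swap a (τ a) y := by
      intro x y hxy
      by_cases hxa : x = a
      · rw [hxa] at hxy ⊢
        rw [Equiv.swap_apply_left]
        by_cases hya : y = a
        · rw [hya, Equiv.swap_apply_left]
        · by_cases hyt : y = τ a
          · rw [hyt] at hxy; exact absurd hxy H1
          · rw [Equiv.swap_apply_of_ne_of_ne hya hyt]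
            exact (H3 y hya hyt).mp hxy
      · by_cases hxt : x = τ a
        · rw [hxt] at hxy ⊢
          rw [Equiv.swap_apply_right]
          by_cases hya : y = a
          · rw [hya] at hxy; exact absurd hxy H2
          · by_cases hyt : y = τ a
            · rw [hyt, Equiv.swap_apply_right]
            · rw [Equiv.swap_apply_of_ne_of_ne hya hyt]
              exact (H3 y hya hyt).mpr hxy
        · rw [Equiv.swap_apply_of_ne_of_ne hxa hxt]
          by_cases hya : y = a
          · rw [hya] at hxy ⊢
            rw [Equiv.swap_apply_left]
            exact (H4 x hxa hxt).mp hxy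
          · by_cases hyt : y = τ a
            · rw [hyt] at hxy ⊢
              rw [Equiv.swap_apply_right]
              exact (H4 x hxa hxt).mpr hxy
            · rw [Equiv.swap_apply_of_ne_of_ne hya hyt]
              exact hxy
    have hiff : ∀ x y : P, Equiv.swap a (τ a) x ≤ Equiv.swap a (τ a) y ↔ x ≤ y := by
      intro x y
      constructor
      · intro hh
        have := Smono _ _ hh
        simpa [Equiv.swap_apply_self] using this
      · exact Smono x y
    obtain ⟨g, hgdef⟩ : ∃ g : P ≃o P, ∀ z : P, g z = Equiv.swap a (τ a) z :=
      ⟨⟨Equiv.swap a (τ a), fun {x y} => hiff x y⟩, fun z => rfl⟩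
    have hga : g a = τ a := by rw [hgdef, Equiv.swap_apply_left]
    have hgτ : τ = g := by
      have h1 : ((τ⁻¹ : P ≃o P) * g) a = a := by
        rw [RelIso.mul_apply, hga, RelIso.inv_apply_self]
      exact inv_mul_eq_one.mp (hstab a ha _ h1)
    have hσa : σ a ≠ a := by
      intro hh
      have h1 := hpowone 1 (by rw [pow_one]; exact hstab a ha σ hh)
      have := Nat.le_of_dvd one_pos h1
      omega
    by_cases hb : σ a = τ a
    · -- σ and τ agree at a, hence σ = τ; use c = σ (σ a)
      have hστ : σ = τ := by
        have h1 : ((τ⁻¹ : P ≃o P) * σ) a = a := by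
          rw [RelIso.mul_apply, hb, RelIso.inv_apply_self]
        exact (inv_mul_eq_one.mp (hstab a ha _ h1)).symm
      set c := σ (σ a) with hcdef
      have hc1 : c ≠ a := by
        intro hh
        have h2 : (σ * σ) a = a := by rw [RelIso.mul_apply]; exact hh
        have h3 := hstab a ha _ h2
        have h4 : σ ^ 2 = 1 := by rw [pow_two]; exact h3
        have h5 := Nat.le_of_dvd two_pos (hpowone 2 h4)
        omega
      have hc2 : c ≠ τ a := by
        rw [← hb]
        intro hh
        exact hσa (σ.injective hh)
      have hc3 : τ c ≠ c := by
        rw [← hστ]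
        intro hh
        exact hσa (σ.injective (σ.injective hh))
      have hgc : g c = c := by rw [hgdef]; exact Equiv.swap_apply_of_ne_of_ne hc1 hc2
      rw [hgτ] at hc3
      exact hc3 hgc
    · set c := σ a with hcdef
      have hc3 : τ c ≠ c := by
        intro hh
        have hcomm : τ * σ = σ * τ := by
          apply e.injective
          rw [map_mul, map_mul, mul_comm]
        have h2 : (τ * σ) a = σ a := by rw [RelIso.mul_apply]; exact hh
        rw [hcomm, RelIso.mul_apply] at h2
        exact ha (σ.injective h2)
      have hgc : g c = c := by rw [hgdef]; exact Equiv.swap_apply_of_ne_of_ne hσa hb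
      rw [hgτ] at hc3
      exact hc3 hgc
  · push_neg at hone
    obtain ⟨b, hb1, hb2⟩ := hone
    refine ⟨a, b, ?_, hcard a ha, hcard b hb1⟩
    intro hEq
    have hbmem : b ∈ {z : P | ∃ f : P ≃o P, f a = z} := by
      rw [hEq]
      exact ⟨1, rfl⟩
    obtain ⟨f, hf⟩ := hbmem
    exact hb2 f hf
end

section
/- For p ∈ {3, 5} and every integer k ≥ 1, there exists a finite partially ordered set P with exactly 2·p^k + 3·p elements whose automorphism group Aut(P) is isomorphic to the cyclic group Z/p^k. -/
/-!
The poset glues a crown `A i < B i, B (i + 1)` (`i : ZMod n`) to `p` three-chains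
`C x < D x < E x` twisted by `C x < E (x + 1)` (`x : ZMod p`), through `C x < B j` whenever
`j ≡ x` mod `p`. Minimality, maximality and the middle level are preserved, so an automorphism
permutes each of the five families. On the crown it acts as `j ↦ r ± j`, and the twist forces it
to act on the chains as `x ↦ t + x`. Reading the crown modulo `p` through the gluing relations
gives `±1 = 1` and `t = r` in `ZMod p`; as `-1 ≠ 1` for `p ≥ 3`, the automorphism is the
rotation by `r`. So `Aut ≅ ZMod n` whenever `p ∣ n`, and the poset has `2n + 3p` elements.
-/

theorem ZMod.eq_add_mul_of_forall_add_one {m : ℕ} [NeZero m] {g : ZMod m → ZMod m} {c : ZMod m}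
    (h : ∀ x, g (x + 1) = g x + c) (x : ZMod m) : g x = g 0 + c * x := by
  rw [← ZMod.natCast_zmod_val x]
  induction x.val with
  | zero => simp
  | succ k ih => rw [Nat.cast_succ, h, ih]; ring

theorem ZMod.two_ne_zero_of_three_le {m : ℕ} (hm : 3 ≤ m) : (2 : ZMod m) ≠ 0 := by
  exact_mod_cast (ZMod.natCast_eq_zero_iff 2 m).not.2 (Nat.not_dvd_of_pos_of_lt two_pos hm)

inductive CrownGadget (n p : ℕ) : Type
  | A : ZMod n → CrownGadget n p
  | B : ZMod n → CrownGadget n p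
  | C : ZMod p → CrownGadget n p
  | D : ZMod p → CrownGadget n p
  | E : ZMod p → CrownGadget n p

namespace CrownGadget

variable {n p : ℕ}

def Below : CrownGadget n p → CrownGadget n p → Prop
  | A i, B j => j = i ∨ j = i + 1
  | C x, B j => ZMod.cast j = x
  | C x, D y => y = x
  | C x, E y => y = x ∨ y = x + 1
  | D x, E y => y = x
  | _, _ => False

instance : IsStrictOrder (CrownGadget n p) Below where
  irrefl u := by cases u <;> simp [Below]
  trans u v w := by cases u <;> cases v <;> cases w <;> simp_all [Below]

instance : PartialOrder (CrownGadget n p) := partialOrderOfSO Below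

lemma lt_iff_below {u v : CrownGadget n p} : u < v ↔ Below u v := Iff.rfl

@[simp] lemma A_lt_B {i j : ZMod n} : (A i : CrownGadget n p) < B j ↔ j = i ∨ j = i + 1 :=
  Iff.rfl

@[simp] lemma C_lt_B {x : ZMod p} {j : ZMod n} :
    (C x : CrownGadget n p) < B j ↔ ZMod.cast j = x :=
  Iff.rfl

@[simp] lemma C_lt_D {x y : ZMod p} : (C x : CrownGadget n p) < D y ↔ y = x := Iff.rfl

@[simp] lemma C_lt_E {x y : ZMod p} : (C x : CrownGadget n p) < E y ↔ y = x ∨ y = x + 1 :=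
  Iff.rfl

@[simp] lemma D_lt_E {x y : ZMod p} : (D x : CrownGadget n p) < E y ↔ y = x := Iff.rfl

lemma isMin_A (i : ZMod n) : IsMin (A i : CrownGadget n p) :=
  isMin_iff_forall_not_lt.2 fun v => by cases v <;> simp [lt_iff_below, Below]

lemma isMax_B (j : ZMod n) : IsMax (B j : CrownGadget n p) :=
  isMax_iff_forall_not_lt.2 fun v => by cases v <;> simp [lt_iff_below, Below]

lemma exists_eq_A_or_eq_C_of_isMin {u : CrownGadget n p} (h : IsMin u) :
    (∃ i, u = A i) ∨ ∃ x, u = C x := by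
  cases u with
  | A i => exact .inl ⟨i, rfl⟩
  | C x => exact .inr ⟨x, rfl⟩
  | B j => exact absurd h (not_isMin_of_lt (show A j < B j by simp))
  | D x => exact absurd h (not_isMin_of_lt (show C x < D x by simp))
  | E x => exact absurd h (not_isMin_of_lt (show D x < E x by simp))

lemma exists_eq_B_or_eq_E_of_isMax {u : CrownGadget n p} (h : IsMax u) :
    (∃ j, u = B j) ∨ ∃ x, u = E x := by
  cases u with
  | B j => exact .inl ⟨j, rfl⟩
  | E x => exact .inr ⟨x, rfl⟩
  | A i => exact absurd h (not_isMax_of_lt (show A i < B i by simp))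
  | C x => exact absurd h (not_isMax_of_lt (show C x < D x by simp))
  | D x => exact absurd h (not_isMax_of_lt (show D x < E x by simp))

lemma exists_eq_D_of_not_isMin_of_not_isMax {u : CrownGadget n p} (hmin : ¬IsMin u)
    (hmax : ¬IsMax u) : ∃ x, u = D x := by
  cases u with
  | D x => exact ⟨x, rfl⟩
  | A i => exact absurd (isMin_A i) hmin
  | C x => exact absurd (isMin_iff_forall_not_lt.2 fun v => by
      cases v <;> simp [lt_iff_below, Below]) hmin
  | B j => exact absurd (isMax_B j) hmax
  | E x => exact absurd (isMax_iff_forall_not_lt.2 fun v => by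
      cases v <;> simp [lt_iff_below, Below]) hmax

lemma lt_D_iff {u : CrownGadget n p} {y : ZMod p} : u < D y ↔ u = C y := by
  cases u <;> simp [lt_iff_below, Below, eq_comm]

lemma D_lt_iff {u : CrownGadget n p} {y : ZMod p} : D y < u ↔ u = E y := by
  cases u <;> simp [lt_iff_below, Below]

section Automorphism

variable (f : CrownGadget n p ≃o CrownGadget n p)

lemma exists_map_D (x : ZMod p) : ∃ y, f (D x) = D y :=
  exists_eq_D_of_not_isMin_of_not_isMax
    (f.isMin_apply.not.2 (not_isMin_of_lt (show C x < D x by simp)))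
    (f.isMax_apply.not.2 (not_isMax_of_lt (show D x < E x by simp)))

lemma map_C_of_map_D {x y : ZMod p} (h : f (D x) = D y) : f (C x) = C y :=
  lt_D_iff.1 (h ▸ f.lt_iff_lt.2 (lt_D_iff.2 rfl))

lemma map_E_of_map_D {x y : ZMod p} (h : f (D x) = D y) : f (E x) = E y :=
  D_lt_iff.1 (h ▸ f.lt_iff_lt.2 (D_lt_iff.2 rfl))

lemma exists_map_A (i : ZMod n) : ∃ j, f (A i) = A j := by
  refine (exists_eq_A_or_eq_C_of_isMin (f.isMin_apply.2 (isMin_A i))).resolve_right ?_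
  rintro ⟨y, hy⟩
  obtain ⟨x, hx⟩ := exists_map_D f.symm y
  have := map_C_of_map_D f.symm hx
  rw [← hy, f.symm_apply_apply] at this
  cases this

lemma exists_map_B (j : ZMod n) : ∃ k, f (B j) = B k := by
  refine (exists_eq_B_or_eq_E_of_isMax (f.isMax_apply.2 (isMax_B j))).resolve_right ?_
  rintro ⟨y, hy⟩
  obtain ⟨x, hx⟩ := exists_map_D f.symm y
  have := map_E_of_map_D f.symm hx
  rw [← hy, f.symm_apply_apply] at this
  cases this

variable {σ ρ : ZMod n → ZMod n} {τ : ZMod p → ZMod p}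

lemma injective_of_map_B (hρ : ∀ j, f (B j) = B (ρ j)) : ρ.Injective :=
  fun j k h => B.inj (f.injective (by rw [hρ, hρ, h]))

lemma map_B_eq_or_eq_add_one (hσ : ∀ i, f (A i) = A (σ i)) (hρ : ∀ j, f (B j) = B (ρ j))
    {i j : ZMod n} (h : A i < (B j : CrownGadget n p)) : ρ j = σ i ∨ ρ j = σ i + 1 := by
  simpa [hσ, hρ] using f.lt_iff_lt.2 h

lemma map_B_add_one_sub (hσ : ∀ i, f (A i) = A (σ i)) (hρ : ∀ j, f (B j) = B (ρ j))
    (h1 : (1 : ZMod n) ≠ 0) (j : ZMod n) : ρ (j + 1) - ρ j = 1 ∨ ρ (j + 1) - ρ j = -1 := by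
  have hne : ρ (j + 1) ≠ ρ j := fun h => h1 <| by simpa using injective_of_map_B f hρ h
  rcases map_B_eq_or_eq_add_one f hσ hρ (show A j < B j by simp) with h | h <;>
    rcases map_B_eq_or_eq_add_one f hσ hρ (show A j < B (j + 1) by simp) with h' | h'
  · exact absurd (h'.trans h.symm) hne
  · left; rw [h, h']; ring
  · right; rw [h, h']; ring
  · exact absurd (h'.trans h.symm) hne

lemma exists_map_B_eq_add_mul [NeZero n] (hσ : ∀ i, f (A i) = A (σ i))
    (hρ : ∀ j, f (B j) = B (ρ j)) (h2 : (2 : ZMod n) ≠ 0) :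
    ∃ ε : ZMod n, (ε = 1 ∨ ε = -1) ∧ ∀ j, ρ j = ρ 0 + ε * j := by
  have h1 : (1 : ZMod n) ≠ 0 := fun h => h2 (by rw [← one_add_one_eq_two, h, add_zero])
  have hstep := map_B_add_one_sub f hσ hρ h1
  -- Two opposite consecutive steps would give `ρ (j + 2) = ρ j`.
  have hstep_succ (j : ZMod n) : ρ (j + 1 + 1) - ρ (j + 1) = ρ (j + 1) - ρ j + 0 := by
    have hne : ρ (j + 1 + 1) ≠ ρ j := fun h => h2 <| by
      linear_combination injective_of_map_B f hρ h
    rcases hstep j with h | h <;> rcases hstep (j + 1) with h' | h'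
    · rw [h, h', add_zero]
    · exact absurd (by linear_combination h' + h) hne
    · exact absurd (by linear_combination h' + h) hne
    · rw [h, h', add_zero]
  have hstep_const (j : ZMod n) : ρ (j + 1) - ρ j = ρ 1 - ρ 0 := by
    simpa using ZMod.eq_add_mul_of_forall_add_one (g := fun j => ρ (j + 1) - ρ j) hstep_succ j
  refine ⟨ρ 1 - ρ 0, by simpa using hstep 0, ZMod.eq_add_mul_of_forall_add_one fun j => ?_⟩
  linear_combination hstep_const j

lemma map_A_eq_of_map_B_eq (hσ : ∀ i, f (A i) = A (σ i)) (hρ : ∀ j, f (B j) = B (ρ j))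
    (h2 : (2 : ZMod n) ≠ 0) {r : ZMod n} (hr : ∀ j, ρ j = r + j) (i : ZMod n) :
    σ i = r + i := by
  have h := map_B_eq_or_eq_add_one f hσ hρ (show A i < B i by simp)
  have h' := map_B_eq_or_eq_add_one f hσ hρ (show A i < B (i + 1) by simp)
  rw [hr] at h h'
  rcases h with h | h
  · exact h.symm
  rcases h' with h' | h'
  · exact absurd (by linear_combination h' - h) h2
  · linear_combination -h'

lemma map_D_add_one (hτ : ∀ x, f (D x) = D (τ x)) (h1 : (1 : ZMod p) ≠ 0) (x : ZMod p) :
    τ (x + 1) = τ x + 1 := by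
  have h := f.lt_iff_lt.2 (show C x < E (x + 1) by simp)
  rw [map_C_of_map_D f (hτ x), map_E_of_map_D f (hτ (x + 1))] at h
  refine (h : τ (x + 1) = τ x ∨ τ (x + 1) = τ x + 1).resolve_left fun h => h1 ?_
  linear_combination D.inj (f.injective ((hτ (x + 1)).trans (h ▸ (hτ x).symm)))

lemma cast_map_B (hρ : ∀ j, f (B j) = B (ρ j)) (hτ : ∀ x, f (D x) = D (τ x)) (j : ZMod n) :
    (ZMod.cast (ρ j) : ZMod p) = τ (ZMod.cast j) := by
  have h := f.lt_iff_lt.2 (show C (ZMod.cast j) < B j by simp)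
  rwa [map_C_of_map_D f (hτ _), hρ] at h

lemma map_B_eq_add [NeZero n] (hdvd : p ∣ n) (hσ : ∀ i, f (A i) = A (σ i))
    (hρ : ∀ j, f (B j) = B (ρ j)) (hτ : ∀ x, f (D x) = D (τ x)) (h2n : (2 : ZMod n) ≠ 0)
    (h2p : (2 : ZMod p) ≠ 0) (hτ_add_one : ∀ x, τ (x + 1) = τ x + 1) (j : ZMod n) :
    ρ j = ρ 0 + j := by
  obtain ⟨ε, hε, hρε⟩ := exists_map_B_eq_add_mul f hσ hρ h2n
  -- Modulo `p`, the links `C x < B j` turn `ρ 1 = ρ 0 + ε` into `ε = 1`.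
  have h := cast_map_B f hρ hτ 1
  rw [hρε, mul_one, ZMod.cast_add hdvd, ZMod.cast_one hdvd,
    (by simpa using hτ_add_one 0 : τ 1 = τ 0 + 1), ← ZMod.cast_zero (R := ZMod p),
    ← cast_map_B f hρ hτ 0, add_right_inj] at h
  obtain rfl : ε = 1 := hε.resolve_right fun hε => h2p <| by
    rw [hε, ZMod.cast_neg hdvd, ZMod.cast_one hdvd] at h
    linear_combination -h
  rw [hρε, one_mul]

end Automorphism

def rotate (s : ZMod n) : CrownGadget n p → CrownGadget n p
  | A i => A (i + s)
  | B j => B (j + s)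
  | C x => C (x + ZMod.cast s)
  | D x => D (x + ZMod.cast s)
  | E x => E (x + ZMod.cast s)

section Rotation

variable (hdvd : p ∣ n)
include hdvd

lemma rotate_rotate (s t : ZMod n) (u : CrownGadget n p) :
    rotate s (rotate t u) = rotate (t + s) u := by
  cases u <;> simp [rotate, ZMod.cast_add hdvd, add_assoc]

lemma strictMono_rotate (s : ZMod n) : StrictMono (rotate (p := p) s) := by
  intro u v h
  cases u <;> cases v <;> simp_all [lt_iff_below, Below, rotate, ZMod.cast_add hdvd]
  all_goals rcases h with h | h <;> simp [h, add_right_comm]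

lemma rotate_neg_rotate (s : ZMod n) (u : CrownGadget n p) : rotate (-s) (rotate s u) = u := by
  cases u <;> simp [rotate, ZMod.cast_neg hdvd]

def rotation (s : ZMod n) : CrownGadget n p ≃o CrownGadget n p :=
  Equiv.toOrderIso
    ⟨rotate s, rotate (-s), rotate_neg_rotate hdvd s, fun u => by
      simpa using rotate_neg_rotate hdvd (-s) u⟩
    (strictMono_rotate hdvd s).monotone (strictMono_rotate hdvd (-s)).monotone

lemma rotation_apply (s : ZMod n) (u : CrownGadget n p) : rotation hdvd s u = rotate s u := rfl

def rotationHom : Multiplicative (ZMod n) →* (CrownGadget n p ≃o CrownGadget n p) where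
  toFun s := rotation hdvd s.toAdd
  map_one' := OrderIso.ext <| funext fun u => by cases u <;> simp [rotation_apply, rotate]
  map_mul' s t := OrderIso.ext <| funext fun u => by
    simp [rotation_apply, rotate_rotate hdvd, add_comm]

lemma rotationHom_injective : Function.Injective (rotationHom (p := p) hdvd) := fun s t h => by
  simpa [rotationHom, rotation_apply, rotate] using congrArg (· (A 0)) h

lemma rotationHom_surjective [NeZero n] (hp : 3 ≤ p) :
    Function.Surjective (rotationHom (p := p) hdvd) := by
  intro f
  have : Fact (1 < p) := ⟨by omega⟩
  have h2p := ZMod.two_ne_zero_of_three_le hp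
  have h2n := ZMod.two_ne_zero_of_three_le (hp.trans (Nat.le_of_dvd (NeZero.pos n) hdvd))
  choose σ hσ using exists_map_A f
  choose ρ hρ using exists_map_B f
  choose τ hτ using exists_map_D f
  have hτ_add_one := map_D_add_one f hτ one_ne_zero
  have hρ' := map_B_eq_add f hdvd hσ hρ hτ h2n h2p hτ_add_one
  have hτ0 : τ 0 = ZMod.cast (ρ 0) := by simpa using (cast_map_B f hρ hτ 0).symm
  have hσ' := map_A_eq_of_map_B_eq f hσ hρ h2n hρ'
  have hτ' (x : ZMod p) : τ x = ZMod.cast (ρ 0) + x := by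
    rw [← hτ0, ZMod.eq_add_mul_of_forall_add_one hτ_add_one x, one_mul]
  refine ⟨Multiplicative.ofAdd (ρ 0), OrderIso.ext <| funext fun u => ?_⟩
  show rotate (ρ 0) u = f u
  cases u with
  | A i => rw [hσ, hσ' i, add_comm]; rfl
  | B j => rw [hρ, hρ' j, add_comm]; rfl
  | C x => rw [map_C_of_map_D f (hτ x), hτ' x, add_comm]; rfl
  | D x => rw [hτ, hτ' x, add_comm]; rfl
  | E x => rw [map_E_of_map_D f (hτ x), hτ' x, add_comm]; rfl

noncomputable def autMulEquiv [NeZero n] (hp : 3 ≤ p) :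
    (CrownGadget n p ≃o CrownGadget n p) ≃* Multiplicative (ZMod n) :=
  (MulEquiv.ofBijective (rotationHom hdvd)
    ⟨rotationHom_injective hdvd, rotationHom_surjective hdvd hp⟩).symm

end Rotation

def equivSum : CrownGadget n p ≃ ZMod n ⊕ ZMod n ⊕ ZMod p ⊕ ZMod p ⊕ ZMod p where
  toFun
    | A i => .inl i
    | B j => .inr (.inl j)
    | C x => .inr (.inr (.inl x))
    | D x => .inr (.inr (.inr (.inl x)))
    | E x => .inr (.inr (.inr (.inr x)))
  invFun
    | .inl i => A i
    | .inr (.inl j) => B j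
    | .inr (.inr (.inl x)) => C x
    | .inr (.inr (.inr (.inl x))) => D x
    | .inr (.inr (.inr (.inr x))) => E x
  left_inv u := by cases u <;> rfl
  right_inv v := by rcases v with i | j | x | x | x <;> rfl

instance [NeZero n] [NeZero p] : Fintype (CrownGadget n p) := .ofEquiv _ equivSum.symm

lemma card_eq [NeZero n] [NeZero p] : Fintype.card (CrownGadget n p) = 2 * n + 3 * p := by
  simp only [Fintype.card_congr equivSum, Fintype.card_sum, ZMod.card]
  ring

end CrownGadget

/-- For `p ∈ {3, 5}` and every integer `k ≥ 1`, there exists a finite poset `P` with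
exactly `2 * p ^ k + 3 * p` elements whose automorphism group is isomorphic to the cyclic
group `ℤ/p^k`. -/
theorem exists_poset_aut_iso_zmod_prime_pow_three_five (p k : ℕ) (hp : p = 3 ∨ p = 5)
    (hk : 1 ≤ k) :
    ∃ (P : Type) (_ : PartialOrder P) (_ : Fintype P),
      Fintype.card P = 2 * p ^ k + 3 * p ∧
      Nonempty ((P ≃o P) ≃* Multiplicative (ZMod (p ^ k))) := by
  have hp3 : 3 ≤ p := by omega
  have : NeZero p := ⟨by omega⟩
  have : NeZero (p ^ k) := ⟨by positivity⟩
  exact ⟨CrownGadget (p ^ k) p, inferInstance, inferInstance, CrownGadget.card_eq,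
    ⟨CrownGadget.autMulEquiv (dvd_pow_self p (by omega)) hp3⟩⟩
end

section
/- For every integer k ≥ 2, there exists a finite partially ordered set P with exactly 2^{k+1} + 12 elements whose automorphism group Aut(P) is isomorphic to the cyclic group Z/2^k. -/
/-!
The elements `a i`, `b i` (`i : ZMod n`) form a crown, `a i < b i, b (i + 1)`, whose automorphisms
are the rotations and reflections of `ZMod n`. Each `b i` lies below `c (i mod 4)`, and above the
`c`'s sits a 12-element gadget on `ZMod 4` with `c j < d j < e j` and `c j < e (j + 1)`: the `d`'s
distinguish `e j` from `e (j + 1)`, so the gadget only admits rotations. An automorphism preserves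
height, hence each of the five layers; on the `c`'s it is a rotation, so its action on the `b`'s
reduces mod 4 to a rotation, which rules out the reflections of the crown (`-1 ≠ 1` in `ZMod 4`).
-/

theorem Order.height_eq_of_strictMono_of_exists_pred {α : Type*} [Preorder α] {r : α → ℕ}
    (hr : StrictMono r) (hpred : ∀ x, r x ≠ 0 → ∃ y < x, r y + 1 = r x) (x : α) :
    Order.height x = r x := by
  rw [Order.height_eq_of_strictMono r hr ?_ x, Order.height_nat]
  intro x m hm
  obtain ⟨k, hk⟩ := Nat.exists_eq_add_of_lt hm
  induction k generalizing x with
  | zero =>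
    obtain ⟨y, hyx, hy⟩ := hpred x (by omega)
    exact ⟨y, hyx, by omega⟩
  | succ k ih =>
    obtain ⟨y, hyx, hy⟩ := hpred x (by omega)
    obtain ⟨z, hzy, hz⟩ := ih y (by omega) (by omega)
    exact ⟨z, hzy.trans hyx, hz⟩

theorem ZMod.eq_add_of_map_add_one {n : ℕ} [NeZero n] {f : ZMod n → ZMod n}
    (hf : ∀ i, f (i + 1) = f i + 1) (i : ZMod n) : f i = f 0 + i := by
  obtain ⟨m, rfl⟩ := ZMod.natCast_zmod_surjective i
  induction m with
  | zero => simp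
  | succ m ih => rw [Nat.cast_succ, hf, ih]; ring

inductive CrownPoset (n : ℕ) : Type
  | a : ZMod n → CrownPoset n
  | b : ZMod n → CrownPoset n
  | c : ZMod 4 → CrownPoset n
  | d : ZMod 4 → CrownPoset n
  | e : ZMod 4 → CrownPoset n

namespace CrownPoset

variable {n : ℕ}

def equivSum (n : ℕ) : CrownPoset n ≃ (ZMod n ⊕ ZMod n) ⊕ (ZMod 4 ⊕ ZMod 4 ⊕ ZMod 4) where
  toFun
    | a i => .inl (.inl i)
    | b i => .inl (.inr i)
    | c j => .inr (.inl j)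
    | d j => .inr (.inr (.inl j))
    | e j => .inr (.inr (.inr j))
  invFun
    | .inl (.inl i) => a i
    | .inl (.inr i) => b i
    | .inr (.inl j) => c j
    | .inr (.inr (.inl j)) => d j
    | .inr (.inr (.inr j)) => e j
  left_inv x := by cases x <;> rfl
  right_inv x := by rcases x with (i | i) | (j | j | j) <;> rfl

instance [NeZero n] : Fintype (CrownPoset n) := Fintype.ofEquiv _ (equivSum n).symm

lemma card_eq [NeZero n] : Fintype.card (CrownPoset n) = 2 * n + 12 := by
  rw [Fintype.card_congr (equivSum n)]
  simp only [Fintype.card_sum, ZMod.card]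
  ring

variable [Fact (4 ∣ n)]

def mod4 : ZMod n →+* ZMod 4 := ZMod.castHom Fact.out _

lemma mod4_surjective : Function.Surjective (mod4 (n := n)) :=
  ZMod.castHom_surjective _

protected def le : CrownPoset n → CrownPoset n → Prop
  | a i, a i' => i' = i
  | a i, b j => j = i ∨ j = i + 1
  | a i, c j => j = mod4 i ∨ j = mod4 i + 1
  | a i, d j => j = mod4 i ∨ j = mod4 i + 1
  | a i, e j => j = mod4 i ∨ j = mod4 i + 1 ∨ j = mod4 i + 2
  | b i, b i' => i' = i
  | b i, c j => j = mod4 i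
  | b i, d j => j = mod4 i
  | b i, e j => j = mod4 i ∨ j = mod4 i + 1
  | c j, c j' => j' = j
  | c j, d j' => j' = j
  | c j, e j' => j' = j ∨ j' = j + 1
  | d j, d j' => j' = j
  | d j, e j' => j' = j
  | e j, e j' => j' = j
  | _, _ => False

instance : PartialOrder (CrownPoset n) where
  le := CrownPoset.le
  le_refl x := by cases x <;> simp [CrownPoset.le]
  le_antisymm x y hxy hyx := by cases x <;> cases y <;> simp_all [CrownPoset.le]
  le_trans x y z hxy hyz := by
    have h : (1 : ZMod 4) + 1 = 2 := by decide
    cases x <;> cases y <;> cases z <;> simp only [CrownPoset.le] at hxy hyz ⊢ <;>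
      rcases hxy with rfl | rfl | rfl <;> rcases hyz with rfl | rfl | rfl <;>
      simp [add_assoc, h]

lemma le_def {x y : CrownPoset n} : x ≤ y ↔ x.le y := Iff.rfl

def level : CrownPoset n → ℕ
  | a _ => 0
  | b _ => 1
  | c _ => 2
  | d _ => 3
  | e _ => 4

lemma level_strictMono : StrictMono (level (n := n)) := by
  rintro x y ⟨hle, hne⟩
  cases x <;> cases y <;> simp [CrownPoset.le, level] at hle hne ⊢ <;> exact hne hle.symm

lemma height_eq_level (x : CrownPoset n) : Order.height x = level x := by
  refine Order.height_eq_of_strictMono_of_exists_pred level_strictMono (fun x hx => ?_) x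
  simp only [lt_iff_le_and_ne, le_def]
  cases x with
  | a i => simp [level] at hx
  | b i => exact ⟨a i, by simp [CrownPoset.le, level]⟩
  | c j =>
    obtain ⟨i, rfl⟩ := mod4_surjective (n := n) j
    exact ⟨b i, by simp [CrownPoset.le, level]⟩
  | d j => exact ⟨c j, by simp [CrownPoset.le, level]⟩
  | e j => exact ⟨d j, by simp [CrownPoset.le, level]⟩

lemma level_map (f : CrownPoset n ≃o CrownPoset n) (x : CrownPoset n) :
    level (f x) = level x := by
  have h := Order.height_orderIso f x
  rwa [height_eq_level, height_eq_level, Nat.cast_inj] at h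

def rotateFun (t : ZMod n) : CrownPoset n → CrownPoset n
  | a i => a (t + i)
  | b i => b (t + i)
  | c j => c (mod4 t + j)
  | d j => d (mod4 t + j)
  | e j => e (mod4 t + j)

lemma rotateFun_le_rotateFun_iff (t : ZMod n) {x y : CrownPoset n} :
    rotateFun t x ≤ rotateFun t y ↔ x ≤ y := by
  cases x <;> cases y <;> simp [le_def, CrownPoset.le, rotateFun, add_assoc]

lemma rotateFun_add (s t : ZMod n) (x : CrownPoset n) :
    rotateFun (s + t) x = rotateFun s (rotateFun t x) := by
  cases x <;> simp [rotateFun, add_assoc]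

lemma rotateFun_zero (x : CrownPoset n) : rotateFun 0 x = x := by
  cases x <;> simp [rotateFun]

def rotate (t : ZMod n) : CrownPoset n ≃o CrownPoset n where
  toFun := rotateFun t
  invFun := rotateFun (-t)
  left_inv x := by rw [← rotateFun_add, neg_add_cancel, rotateFun_zero]
  right_inv x := by rw [← rotateFun_add, add_neg_cancel, rotateFun_zero]
  map_rel_iff' := rotateFun_le_rotateFun_iff t

def rotateHom : Multiplicative (ZMod n) →* (CrownPoset n ≃o CrownPoset n) where
  toFun t := rotate t.toAdd
  map_one' := by ext x; exact rotateFun_zero x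
  map_mul' s t := by ext x; exact rotateFun_add _ _ x

lemma rotateHom_injective : Function.Injective (rotateHom (n := n)) := by
  intro s t hst
  simpa [rotateHom, rotate, rotateFun] using congrArg (fun f => f (a 0)) hst

section Rigidity

variable (f : CrownPoset n ≃o CrownPoset n)

lemma exists_map_a (i : ZMod n) : ∃ i', f (a i) = a i' := by
  have h := level_map f (a i)
  revert h; cases f (a i) <;> simp [level]

lemma exists_map_b (i : ZMod n) : ∃ i', f (b i) = b i' := by
  have h := level_map f (b i)
  revert h; cases f (b i) <;> simp [level]

lemma exists_map_c (j : ZMod 4) : ∃ j', f (c j) = c j' := by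
  have h := level_map f (c j)
  revert h; cases f (c j) <;> simp [level]

lemma exists_map_d (j : ZMod 4) : ∃ j', f (d j) = d j' := by
  have h := level_map f (d j)
  revert h; cases f (d j) <;> simp [level]

lemma exists_map_e (j : ZMod 4) : ∃ j', f (e j) = e j' := by
  have h := level_map f (e j)
  revert h; cases f (e j) <;> simp [level]

variable {f}

lemma map_d {γ : ZMod 4 → ZMod 4} (hγ : ∀ j, f (c j) = c (γ j)) (j : ZMod 4) :
    f (d j) = d (γ j) := by
  obtain ⟨j', hj'⟩ := exists_map_d f j
  have h : f (c j) ≤ f (d j) := f.monotone (by simp [le_def, CrownPoset.le])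
  rw [hγ] at h
  rw [hj'] at h ⊢
  simpa [le_def, CrownPoset.le] using h

lemma map_e {γ : ZMod 4 → ZMod 4} (hγ : ∀ j, f (c j) = c (γ j)) (j : ZMod 4) :
    f (e j) = e (γ j) := by
  obtain ⟨j', hj'⟩ := exists_map_e f j
  have h : f (d j) ≤ f (e j) := f.monotone (by simp [le_def, CrownPoset.le])
  rw [map_d hγ] at h
  rw [hj'] at h ⊢
  simpa [le_def, CrownPoset.le] using h

lemma map_c_add_one {γ : ZMod 4 → ZMod 4} (hγ : ∀ j, f (c j) = c (γ j)) (j : ZMod 4) :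
    γ (j + 1) = γ j + 1 := by
  have h : f (c j) ≤ f (e (j + 1)) := f.monotone (by simp [le_def, CrownPoset.le])
  rw [hγ, map_e hγ] at h
  refine h.resolve_left fun hj => ?_
  have := f.injective ((hγ _).trans (hj ▸ (hγ j).symm))
  exact absurd (by simpa using this : (1 : ZMod 4) = 0) (by decide)

lemma mod4_map_b {β : ZMod n → ZMod n} {γ : ZMod 4 → ZMod 4} (hβ : ∀ i, f (b i) = b (β i))
    (hγ : ∀ j, f (c j) = c (γ j)) (i : ZMod n) : γ (mod4 i) = mod4 (β i) := by
  have h : f (b i) ≤ f (c (mod4 i)) := f.monotone (by simp [le_def, CrownPoset.le])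
  rw [hβ, hγ] at h
  simpa [le_def, CrownPoset.le] using h

lemma map_b_eq_or {α β : ZMod n → ZMod n} (hα : ∀ i, f (a i) = a (α i))
    (hβ : ∀ i, f (b i) = b (β i)) (i : ZMod n) :
    (β i = α i ∨ β i = α i + 1) ∧ (β (i + 1) = α i ∨ β (i + 1) = α i + 1) := by
  have h₀ : f (a i) ≤ f (b i) := f.monotone (by simp [le_def, CrownPoset.le])
  have h₁ : f (a i) ≤ f (b (i + 1)) := f.monotone (by simp [le_def, CrownPoset.le])
  rw [hα, hβ] at h₀ h₁
  exact ⟨h₀, h₁⟩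

lemma map_b_add_one {α β : ZMod n → ZMod n} {γ : ZMod 4 → ZMod 4}
    (hα : ∀ i, f (a i) = a (α i)) (hβ : ∀ i, f (b i) = b (β i))
    (hγ : ∀ j, f (c j) = c (γ j)) (i : ZMod n) : β (i + 1) = β i + 1 := by
  -- `β` steps by `0` or `±1`, while its reduction mod 4 steps by `+1` like `γ`.
  have h4 : mod4 (β (i + 1)) = mod4 (β i) + 1 := by
    rw [← mod4_map_b hβ hγ, ← mod4_map_b hβ hγ, map_add, map_one, map_c_add_one hγ]
  obtain ⟨h₀ | h₀, h₁ | h₁⟩ := map_b_eq_or hα hβ i <;> rw [h₀, h₁] at h4 ⊢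
  all_goals first | rfl | (simp [add_assoc] at h4; exact absurd h4 (by decide))

lemma map_a_eq_map_b {α β : ZMod n → ZMod n} {γ : ZMod 4 → ZMod 4}
    (hα : ∀ i, f (a i) = a (α i)) (hβ : ∀ i, f (b i) = b (β i))
    (hγ : ∀ j, f (c j) = c (γ j)) (i : ZMod n) : α i = β i := by
  obtain ⟨h₀ | h₀, h₁⟩ := map_b_eq_or hα hβ i
  · exact h₀.symm
  rw [map_b_add_one hα hβ hγ, h₀] at h₁
  rcases h₁ with h | h <;> have h4 := congrArg mod4 h <;> simp [add_assoc] at h4 <;>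
    exact absurd h4 (by decide)

end Rigidity

lemma exists_rotate_eq [NeZero n] (f : CrownPoset n ≃o CrownPoset n) : ∃ t, rotate t = f := by
  choose α hα using exists_map_a f
  choose β hβ using exists_map_b f
  choose γ hγ using exists_map_c f
  have hβ_eq := ZMod.eq_add_of_map_add_one (map_b_add_one hα hβ hγ)
  have hγ_eq := ZMod.eq_add_of_map_add_one (map_c_add_one hγ)
  have hγ₀ : γ 0 = mod4 (β 0) := by simpa using mod4_map_b hβ hγ 0
  refine ⟨β 0, OrderIso.ext (funext fun x => ?_)⟩
  symm
  cases x with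
  | a i => rw [hα, map_a_eq_map_b hα hβ hγ i, hβ_eq i]; rfl
  | b i => rw [hβ, hβ_eq i]; rfl
  | c j => rw [hγ, hγ_eq j, hγ₀]; rfl
  | d j => rw [map_d hγ, hγ_eq j, hγ₀]; rfl
  | e j => rw [map_e hγ, hγ_eq j, hγ₀]; rfl

lemma rotateHom_bijective [NeZero n] : Function.Bijective (rotateHom (n := n)) :=
  ⟨rotateHom_injective, fun f => (exists_rotate_eq f).imp fun _ h => h⟩

end CrownPoset

/-- For every integer `k ≥ 2`, there exists a finite poset `P` with exactly
`2 ^ (k + 1) + 12` elements whose automorphism group is isomorphic to the cyclic group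
`ℤ/2^k`. -/
theorem exists_poset_aut_iso_zmod_two_pow (k : ℕ) (hk : 2 ≤ k) :
    ∃ (P : Type) (_ : PartialOrder P) (_ : Fintype P),
      Fintype.card P = 2 ^ (k + 1) + 12 ∧
      Nonempty ((P ≃o P) ≃* Multiplicative (ZMod (2 ^ k))) := by
  have : Fact (4 ∣ 2 ^ k) := ⟨pow_dvd_pow 2 hk⟩
  refine ⟨CrownPoset (2 ^ k), inferInstance, inferInstance, ?_,
    ⟨(MulEquiv.ofBijective _ CrownPoset.rotateHom_bijective).symm⟩⟩
  rw [CrownPoset.card_eq, pow_succ]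
  ring
end

section
/- For every prime p ≥ 7 and every integer k ≥ 1, there exists a finite partially ordered set P with exactly 2·p^k + p elements whose automorphism group Aut(P) is isomorphic to the cyclic group Z/p^k. -/
/-!
On `ℤ/n × {low, high}` put the crown order: `high j` lies above `low j` and `low (j - 1)`, so the
Hasse diagram is a `2n`-cycle. Add `p` marks, `mark m` lying above the `low i` with
`i mod p ∈ m + {0, 1, 3}`. For `p ∣ n`, adding `t` to every index is an automorphism.

Conversely, an automorphism preserves the three levels, which are told apart by the number of
elements below a point (`0`, `2` and at least `3`). On the crown it is then a symmetry of the
cycle, `i ↦ a ± i`. The marks rule out the reflections and force the translation of the marks to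
be the induced one, because modulo `p ≥ 6` the set `{0, 1, 3}` is neither a reflection nor a
nontrivial translate of itself. So `Aut ≅ ℤ/n`, and `n = p ^ k` gives `2 p ^ k + p` points.
-/

open Set Function

theorem OrderIso.ncard_Iio_apply {α β : Type*} [Preorder α] [Preorder β] (f : α ≃o β)
    (x : α) : (Iio (f x)).ncard = (Iio x).ncard := by
  rw [← f.image_Iio, ncard_image_of_injective _ f.injective]

namespace ZMod

variable {n : ℕ}

theorem ofNat_ne_zero_of_lt (c : ℕ) [c.AtLeastTwo] (h : c < n) :
    (OfNat.ofNat c : ZMod n) ≠ 0 := by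
  rw [Ne, ← Nat.cast_ofNat, natCast_eq_zero_iff]
  exact fun hd => (Nat.le_of_dvd (NeZero.pos c) hd).not_gt h

theorem eq_of_forall_add_one_eq {X : Sort*} {g : ZMod n → X} (h : ∀ j, g (j + 1) = g j)
    (j : ZMod n) : g j = g 0 := by
  obtain ⟨t, rfl⟩ := intCast_surjective j
  induction t using Int.induction_on with
  | zero => simp
  | succ t ih => rw [Int.cast_add, Int.cast_one, h, ih]
  | pred t ih => rw [← ih, Int.cast_sub, Int.cast_one, ← h, sub_add_cancel]

theorem exists_eq_add_mul_of_forall_sub_mem_iff {α β : ZMod n → ZMod n}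
    (h2 : (2 : ZMod n) ≠ 0) (hα : Injective α)
    (h : ∀ i j, j - i ∈ ({0, 1} : Set (ZMod n)) ↔ β j - α i ∈ ({0, 1} : Set (ZMod n))) :
    ∃ a e : ZMod n, (e = 1 ∨ e = -1) ∧ ∀ i, α i = a + e * i := by
  have h1 : (1 : ZMod n) ≠ 0 := fun h1 => h2 (by linear_combination 2 * h1)
  have step : ∀ j, α (j + 1) - α j = 1 ∨ α (j + 1) - α j = -1 := by
    intro j
    have hj := (h j (j + 1)).1 (by simp)
    have hj' := (h (j + 1) (j + 1)).1 (by simp)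
    have hne : α (j + 1) ≠ α j := hα.ne (by simpa using h1)
    simp only [mem_insert_iff, mem_singleton_iff] at hj hj'
    grind
  have const : ∀ j, α (j + 1 + 1) - α (j + 1) = α (j + 1) - α j := by
    intro j
    -- turning back along the cycle would give `α (j + 2) = α j`
    have hne : α (j + 1 + 1) ≠ α j :=
      hα.ne (by rwa [add_assoc, one_add_one_eq_two, ne_eq, add_eq_left])
    grind [step j, step (j + 1)]
  refine ⟨α 0, α 1 - α 0, by simpa using step 0, fun i => ?_⟩
  have hd : ∀ j, α (j + 1) - α j = α 1 - α 0 := fun j => by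
    simpa using eq_of_forall_add_one_eq (g := fun j => α (j + 1) - α j) const j
  have := eq_of_forall_add_one_eq (g := fun j => α j - (α 1 - α 0) * j)
    (fun j => by linear_combination hd j) i
  linear_combination this

end ZMod

inductive MarkedCrown (p n : ℕ) : Type
  | low : ZMod n → MarkedCrown p n
  | high : ZMod n → MarkedCrown p n
  | mark : ZMod p → MarkedCrown p n

namespace MarkedCrown

variable {p n : ℕ}

def offsets (p : ℕ) : Set (ZMod p) := {0, 1, 3}

theorem eq_zero_of_forall_add_mem_offsets_iff (hp : 4 < p) {t : ZMod p}
    (h : ∀ u, u + t ∈ offsets p ↔ u ∈ offsets p) : t = 0 := by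
  have h2 : (2 : ZMod p) ≠ 0 := ZMod.ofNat_ne_zero_of_lt 2 (by omega)
  have h3 : (3 : ZMod p) ≠ 0 := ZMod.ofNat_ne_zero_of_lt 3 (by omega)
  have h4 : (4 : ZMod p) ≠ 0 := ZMod.ofNat_ne_zero_of_lt 4 (by omega)
  have e0 := (h 0).2 (by simp [offsets])
  have e1 := (h 1).2 (by simp [offsets])
  simp only [offsets, mem_insert_iff, mem_singleton_iff] at e0 e1
  grind

theorem not_forall_sub_mem_offsets_iff (hp : 5 < p) (t : ZMod p) :
    ¬ ∀ u, t - u ∈ offsets p ↔ u ∈ offsets p := by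
  have h2 : (2 : ZMod p) ≠ 0 := ZMod.ofNat_ne_zero_of_lt 2 (by omega)
  have h3 : (3 : ZMod p) ≠ 0 := ZMod.ofNat_ne_zero_of_lt 3 (by omega)
  have h4 : (4 : ZMod p) ≠ 0 := ZMod.ofNat_ne_zero_of_lt 4 (by omega)
  have h5 : (5 : ZMod p) ≠ 0 := ZMod.ofNat_ne_zero_of_lt 5 (by omega)
  intro h
  have e0 := (h 0).2 (by simp [offsets])
  have e1 := (h 1).2 (by simp [offsets])
  have e3 := (h 3).2 (by simp [offsets])
  simp only [offsets, mem_insert_iff, mem_singleton_iff] at e0 e1 e3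
  grind

def Rel : MarkedCrown p n → MarkedCrown p n → Prop
  | low i, high j => j - i ∈ ({0, 1} : Set (ZMod n))
  | low i, mark m => (i.cast : ZMod p) - m ∈ offsets p
  | _, _ => False

instance : IsStrictOrder (MarkedCrown p n) Rel where
  irrefl x := by cases x <;> exact id
  trans x y z := by cases x <;> cases y <;> cases z <;> simp [Rel]

instance : PartialOrder (MarkedCrown p n) := partialOrderOfSO Rel

theorem lt_iff_rel {x y : MarkedCrown p n} : x < y ↔ Rel x y := Iff.rfl

def equivSum : MarkedCrown p n ≃ ZMod n ⊕ ZMod n ⊕ ZMod p where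
  toFun
    | low i => .inl i
    | high j => .inr (.inl j)
    | mark m => .inr (.inr m)
  invFun
    | .inl i => low i
    | .inr (.inl j) => high j
    | .inr (.inr m) => mark m
  left_inv x := by cases x <;> rfl
  right_inv x := by rcases x with i | j | m <;> rfl

instance [NeZero p] [NeZero n] : Fintype (MarkedCrown p n) := Fintype.ofEquiv _ equivSum.symm

theorem card_eq [NeZero p] [NeZero n] : Fintype.card (MarkedCrown p n) = 2 * n + p := by
  rw [Fintype.card_congr equivSum, Fintype.card_sum, Fintype.card_sum, ZMod.card, ZMod.card]
  ring

theorem Iio_low (i : ZMod n) : Iio (low i : MarkedCrown p n) = ∅ := by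
  ext x; cases x <;> simp [lt_iff_rel, Rel]

theorem Iio_high (j : ZMod n) : Iio (high j : MarkedCrown p n) = {low (j - 1), low j} := by
  ext (i | i | m) <;>
    simp [lt_iff_rel, Rel, sub_eq_iff_eq_add', eq_sub_iff_add_eq, eq_comm, or_comm]

theorem ncard_Iio_high (hn : 1 < n) (j : ZMod n) :
    (Iio (high j : MarkedCrown p n)).ncard = 2 := by
  have : Fact (1 < n) := ⟨hn⟩
  rw [Iio_high, ncard_pair (by simp)]

theorem two_lt_ncard_Iio_mark [NeZero n] (hpn : p ∣ n) (hp : 3 < p) (m : ZMod p) :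
    2 < (Iio (mark m : MarkedCrown p n)).ncard := by
  have : Fact (1 < p) := ⟨by omega⟩
  have h2 : (2 : ZMod p) ≠ 0 := ZMod.ofNat_ne_zero_of_lt 2 (by omega)
  have h3 : (3 : ZMod p) ≠ 0 := ZMod.ofNat_ne_zero_of_lt 3 (by omega)
  have lift (c : ZMod p) : ∃ i : ZMod n, (i.cast : ZMod p) = m + c :=
    ZMod.castHom_surjective hpn _
  obtain ⟨i₀, hi₀⟩ := lift 0
  obtain ⟨i₁, hi₁⟩ := lift 1
  obtain ⟨i₃, hi₃⟩ := lift 3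
  rw [two_lt_ncard_iff]
  refine ⟨low i₀, low i₁, low i₃, ?_, ?_, ?_, ?_, ?_, ?_⟩
  any_goals simp [lt_iff_rel, Rel, offsets, hi₀, hi₁, hi₃]
  all_goals rintro ⟨⟩
  · exact one_ne_zero (by linear_combination hi₀ - hi₁)
  · exact h3 (by linear_combination hi₀ - hi₃)
  · exact h2 (by linear_combination hi₁ - hi₃)

theorem ncard_Iio_eq_zero_iff [NeZero n] (hpn : p ∣ n) (hp : 3 < p) (hn : 1 < n)
    {x : MarkedCrown p n} : (Iio x).ncard = 0 ↔ ∃ i, x = low i := by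
  cases x with
  | low i => simp [Iio_low]
  | high j => simp [ncard_Iio_high hn]
  | mark m => simpa using (two_pos.trans (two_lt_ncard_Iio_mark hpn hp m)).ne'

theorem ncard_Iio_eq_two_iff [NeZero n] (hpn : p ∣ n) (hp : 3 < p) (hn : 1 < n)
    {x : MarkedCrown p n} : (Iio x).ncard = 2 ↔ ∃ j, x = high j := by
  cases x with
  | low i => simp [Iio_low]
  | high j => simp [ncard_Iio_high hn]
  | mark m => simpa using (two_lt_ncard_Iio_mark hpn hp m).ne'

theorem two_lt_ncard_Iio_iff [NeZero n] (hpn : p ∣ n) (hp : 3 < p) (hn : 1 < n)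
    {x : MarkedCrown p n} : 2 < (Iio x).ncard ↔ ∃ m, x = mark m := by
  cases x with
  | low i => simp [Iio_low]
  | high j => simp [ncard_Iio_high hn]
  | mark m => simpa using two_lt_ncard_Iio_mark hpn hp m

theorem exists_levelwise [NeZero n] (hpn : p ∣ n) (hp : 3 < p)
    (f : MarkedCrown p n ≃o MarkedCrown p n) :
    ∃ (α β : ZMod n → ZMod n) (γ : ZMod p → ZMod p),
      (∀ i, f (low i) = low (α i)) ∧ (∀ j, f (high j) = high (β j)) ∧
        ∀ m, f (mark m) = mark (γ m) := by
  have hn : 1 < n := (Nat.le_of_dvd (NeZero.pos n) hpn).trans_lt' (by omega)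
  have hlow (i) : ∃ i', f (low i) = low i' := by
    rw [← ncard_Iio_eq_zero_iff hpn hp hn, f.ncard_Iio_apply, Iio_low, ncard_empty]
  have hhigh (j) : ∃ j', f (high j) = high j' := by
    rw [← ncard_Iio_eq_two_iff hpn hp hn, f.ncard_Iio_apply, ncard_Iio_high hn]
  have hmark (m) : ∃ m', f (mark m) = mark m' := by
    rw [← two_lt_ncard_Iio_iff hpn hp hn, f.ncard_Iio_apply]
    exact two_lt_ncard_Iio_mark hpn hp m
  choose α hα using hlow
  choose β hβ using hhigh
  choose γ hγ using hmark
  exact ⟨α, β, γ, hα, hβ, hγ⟩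

def shift (t : ZMod n) : MarkedCrown p n → MarkedCrown p n
  | low i => low (i + t)
  | high j => high (j + t)
  | mark m => mark (m + t.cast)

theorem shift_zero (x : MarkedCrown p n) : shift 0 x = x := by
  cases x <;> simp [shift]

theorem shift_add (hpn : p ∣ n) (s t : ZMod n) (x : MarkedCrown p n) :
    shift (s + t) x = shift s (shift t x) := by
  cases x <;> simp [shift, ZMod.cast_add hpn] <;> ring

theorem rel_shift (hpn : p ∣ n) (t : ZMod n) (x y : MarkedCrown p n) :
    Rel (shift t x) (shift t y) ↔ Rel x y := by
  cases x <;> cases y <;> simp [shift, Rel, ZMod.cast_add hpn]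

def rotate (hpn : p ∣ n) (t : ZMod n) : MarkedCrown p n ≃o MarkedCrown p n :=
  OrderIso.ofRelIsoLT
    { toFun := shift t
      invFun := shift (-t)
      left_inv x := by rw [← shift_add hpn, neg_add_cancel, shift_zero]
      right_inv x := by rw [← shift_add hpn, add_neg_cancel, shift_zero]
      map_rel_iff' := rel_shift hpn t _ _ }

@[simp]
theorem rotate_apply (hpn : p ∣ n) (t : ZMod n) (x : MarkedCrown p n) :
    rotate hpn t x = shift t x := rfl

def rotateHom (hpn : p ∣ n) :
    Multiplicative (ZMod n) →* (MarkedCrown p n ≃o MarkedCrown p n) :=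
  MonoidHom.mk' (fun t => rotate hpn t.toAdd) fun s t => by ext x; simp [shift_add hpn]

theorem rotateHom_injective (hpn : p ∣ n) : Injective (rotateHom hpn) := fun s t h => by
  simpa [rotateHom, shift] using DFunLike.congr_fun h (high 0)

theorem eq_one_and_eq_add_of_forall_mem_offsets_iff (hpn : p ∣ n) (hp : 5 < p) {a e : ZMod n}
    (he : e = 1 ∨ e = -1) {γ : ZMod p → ZMod p}
    (h : ∀ i m, (i.cast : ZMod p) - m ∈ offsets p ↔
      ((a + e * i).cast : ZMod p) - γ m ∈ offsets p) :
    e = 1 ∧ ∀ m, γ m = m + a.cast := by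
  have : NeZero p := ⟨by omega⟩
  -- `γ` carries each translate `m + offsets p` onto `γ m + offsets p`, so `u ↦ e * u + const`
  -- is a translation (`e = 1`) or a reflection (`e = -1`) preserving `offsets p`
  have key (m u : ZMod p) : u ∈ offsets p ↔ a.cast + e.cast * (u + m) - γ m ∈ offsets p := by
    obtain ⟨i, hi⟩ := ZMod.castHom_surjective hpn (u + m)
    rw [ZMod.castHom_apply] at hi
    simpa [ZMod.cast_add hpn, ZMod.cast_mul hpn, hi] using h i m
  rcases he with rfl | rfl
  · refine ⟨rfl, fun m => ?_⟩
    have := eq_zero_of_forall_add_mem_offsets_iff (by omega) (t := a.cast + m - γ m) fun u => by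
      rw [key m u, ZMod.cast_one hpn]; ring_nf
    linear_combination -this
  · refine (not_forall_sub_mem_offsets_iff hp (a.cast - γ 0) fun u => ?_).elim
    rw [key 0 u, ZMod.cast_neg hpn, ZMod.cast_one hpn]; ring_nf

theorem exists_eq_rotate [NeZero n] (hpn : p ∣ n) (hp : 5 < p)
    (f : MarkedCrown p n ≃o MarkedCrown p n) : ∃ t, f = rotate hpn t := by
  obtain ⟨α, β, γ, hα, hβ, hγ⟩ := exists_levelwise hpn (by omega) f
  have h2 : (2 : ZMod n) ≠ 0 :=
    ZMod.ofNat_ne_zero_of_lt 2 ((Nat.le_of_dvd (NeZero.pos n) hpn).trans_lt' (by omega))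
  have hαinj : Injective α := fun i i' h => by
    simpa using f.injective (by rw [hα, hα, h] : f (low i) = f (low i'))
  have hlh (i j : ZMod n) :
      j - i ∈ ({0, 1} : Set (ZMod n)) ↔ β j - α i ∈ ({0, 1} : Set (ZMod n)) := by
    simpa [hα, hβ, lt_iff_rel, Rel] using (f.lt_iff_lt (x := low i) (y := high j)).symm
  obtain ⟨a, e, he, hαe⟩ := ZMod.exists_eq_add_mul_of_forall_sub_mem_iff h2 hαinj hlh
  have hlm (i m) : (i.cast : ZMod p) - m ∈ offsets p ↔
      ((a + e * i).cast : ZMod p) - γ m ∈ offsets p := by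
    simpa [hα, hγ, hαe, lt_iff_rel, Rel] using (f.lt_iff_lt (x := low i) (y := mark m)).symm
  obtain ⟨rfl, hγe⟩ := eq_one_and_eq_add_of_forall_mem_offsets_iff hpn hp he hlm
  have hβe (j) : β j = a + j := by
    have h₀ := (hlh j j).1 (by simp)
    have h₁ := (hlh (j - 1) j).1 (by simp)
    simp only [hαe, mem_insert_iff, mem_singleton_iff] at h₀ h₁
    rcases h₀ with h₀ | h₀
    · linear_combination h₀
    rcases h₁ with h₁ | h₁
    · exact absurd (by linear_combination h₁ - h₀) h2
    · exact absurd (by linear_combination 2 * (h₁ - h₀)) h2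
  refine ⟨a, ?_⟩
  ext (i | j | m)
  · simp [hα, hαe, shift, add_comm]
  · simp [hβ, hβe, shift, add_comm]
  · simp [hγ, hγe, shift]

theorem rotateHom_surjective [NeZero n] (hpn : p ∣ n) (hp : 5 < p) :
    Surjective (rotateHom hpn) := fun f => by
  obtain ⟨t, rfl⟩ := exists_eq_rotate hpn hp f
  exact ⟨.ofAdd t, rfl⟩

end MarkedCrown

theorem exists_poset_aut_iso_zmod_prime_pow_ge_seven_general (p k : ℕ)
    (hp7 : 7 ≤ p) (hk : 1 ≤ k) :
    ∃ (P : Type) (_ : PartialOrder P) (_ : Fintype P),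
      Fintype.card P = 2 * p ^ k + p ∧
      Nonempty ((P ≃o P) ≃* Multiplicative (ZMod (p ^ k))) := by
  have : NeZero p := ⟨by omega⟩
  have : NeZero (p ^ k) := ⟨by positivity⟩
  have hpn : p ∣ p ^ k := dvd_pow_self p (by omega)
  refine ⟨MarkedCrown p (p ^ k), inferInstance, inferInstance, MarkedCrown.card_eq, ⟨?_⟩⟩
  exact (MulEquiv.ofBijective (MarkedCrown.rotateHom hpn)
    ⟨MarkedCrown.rotateHom_injective hpn, MarkedCrown.rotateHom_surjective hpn (by omega)⟩).symm

/-- For every prime `p ≥ 7` and every integer `k ≥ 1`, there exists a finite poset `P`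
with exactly `2 * p ^ k + p` elements whose automorphism group is isomorphic to the
cyclic group `ℤ/p^k`. -/
theorem exists_poset_aut_iso_zmod_prime_pow_ge_seven (p k : ℕ) (hp : p.Prime)
    (hp7 : 7 ≤ p) (hk : 1 ≤ k) :
    ∃ (P : Type) (_ : PartialOrder P) (_ : Fintype P),
      Fintype.card P = 2 * p ^ k + p ∧
      Nonempty ((P ≃o P) ≃* Multiplicative (ZMod (p ^ k))) :=
  exists_poset_aut_iso_zmod_prime_pow_ge_seven_general p k hp7 hk
end

section
/- Every finite partially ordered set P whose automorphism group Aut(P) is isomorphic to the cyclic group Z/3 has at least 9 elements. -/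
namespace NineAux

lemma zmod3_cases (i : ZMod 3) : i = 0 ∨ i = 1 ∨ i = 2 := by revert i; decide

lemma exists_sym_bool : ∀ p : ZMod 3 → Bool, ∃ c : ZMod 3, ∀ j, p j = p (c - j) := by decide

lemma exists_sym (p : ZMod 3 → Prop) : ∃ c : ZMod 3, ∀ j, (p j ↔ p (c - j)) := by
  classical
  obtain ⟨c, hc⟩ := exists_sym_bool (fun j => decide (p j))
  exact ⟨c, fun j => decide_eq_decide.mp (hc j)⟩

variable {P : Type*} [PartialOrder P]

/-- the `i`-th iterate of `f` on `x`, indexed by `ZMod 3`. -/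
def q3 (f : P ≃o P) (x : P) (i : ZMod 3) : P :=
  if i = 0 then x else if i = 1 then f x else f (f x)

variable (f : P ≃o P) (hf3 : ∀ x, f (f (f x)) = x)

include hf3

omit hf3 in
lemma q3_zero (x : P) : q3 f x 0 = x := rfl
omit hf3 in
lemma q3_one (x : P) : q3 f x 1 = f x := rfl
omit hf3 in
lemma q3_two (x : P) : q3 f x 2 = f (f x) := rfl

lemma q3_succ (x : P) (i : ZMod 3) : q3 f x (i + 1) = f (q3 f x i) := by
  rcases zmod3_cases i with rfl | rfl | rfl
  · rfl
  · rfl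
  · rw [show (2 + 1 : ZMod 3) = 0 from rfl, q3_zero, q3_two]
    exact (hf3 x).symm

lemma q3_shift_le (x y : P) (i j : ZMod 3) :
    q3 f x i ≤ q3 f y j ↔ q3 f x (i + 1) ≤ q3 f y (j + 1) := by
  rw [q3_succ f hf3, q3_succ f hf3, f.le_iff_le]

lemma q3_shiftk (x y : P) (i j k : ZMod 3) :
    q3 f x i ≤ q3 f y j ↔ q3 f x (i + k) ≤ q3 f y (j + k) := by
  rcases zmod3_cases k with rfl | rfl | rfl
  · simp
  · exact q3_shift_le f hf3 x y i j
  · rw [q3_shift_le f hf3 x y i j, q3_shift_le f hf3 x y (i + 1) (j + 1),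
      show i + 1 + 1 = i + 2 from by ring, show j + 1 + 1 = j + 2 from by ring]

lemma q3_eq_shiftk (x y : P) (i j k : ZMod 3) (h : q3 f x i = q3 f y j) :
    q3 f x (i + k) = q3 f y (j + k) := by
  have succ : ∀ (i' j' : ZMod 3), q3 f x i' = q3 f y j' → q3 f x (i' + 1) = q3 f y (j' + 1) := by
    intro i' j' h'
    rw [q3_succ f hf3, q3_succ f hf3, h']
  rcases zmod3_cases k with rfl | rfl | rfl
  · simpa using h
  · exact succ _ _ h
  · rw [show i + 2 = i + 1 + 1 from by ring, show j + 2 = j + 1 + 1 from by ring]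
    exact succ _ _ (succ _ _ h)

lemma le_one_fix (x : P) (h : x ≤ f x) : f x = x := by
  have h1 := f.monotone h
  have h2 := f.monotone h1
  rw [hf3] at h2
  exact le_antisymm (h1.trans h2) h

lemma le_two_fix (x : P) (h : x ≤ f (f x)) : f x = x := by
  have h1 := f.monotone (f.monotone h)
  rw [hf3] at h1
  exact le_one_fix f hf3 x (h.trans h1)

lemma ge_one_fix (x : P) (h : f x ≤ x) : f x = x := by
  have h1 := f.monotone h
  have h2 := f.monotone h1
  rw [hf3] at h2
  exact le_antisymm h (h2.trans h1)

lemma ge_two_fix (x : P) (h : f (f x) ≤ x) : f x = x := by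
  have h1 := f.monotone h
  rw [hf3] at h1
  exact le_one_fix f hf3 x h1

lemma orbit_le (x : P) (hx : f x ≠ x) {i j : ZMod 3} (h : q3 f x i ≤ q3 f x j) : i = j := by
  have h0 : q3 f x 0 ≤ q3 f x (j - i) := by
    have := (q3_shiftk f hf3 x x i j (-i)).mp h
    rwa [add_neg_cancel, ← sub_eq_add_neg] at this
  rcases zmod3_cases (j - i) with h1 | h1 | h1
  · exact (sub_eq_zero.mp h1).symm
  · rw [h1, q3_zero, q3_one] at h0
    exact absurd (le_one_fix f hf3 x h0) hx
  · rw [h1, q3_zero, q3_two] at h0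
    exact absurd (le_two_fix f hf3 x h0) hx

lemma q3_inj (x : P) (hx : f x ≠ x) {i j : ZMod 3} (h : q3 f x i = q3 f x j) : i = j :=
  orbit_le f hf3 x hx (le_of_eq h)

lemma q3_not_fix (x : P) (hx : f x ≠ x) (i : ZMod 3) : f (q3 f x i) ≠ q3 f x i := by
  intro h
  rw [← q3_succ f hf3] at h
  have h2 := q3_inj f hf3 x hx h
  have h3 : (1 : ZMod 3) = 0 := add_left_cancel (h2.trans (add_zero i).symm)
  exact absurd h3 (by decide)

lemma orbit_disj (x y : P) (hy : ∀ i, y ≠ q3 f x i) (i j : ZMod 3) :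
    q3 f x i ≠ q3 f y j := by
  intro h
  have h0 : q3 f x (i - j) = q3 f y 0 := by
    have := q3_eq_shiftk f hf3 x y i j (-j) h
    rwa [add_neg_cancel, ← sub_eq_add_neg] at this
  exact hy (i - j) (by rw [q3_zero] at h0; exact h0.symm)

lemma fix_le_iff (x : P) (hx : f x = x) (y : P) : x ≤ y ↔ x ≤ f y := by
  constructor
  · intro h
    have := f.monotone h
    rwa [hx] at this
  · intro h
    have h2 := f.monotone (f.monotone h)
    rwa [hf3, hx, hx] at h2

lemma le_fix_iff (x : P) (hx : f x = x) (y : P) : y ≤ x ↔ f y ≤ x := by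
  constructor
  · intro h
    have := f.monotone h
    rwa [hx] at this
  · intro h
    have h2 := f.monotone (f.monotone h)
    rwa [hf3, hx, hx] at h2

lemma fix_le_all (x : P) (hx : f x = x) {z : P} {i : ZMod 3} (h : x ≤ q3 f z i) (m : ZMod 3) :
    x ≤ q3 f z m := by
  have step : ∀ j, x ≤ q3 f z j → x ≤ q3 f z (j + 1) := by
    intro j hj
    rw [q3_succ f hf3]
    exact (fix_le_iff f hf3 x hx _).mp hj
  have hm : m = i ∨ m = i + 1 ∨ m = i + 2 := by
    rcases zmod3_cases (m - i) with h1 | h1 | h1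
    · exact Or.inl (sub_eq_zero.mp h1)
    · exact Or.inr (Or.inl (by rw [sub_eq_iff_eq_add.mp h1, add_comm]))
    · exact Or.inr (Or.inr (by rw [sub_eq_iff_eq_add.mp h1, add_comm]))
  rcases hm with rfl | rfl | rfl
  · exact h
  · exact step i h
  · rw [show i + 2 = i + 1 + 1 from by ring]
    exact step _ (step _ h)

lemma all_le_fix (x : P) (hx : f x = x) {z : P} {i : ZMod 3} (h : q3 f z i ≤ x) (m : ZMod 3) :
    q3 f z m ≤ x := by
  have step : ∀ j, q3 f z j ≤ x → q3 f z (j + 1) ≤ x := by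
    intro j hj
    rw [q3_succ f hf3]
    exact (le_fix_iff f hf3 x hx _).mp hj
  have hm : m = i ∨ m = i + 1 ∨ m = i + 2 := by
    rcases zmod3_cases (m - i) with h1 | h1 | h1
    · exact Or.inl (sub_eq_zero.mp h1)
    · exact Or.inr (Or.inl (by rw [sub_eq_iff_eq_add.mp h1, add_comm]))
    · exact Or.inr (Or.inr (by rw [sub_eq_iff_eq_add.mp h1, add_comm]))
  rcases hm with rfl | rfl | rfl
  · exact h
  · exact step i h
  · rw [show i + 2 = i + 1 + 1 from by ring]
    exact step _ (step _ h)

lemma cross_iff (x y : P) (i j : ZMod 3) :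
    q3 f x i ≤ q3 f y j ↔ x ≤ q3 f y (j - i) := by
  rw [q3_shiftk f hf3 x y i j (-i), add_neg_cancel, ← sub_eq_add_neg, q3_zero]

lemma cross_iff' (x y : P) (i j : ZMod 3) :
    q3 f x i ≤ q3 f y j ↔ q3 f x (i - j) ≤ y := by
  rw [q3_shiftk f hf3 x y i j (-j), add_neg_cancel, ← sub_eq_add_neg, q3_zero]

lemma case1 (a : P) (ha : f a ≠ a)
    (hM : ∀ x, f x = x ∨ ∃ i, x = q3 f a i) :
    ∃ g : P ≃o P, g * g = 1 ∧ g ≠ 1 := by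
  classical
  have qa_ne : ∀ {i j : ZMod 3}, i ≠ j → q3 f a i ≠ q3 f a j :=
    fun hij h => hij (q3_inj f hf3 a ha h)
  set g0 : P → P := fun x =>
    if x = q3 f a 1 then q3 f a 2 else if x = q3 f a 2 then q3 f a 1 else x with hg0
  have gq_a : ∀ i, g0 (q3 f a i) = q3 f a (-i) := by
    intro i
    rcases zmod3_cases i with rfl | rfl | rfl
    · rw [hg0]
      simp only
      rw [if_neg (qa_ne (by decide)), if_neg (qa_ne (by decide)), neg_zero]
    · rw [hg0]
      simp only
      rw [if_pos trivial, show (-1 : ZMod 3) = 2 from rfl]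
    · rw [hg0]
      simp only
      rw [if_neg (qa_ne (by decide)), if_pos trivial, show (-2 : ZMod 3) = 1 from rfl]
  have g_fix : ∀ x, f x = x → g0 x = x := by
    intro x hx
    have hne : ∀ i : ZMod 3, x ≠ q3 f a i := by
      intro i h
      rw [h] at hx
      exact q3_not_fix f hf3 a ha i hx
    rw [hg0]
    simp only
    rw [if_neg (hne 1), if_neg (hne 2)]
  have hinv : Function.Involutive g0 := by
    intro x
    rcases hM x with hx | ⟨i, rfl⟩
    · rw [g_fix x hx, g_fix x hx]
    · rw [gq_a, gq_a, neg_neg]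
  have hmono : ∀ x y : P, x ≤ y → g0 x ≤ g0 y := by
    intro x y hxy
    rcases hM x with hx | ⟨i, rfl⟩ <;> rcases hM y with hy | ⟨i', rfl⟩
    · rw [g_fix x hx, g_fix y hy]; exact hxy
    · rw [g_fix x hx, gq_a]; exact fix_le_all f hf3 x hx hxy (-i')
    · rw [g_fix y hy, gq_a]; exact all_le_fix f hf3 y hy hxy (-i)
    · obtain rfl := orbit_le f hf3 a ha hxy
      exact le_rfl
  refine ⟨⟨hinv.toPerm g0, ?_⟩, ?_, ?_⟩
  · intro x y
    refine ⟨fun h => ?_, fun h => hmono x y h⟩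
    have h' : g0 x ≤ g0 y := h
    have h2 := hmono _ _ h'
    rwa [hinv x, hinv y] at h2
  · exact OrderIso.ext (funext fun x => hinv x)
  · intro h1
    have h2 : q3 f a (-1) = q3 f a 1 := by
      have := congrArg (fun k : P ≃o P => k (q3 f a 1)) h1
      exact (gq_a 1).symm.trans this
    have := q3_inj f hf3 a ha h2
    revert this; decide

lemma case2 (a b : P) (ha : f a ≠ a) (hb : f b ≠ b)
    (hab : ∀ i j, q3 f a i ≠ q3 f b j)
    (hM : ∀ x, f x = x ∨ (∃ i, x = q3 f a i) ∨ (∃ j, x = q3 f b j)) :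
    ∃ g : P ≃o P, g * g = 1 ∧ g ≠ 1 := by
  classical
  have qa_ne : ∀ {i j : ZMod 3}, i ≠ j → q3 f a i ≠ q3 f a j :=
    fun hij h => hij (q3_inj f hf3 a ha h)
  have qb_ne : ∀ {i j : ZMod 3}, i ≠ j → q3 f b i ≠ q3 f b j :=
    fun hij h => hij (q3_inj f hf3 b hb h)
  have hba : ∀ j i, q3 f b j ≠ q3 f a i := fun j i h => hab i j h.symm
  -- not both directions of cross relations occur
  have hud : (∀ j, ¬ a ≤ q3 f b j) ∨ (∀ j, ¬ q3 f b j ≤ a) := by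
    by_contra hcon
    push_neg at hcon
    obtain ⟨⟨j, hj⟩, ⟨j', hj'⟩⟩ := hcon
    have h2 : q3 f b j ≤ q3 f a (j - j') := by
      have h0 : q3 f b j' ≤ q3 f a 0 := by rwa [q3_zero]
      have := (q3_shiftk f hf3 b a j' 0 (j - j')).mp h0
      rwa [add_sub_cancel, zero_add] at this
    have h3 : a ≤ q3 f a (j - j') := hj.trans h2
    rcases zmod3_cases (j - j') with h4 | h4 | h4
    · rw [h4, q3_zero] at h2
      exact hab 0 j (by rw [q3_zero]; exact le_antisymm hj h2)
    · rw [h4, q3_one] at h3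
      exact ha (le_one_fix f hf3 a h3)
    · rw [h4, q3_two] at h3
      exact ha (le_two_fix f hf3 a h3)
  obtain ⟨c, hcu, hcd⟩ : ∃ c : ZMod 3,
      (∀ j, (a ≤ q3 f b j) ↔ (a ≤ q3 f b (c - j))) ∧
      (∀ j, (q3 f b j ≤ a) ↔ (q3 f b (c - j) ≤ a)) := by
    rcases hud with h | h
    · obtain ⟨c, hc⟩ := exists_sym (fun j => q3 f b j ≤ a)
      exact ⟨c, fun j => iff_of_false (h j) (h _), hc⟩
    · obtain ⟨c, hc⟩ := exists_sym (fun j => a ≤ q3 f b j)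
      exact ⟨c, hc, fun j => iff_of_false (h j) (h _)⟩
  set g0 : P → P := fun x =>
    if x = q3 f a 1 then q3 f a 2 else if x = q3 f a 2 then q3 f a 1 else
    if x = q3 f b 0 then q3 f b c else if x = q3 f b 1 then q3 f b (c - 1) else
    if x = q3 f b 2 then q3 f b (c - 2) else x with hg0
  have gq_a : ∀ i, g0 (q3 f a i) = q3 f a (-i) := by
    intro i
    rcases zmod3_cases i with rfl | rfl | rfl
    · rw [hg0]; simp only
      rw [if_neg (qa_ne (by decide)), if_neg (qa_ne (by decide)), if_neg (hab 0 0),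
        if_neg (hab 0 1), if_neg (hab 0 2), neg_zero]
    · rw [hg0]; simp only
      rw [if_pos trivial, show (-1 : ZMod 3) = 2 from rfl]
    · rw [hg0]; simp only
      rw [if_neg (qa_ne (by decide)), if_pos trivial, show (-2 : ZMod 3) = 1 from rfl]
  have gq_b : ∀ j, g0 (q3 f b j) = q3 f b (c - j) := by
    intro j
    rcases zmod3_cases j with rfl | rfl | rfl
    · rw [hg0]; simp only
      rw [if_neg (hba 0 1), if_neg (hba 0 2), if_pos trivial, sub_zero]
    · rw [hg0]; simp only
      rw [if_neg (hba 1 1), if_neg (hba 1 2), if_neg (qb_ne (by decide)), if_pos trivial]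
    · rw [hg0]; simp only
      rw [if_neg (hba 2 1), if_neg (hba 2 2), if_neg (qb_ne (by decide)),
        if_neg (qb_ne (by decide)), if_pos trivial]
  have g_fix : ∀ x, f x = x → g0 x = x := by
    intro x hx
    have hnea : ∀ i : ZMod 3, x ≠ q3 f a i := by
      intro i h; rw [h] at hx; exact q3_not_fix f hf3 a ha i hx
    have hneb : ∀ i : ZMod 3, x ≠ q3 f b i := by
      intro i h; rw [h] at hx; exact q3_not_fix f hf3 b hb i hx
    rw [hg0]; simp only
    rw [if_neg (hnea 1), if_neg (hnea 2), if_neg (hneb 0), if_neg (hneb 1), if_neg (hneb 2)]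
  have hinv : Function.Involutive g0 := by
    intro x
    rcases hM x with hx | ⟨i, rfl⟩ | ⟨j, rfl⟩
    · rw [g_fix x hx, g_fix x hx]
    · rw [gq_a, gq_a, neg_neg]
    · rw [gq_b, gq_b, sub_sub_cancel]
  have hmono : ∀ x y : P, x ≤ y → g0 x ≤ g0 y := by
    intro x y hxy
    rcases hM x with hx | ⟨i, rfl⟩ | ⟨j, rfl⟩ <;> rcases hM y with hy | ⟨i', rfl⟩ | ⟨j', rfl⟩
    · rw [g_fix x hx, g_fix y hy]; exact hxy
    · rw [g_fix x hx, gq_a]; exact fix_le_all f hf3 x hx hxy (-i')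
    · rw [g_fix x hx, gq_b]; exact fix_le_all f hf3 x hx hxy (c - j')
    · rw [g_fix y hy, gq_a]; exact all_le_fix f hf3 y hy hxy (-i)
    · obtain rfl := orbit_le f hf3 a ha hxy
      exact le_rfl
    · rw [gq_a, gq_b]
      have h1 : a ≤ q3 f b (j' - i) := (cross_iff f hf3 a b i j').mp hxy
      have h2 := (hcu _).mp h1
      rw [cross_iff f hf3, show c - j' - -i = c - (j' - i) from by ring]
      exact h2
    · rw [g_fix y hy, gq_b]; exact all_le_fix f hf3 y hy hxy (c - j)
    · rw [gq_b, gq_a]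
      have h1 : q3 f b (j - i') ≤ a := (cross_iff' f hf3 b a j i').mp hxy
      have h2 := (hcd _).mp h1
      rw [cross_iff' f hf3, show c - j - -i' = c - (j - i') from by ring]
      exact h2
    · obtain rfl := orbit_le f hf3 b hb hxy
      exact le_rfl
  refine ⟨⟨hinv.toPerm g0, ?_⟩, ?_, ?_⟩
  · intro x y
    refine ⟨fun h => ?_, fun h => hmono x y h⟩
    have h' : g0 x ≤ g0 y := h
    have h2 := hmono _ _ h'
    rwa [hinv x, hinv y] at h2
  · exact OrderIso.ext (funext fun x => hinv x)
  · intro h1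
    have h2 : q3 f a (-1) = q3 f a 1 := by
      have := congrArg (fun k : P ≃o P => k (q3 f a 1)) h1
      exact (gq_a 1).symm.trans this
    have := q3_inj f hf3 a ha h2
    revert this; decide

end NineAux

open NineAux in
/-- Every finite poset `P` whose automorphism group is isomorphic to the cyclic group
`ℤ/3` has at least `9` elements. -/
theorem nine_le_card_of_aut_iso_zmod_three (P : Type*) [PartialOrder P] [Fintype P]
    (h : Nonempty ((P ≃o P) ≃* Multiplicative (ZMod 3))) :
    9 ≤ Fintype.card P := by
  classical
  obtain ⟨e⟩ := h
  set f : P ≃o P := e.symm (Multiplicative.ofAdd 1) with hf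
  have hf3p : f ^ 3 = 1 := by
    rw [hf, ← map_pow, show (Multiplicative.ofAdd (1 : ZMod 3)) ^ 3 = 1 from by decide, map_one]
  have hf3 : ∀ x, f (f (f x)) = x := by
    intro x
    have : (f ^ 3) x = (1 : P ≃o P) x := by rw [hf3p]
    exact this
  have hfne : f ≠ 1 := by
    intro h1
    have h3 : e f = e 1 := congrArg e h1
    rw [hf, MulEquiv.apply_symm_apply] at h3
    exact absurd (h3.trans (map_one e)) (by decide)
  have hno2 : ∀ g : P ≃o P, g * g = 1 → g = 1 := by
    intro g hg
    have h1 : (e g) * (e g) = 1 := by rw [← map_mul, hg, map_one]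
    have h2 : e g = 1 := by
      have hz : ∀ x : Multiplicative (ZMod 3), x * x = 1 → x = 1 := by decide
      exact hz _ h1
    have h3 := congrArg e.symm h2
    rw [MulEquiv.symm_apply_apply] at h3
    exact h3.trans (map_one e.symm)
  by_contra hcard
  push_neg at hcard
  obtain ⟨a, ha⟩ : ∃ a : P, f a ≠ a := by
    by_contra hall
    push_neg at hall
    exact hfne (OrderIso.ext (funext hall))
  by_cases hb : ∃ b : P, f b ≠ b ∧ ∀ i, b ≠ q3 f a i
  · obtain ⟨b, hb', hbq⟩ := hb
    have hab : ∀ i j, q3 f a i ≠ q3 f b j := orbit_disj f hf3 a b hbq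
    by_cases hc : ∃ c2 : P, f c2 ≠ c2 ∧ (∀ i, c2 ≠ q3 f a i) ∧ (∀ j, c2 ≠ q3 f b j)
    · -- three orbits: nine distinct elements
      obtain ⟨c2, hc', hca, hcb⟩ := hc
      have hac : ∀ i j, q3 f a i ≠ q3 f c2 j := orbit_disj f hf3 a c2 hca
      have hbc : ∀ i j, q3 f b i ≠ q3 f c2 j := orbit_disj f hf3 b c2 hcb
      have qa_ne : ∀ {i j : ZMod 3}, i ≠ j → q3 f a i ≠ q3 f a j :=
        fun hij h => hij (q3_inj f hf3 a ha h)
      have qb_ne : ∀ {i j : ZMod 3}, i ≠ j → q3 f b i ≠ q3 f b j :=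
        fun hij h => hij (q3_inj f hf3 b hb' h)
      have qc_ne : ∀ {i j : ZMod 3}, i ≠ j → q3 f c2 i ≠ q3 f c2 j :=
        fun hij h => hij (q3_inj f hf3 c2 hc' h)
      set A : Finset P := {q3 f a 0, q3 f a 1, q3 f a 2} with hA
      set B : Finset P := {q3 f b 0, q3 f b 1, q3 f b 2} with hB
      set C : Finset P := {q3 f c2 0, q3 f c2 1, q3 f c2 2} with hC
      have cA : A.card = 3 := by
        rw [hA, Finset.card_insert_of_notMem (by
            simp only [Finset.mem_insert, Finset.mem_singleton]
            push_neg
            exact ⟨qa_ne (by decide), qa_ne (by decide)⟩),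
          Finset.card_insert_of_notMem (by
            simp only [Finset.mem_singleton]
            exact qa_ne (by decide)), Finset.card_singleton]
      have cB : B.card = 3 := by
        rw [hB, Finset.card_insert_of_notMem (by
            simp only [Finset.mem_insert, Finset.mem_singleton]
            push_neg
            exact ⟨qb_ne (by decide), qb_ne (by decide)⟩),
          Finset.card_insert_of_notMem (by
            simp only [Finset.mem_singleton]
            exact qb_ne (by decide)), Finset.card_singleton]
      have cC : C.card = 3 := by
        rw [hC, Finset.card_insert_of_notMem (by
            simp only [Finset.mem_insert, Finset.mem_singleton]
            push_neg
            exact ⟨qc_ne (by decide), qc_ne (by decide)⟩),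
          Finset.card_insert_of_notMem (by
            simp only [Finset.mem_singleton]
            exact qc_ne (by decide)), Finset.card_singleton]
      have dAB : Disjoint A B := by
        rw [Finset.disjoint_left]
        intro x hxA hxB
        rw [hA] at hxA
        rw [hB] at hxB
        simp only [Finset.mem_insert, Finset.mem_singleton] at hxA hxB
        rcases hxA with h1 | h1 | h1 <;> rcases hxB with h2 | h2 | h2 <;>
          exact hab _ _ (h1.symm.trans h2)
      have dAC : Disjoint A C := by
        rw [Finset.disjoint_left]
        intro x hxA hxC
        rw [hA] at hxA
        rw [hC] at hxC
        simp only [Finset.mem_insert, Finset.mem_singleton] at hxA hxC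
        rcases hxA with h1 | h1 | h1 <;> rcases hxC with h2 | h2 | h2 <;>
          exact hac _ _ (h1.symm.trans h2)
      have dBC : Disjoint B C := by
        rw [Finset.disjoint_left]
        intro x hxB hxC
        rw [hB] at hxB
        rw [hC] at hxC
        simp only [Finset.mem_insert, Finset.mem_singleton] at hxB hxC
        rcases hxB with h1 | h1 | h1 <;> rcases hxC with h2 | h2 | h2 <;>
          exact hbc _ _ (h1.symm.trans h2)
      have hcard9 : (A ∪ B ∪ C).card = 9 := by
        rw [Finset.card_union_of_disjoint (by
            rw [Finset.disjoint_union_left]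
            exact ⟨dAC, dBC⟩),
          Finset.card_union_of_disjoint dAB, cA, cB, cC]
      have h9 := Finset.card_le_univ (A ∪ B ∪ C)
      rw [hcard9] at h9
      omega
    · -- two orbits
      have hM2 : ∀ x, f x = x ∨ (∃ i, x = q3 f a i) ∨ (∃ j, x = q3 f b j) := by
        intro x
        by_cases hx : f x = x
        · exact Or.inl hx
        by_cases hxa : ∃ i, x = q3 f a i
        · exact Or.inr (Or.inl hxa)
        push_neg at hc hxa
        exact Or.inr (Or.inr (hc x hx hxa))
      obtain ⟨g, hg2, hg1⟩ := case2 f hf3 a b ha hb' hab hM2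
      exact hg1 (hno2 g hg2)
  · -- one orbit
    have hM1 : ∀ x, f x = x ∨ ∃ i, x = q3 f a i := by
      intro x
      by_cases hx : f x = x
      · exact Or.inl hx
      push_neg at hb
      exact Or.inr (hb x hx)
    obtain ⟨g, hg2, hg1⟩ := case1 f hf3 a ha hM1
    exact hg1 (hno2 g hg2)
end

section
/- If P is a finite partially ordered set whose automorphism group Aut(P) is isomorphic to the cyclic group Z/3, then the natural action of Aut(P) on P has at least three distinct orbits of cardinality exactly 3; in particular P has at least 9 elements. -/
namespace ThreeOrbitsAux

variable {P : Type*} [PartialOrder P]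

/-- a monotone self-equivalence of a finite poset reflects order -/
lemma le_iff_of_monotone_equiv [Finite P] (τ : P ≃ P) (hm : Monotone τ) {x y : P} :
    τ x ≤ τ y ↔ x ≤ y := by
  refine ⟨fun h => ?_, fun h => hm h⟩
  have hinj : Function.Injective (fun p : P × P => (τ p.1, τ p.2)) := by
    intro u v huv
    simp only [Prod.mk.injEq] at huv
    exact Prod.ext (τ.injective huv.1) (τ.injective huv.2)
  have hsub : (fun p : P × P => (τ p.1, τ p.2)) '' {p : P × P | p.1 ≤ p.2}
      ⊆ {p : P × P | p.1 ≤ p.2} := by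
    rintro ⟨u, v⟩ ⟨⟨s, t⟩, hst, heq⟩
    simp only [Prod.mk.injEq] at heq
    obtain ⟨rfl, rfl⟩ := heq
    exact hm hst
  have heq := Set.eq_of_subset_of_ncard_le hsub
    (le_of_eq (Set.ncard_image_of_injective _ hinj).symm) (Set.toFinite _)
  have hmem : (τ x, τ y) ∈ {p : P × P | p.1 ≤ p.2} := h
  rw [← heq] at hmem
  obtain ⟨⟨s, t⟩, hst, heq2⟩ := hmem
  simp only [Prod.mk.injEq] at heq2
  rwa [τ.injective heq2.1, τ.injective heq2.2] at hst

lemma rel_shift {R : ZMod 3 → ZMod 3 → Prop}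
    (h : ∀ m l, R m l → R (m + 1) (l + 1)) (m l : ZMod 3) : R m l ↔ R 0 (l - m) := by
  have h3 : ∀ (k : ZMod 3), ∀ m l, R m l → R (m + k) (l + k) := by
    have tri : ∀ k : ZMod 3, k = 0 ∨ k = 1 ∨ k = 2 := by decide
    intro k m l hr
    rcases tri k with rfl | rfl | rfl
    · simpa using hr
    · exact h m l hr
    · have h2 := h _ _ (h m l hr)
      have e1 : m + 1 + 1 = m + 2 := by ring
      have e2 : l + 1 + 1 = l + 2 := by ring
      rwa [e1, e2] at h2
  constructor
  · intro hr
    have := h3 (-m) m l hr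
    rwa [add_neg_cancel, ← sub_eq_add_neg] at this
  · intro hr
    have := h3 m 0 (l - m) hr
    rwa [zero_add, sub_add_cancel] at this

lemma incomp1 (σ : P ≃o P) (hσ : ∀ x, σ (σ (σ x)) = x) (x : P) (hx : σ x ≠ x) :
    ¬ x ≤ σ x := by
  intro h
  apply hx
  have h1 : σ x ≤ σ (σ x) := σ.monotone h
  have h2 : σ (σ x) ≤ σ (σ (σ x)) := σ.monotone h1
  rw [hσ] at h2
  exact le_antisymm (h1.trans h2) h

lemma incomp2 (σ : P ≃o P) (hσ : ∀ x, σ (σ (σ x)) = x) (x : P) (hx : σ x ≠ x) :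
    ¬ x ≤ σ (σ x) := by
  intro h
  have h1 : σ (σ x) ≤ σ (σ (σ (σ x))) := σ.monotone (σ.monotone h)
  rw [hσ (σ x)] at h1
  exact incomp1 σ hσ x hx (h.trans h1)

/-- the transposition of `u` and `v` as a function on indices -/
abbrev swf (u v : ZMod 3) : ZMod 3 → ZMod 3 := fun m => if m = u then v else if m = v then u else m

lemma swap_eval [DecidableEq P] (A : ZMod 3 → P) (hAinj : ∀ i j, A i = A j → i = j)
    (u v i : ZMod 3) : Equiv.swap (A u) (A v) (A i) = A (swf u v i) := by
  by_cases h1 : i = u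
  · subst h1
    rw [Equiv.swap_apply_left]
    simp [swf]
  · by_cases h2 : i = v
    · subst h2
      rw [Equiv.swap_apply_right]
      simp [swf, h1]
    · rw [Equiv.swap_apply_of_ne_of_ne (fun h => h1 (hAinj _ _ h)) (fun h => h2 (hAinj _ _ h))]
      simp [swf, h1, h2]



lemma master [Finite P] (σ : P ≃o P)
    (key : ∀ f : P ≃o P, f = 1 ∨ f = σ ∨ f = σ * σ)
    (A B : ZMod 3 → P)
    (hA : ∀ i, σ (A i) = A (i + 1)) (hB : ∀ i, σ (B i) = B (i + 1))
    (hAne : ∀ i j, i ≠ j → ¬ A i ≤ A j) (hBne : ∀ i j, i ≠ j → ¬ B i ≤ B j)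
    (hAB : ∀ i j, A i ≠ B j)
    (Hcov : ∀ x : P, σ x ≠ x → (∃ i, x = A i) ∨ (∃ i, x = B i))
    (τ : P ≃ P) (p q : ZMod 3 → ZMod 3)
    (hτA : ∀ i, τ (A i) = A (p i)) (hτB : ∀ i, τ (B i) = B (q i))
    (hfix : ∀ x, σ x = x → τ x = x)
    (hpat : ∀ m l, (A m ≤ B l ∨ B l ≤ A m) → (A (p m) ≤ B (q l) ∨ B (q l) ≤ A (p m)))
    (hne1 : ∃ i, p i ≠ i ∨ q i ≠ i)
    (hne2 : ∃ i, p i ≠ i + 1 ∨ q i ≠ i + 1)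
    (hne3 : ∃ i, p i ≠ i + 1 + 1 ∨ q i ≠ i + 1 + 1) : False := by
  classical
  have hAinj : ∀ i j, A i = A j → i = j := by
    intro i j hij
    by_contra hne
    exact hAne i j hne (le_of_eq hij)
  have hBinj : ∀ i j, B i = B j → i = j := by
    intro i j hij
    by_contra hne
    exact hBne i j hne (le_of_eq hij)
  have rsh : ∀ m l, A m ≤ B l ↔ A 0 ≤ B (l - m) :=
    rel_shift (R := fun m l => A m ≤ B l) (fun m l h => by
      have h2 := σ.monotone h; rwa [hA, hB] at h2)
  have ssh : ∀ m l, B l ≤ A m ↔ B (l - m) ≤ A 0 :=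
    rel_shift (R := fun m l => B l ≤ A m) (fun m l h => by
      have h2 := σ.monotone h; rwa [hA, hB] at h2)
  have L2 : ∀ m l m' l', A m ≤ B l → B l' ≤ A m' → False := by
    intro m l m' l' h1 h2
    rw [rsh] at h1
    rw [ssh] at h2
    by_cases hh : l - m = l' - m'
    · rw [← hh] at h2
      exact hAB 0 (l - m) (le_antisymm h1 h2)
    · exact hBne (l' - m') (l - m) (fun hc => hh hc.symm) (h2.trans h1)
  have tri2 : ∀ i j : ZMod 3, j = i ∨ j = i + 1 ∨ j = i + 1 + 1 := by decide
  have hxA : ∀ x, σ x = x → ∀ i j, x ≤ A i → x ≤ A j := by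
    intro x hx i j h
    have step : ∀ i, x ≤ A i → x ≤ A (i + 1) := by
      intro i h
      have h2 := σ.monotone h
      rwa [hA, hx] at h2
    rcases tri2 i j with rfl | rfl | rfl
    · exact h
    · exact step _ h
    · exact step _ (step _ h)
  have hAx : ∀ x, σ x = x → ∀ i j, A i ≤ x → A j ≤ x := by
    intro x hx i j h
    have step : ∀ i, A i ≤ x → A (i + 1) ≤ x := by
      intro i h
      have h2 := σ.monotone h
      rwa [hA, hx] at h2
    rcases tri2 i j with rfl | rfl | rfl
    · exact h
    · exact step _ h
    · exact step _ (step _ h)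
  have hxB : ∀ x, σ x = x → ∀ i j, x ≤ B i → x ≤ B j := by
    intro x hx i j h
    have step : ∀ i, x ≤ B i → x ≤ B (i + 1) := by
      intro i h
      have h2 := σ.monotone h
      rwa [hB, hx] at h2
    rcases tri2 i j with rfl | rfl | rfl
    · exact h
    · exact step _ h
    · exact step _ (step _ h)
  have hBx : ∀ x, σ x = x → ∀ i j, B i ≤ x → B j ≤ x := by
    intro x hx i j h
    have step : ∀ i, B i ≤ x → B (i + 1) ≤ x := by
      intro i h
      have h2 := σ.monotone h
      rwa [hB, hx] at h2
    rcases tri2 i j with rfl | rfl | rfl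
    · exact h
    · exact step _ h
    · exact step _ (step _ h)
  have classify : ∀ x : P, (σ x = x) ∨ (∃ i, x = A i) ∨ (∃ i, x = B i) := by
    intro x
    by_cases hx : σ x = x
    · exact Or.inl hx
    · exact Or.inr (Hcov x hx)
  have hmono : Monotone ⇑τ := by
    intro x y hxy
    rcases classify x with hx | ⟨i, rfl⟩ | ⟨i, rfl⟩
    · rcases classify y with hy | ⟨j, rfl⟩ | ⟨j, rfl⟩
      · rw [hfix x hx, hfix y hy]; exact hxy
      · rw [hfix x hx, hτA j]; exact hxA x hx j (p j) hxy
      · rw [hfix x hx, hτB j]; exact hxB x hx j (q j) hxy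
    · rcases classify y with hy | ⟨j, rfl⟩ | ⟨j, rfl⟩
      · rw [hτA i, hfix y hy]; exact hAx y hy i (p i) hxy
      · by_cases hij : i = j
        · subst hij; exact le_rfl
        · exact absurd hxy (hAne i j hij)
      · rw [hτA i, hτB j]
        rcases hpat i j (Or.inl hxy) with h | h
        · exact h
        · exact absurd h (fun h' => L2 i j (p i) (q j) hxy h')
    · rcases classify y with hy | ⟨j, rfl⟩ | ⟨j, rfl⟩
      · rw [hτB i, hfix y hy]; exact hBx y hy i (q i) hxy
      · rw [hτB i, hτA j]
        rcases hpat j i (Or.inr hxy) with h | h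
        · exact absurd h (fun h' => L2 (p j) (q i) j i h' hxy)
        · exact h
      · by_cases hij : i = j
        · subst hij; exact le_rfl
        · exact absurd hxy (hBne i j hij)
  let τ' : P ≃o P := { toEquiv := τ, map_rel_iff' := le_iff_of_monotone_equiv τ hmono }
  rcases key τ' with h1 | h1 | h1
  · obtain ⟨i, hi⟩ := hne1
    rcases hi with hi | hi
    · apply hi
      apply hAinj
      rw [← hτA i]
      exact congrArg (fun f : P ≃o P => f (A i)) h1
    · apply hi
      apply hBinj
      rw [← hτB i]
      exact congrArg (fun f : P ≃o P => f (B i)) h1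
  · obtain ⟨i, hi⟩ := hne2
    rcases hi with hi | hi
    · apply hi
      apply hAinj
      rw [← hτA i, ← hA i]
      exact congrArg (fun f : P ≃o P => f (A i)) h1
    · apply hi
      apply hBinj
      rw [← hτB i, ← hB i]
      exact congrArg (fun f : P ≃o P => f (B i)) h1
  · obtain ⟨i, hi⟩ := hne3
    rcases hi with hi | hi
    · apply hi
      apply hAinj
      rw [← hτA i, ← hA (i+1), ← hA i]
      exact congrArg (fun f : P ≃o P => f (A i)) h1
    · apply hi
      apply hBinj
      rw [← hτB i, ← hB (i+1), ← hB i]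
      exact congrArg (fun f : P ≃o P => f (B i)) h1



lemma master2 [Finite P] (σ : P ≃o P)
    (key : ∀ f : P ≃o P, f = 1 ∨ f = σ ∨ f = σ * σ)
    (A B : ZMod 3 → P)
    (hA : ∀ i, σ (A i) = A (i + 1)) (hB : ∀ i, σ (B i) = B (i + 1))
    (hAne : ∀ i j, i ≠ j → ¬ A i ≤ A j) (hBne : ∀ i j, i ≠ j → ¬ B i ≤ B j)
    (hAB : ∀ i j, A i ≠ B j)
    (Hcov : ∀ x : P, σ x ≠ x → (∃ i, x = A i) ∨ (∃ i, x = B i))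
    (u1 u2 v1 v2 : ZMod 3)
    (hpat : ∀ m l, (A m ≤ B l ∨ B l ≤ A m) →
      (A (swf u1 u2 m) ≤ B (swf v1 v2 l) ∨ B (swf v1 v2 l) ≤ A (swf u1 u2 m)))
    (hne1 : ∃ i, swf u1 u2 i ≠ i ∨ swf v1 v2 i ≠ i)
    (hne2 : ∃ i, swf u1 u2 i ≠ i + 1 ∨ swf v1 v2 i ≠ i + 1)
    (hne3 : ∃ i, swf u1 u2 i ≠ i + 1 + 1 ∨ swf v1 v2 i ≠ i + 1 + 1) : False := by
  classical
  have hAinj : ∀ i j, A i = A j → i = j := by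
    intro i j hij
    by_contra hne
    exact hAne i j hne (le_of_eq hij)
  have hBinj : ∀ i j, B i = B j → i = j := by
    intro i j hij
    by_contra hne
    exact hBne i j hne (le_of_eq hij)
  have trine : ∀ i : ZMod 3, i + 1 ≠ i := by decide
  have hmovedA : ∀ i, σ (A i) ≠ A i := by
    intro i h
    rw [hA] at h
    exact hAne (i+1) i (trine i) (le_of_eq h)
  have hmovedB : ∀ i, σ (B i) ≠ B i := by
    intro i h
    rw [hB] at h
    exact hBne (i+1) i (trine i) (le_of_eq h)
  set τ : P ≃ P := (Equiv.swap (A u1) (A u2)).trans (Equiv.swap (B v1) (B v2)) with hτdef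
  have hτA : ∀ i, τ (A i) = A (swf u1 u2 i) := by
    intro i
    show (Equiv.swap (B v1) (B v2)) ((Equiv.swap (A u1) (A u2)) (A i)) = A (swf u1 u2 i)
    rw [swap_eval A hAinj u1 u2 i]
    exact Equiv.swap_apply_of_ne_of_ne (hAB _ v1) (hAB _ v2)
  have hτB : ∀ i, τ (B i) = B (swf v1 v2 i) := by
    intro i
    show (Equiv.swap (B v1) (B v2)) ((Equiv.swap (A u1) (A u2)) (B i)) = B (swf v1 v2 i)
    rw [Equiv.swap_apply_of_ne_of_ne (fun h => hAB u1 i h.symm) (fun h => hAB u2 i h.symm)]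
    exact swap_eval B hBinj v1 v2 i
  have hfix : ∀ x, σ x = x → τ x = x := by
    intro x hx
    have hxA : ∀ i, x ≠ A i := fun i h => hmovedA i (by rw [← h, hx])
    have hxB : ∀ i, x ≠ B i := fun i h => hmovedB i (by rw [← h, hx])
    show (Equiv.swap (B v1) (B v2)) ((Equiv.swap (A u1) (A u2)) x) = x
    rw [Equiv.swap_apply_of_ne_of_ne (hxA u1) (hxA u2),
        Equiv.swap_apply_of_ne_of_ne (hxB v1) (hxB v2)]
  exact master σ key A B hA hB hAne hBne hAB Hcov τ (swf u1 u2) (swf v1 v2)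
    hτA hτB hfix hpat hne1 hne2 hne3

lemma master1 [Finite P] (σ : P ≃o P)
    (key : ∀ f : P ≃o P, f = 1 ∨ f = σ ∨ f = σ * σ)
    (A : ZMod 3 → P)
    (hA : ∀ i, σ (A i) = A (i + 1))
    (hAne : ∀ i j, i ≠ j → ¬ A i ≤ A j)
    (Hcov : ∀ x : P, σ x ≠ x → ∃ i, x = A i) : False := by
  classical
  have hAinj : ∀ i j, A i = A j → i = j := by
    intro i j hij
    by_contra hne
    exact hAne i j hne (le_of_eq hij)
  have trine : ∀ i : ZMod 3, i + 1 ≠ i := by decide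
  have hmovedA : ∀ i, σ (A i) ≠ A i := by
    intro i h
    rw [hA] at h
    exact hAne (i+1) i (trine i) (le_of_eq h)
  set τ : P ≃ P := Equiv.swap (A 0) (A 1) with hτdef
  have hτA : ∀ i, τ (A i) = A (swf 0 1 i) := fun i => swap_eval A hAinj 0 1 i
  have hfix : ∀ x, σ x = x → τ x = x := by
    intro x hx
    have hxA : ∀ i, x ≠ A i := fun i h => hmovedA i (by rw [← h, hx])
    exact Equiv.swap_apply_of_ne_of_ne (hxA 0) (hxA 1)
  have tri2 : ∀ i j : ZMod 3, j = i ∨ j = i + 1 ∨ j = i + 1 + 1 := by decide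
  have hxA : ∀ x, σ x = x → ∀ i j, x ≤ A i → x ≤ A j := by
    intro x hx i j h
    have step : ∀ i, x ≤ A i → x ≤ A (i + 1) := by
      intro i h
      have h2 := σ.monotone h
      rwa [hA, hx] at h2
    rcases tri2 i j with rfl | rfl | rfl
    · exact h
    · exact step _ h
    · exact step _ (step _ h)
  have hAx : ∀ x, σ x = x → ∀ i j, A i ≤ x → A j ≤ x := by
    intro x hx i j h
    have step : ∀ i, A i ≤ x → A (i + 1) ≤ x := by
      intro i h
      have h2 := σ.monotone h
      rwa [hA, hx] at h2
    rcases tri2 i j with rfl | rfl | rfl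
    · exact h
    · exact step _ h
    · exact step _ (step _ h)
  have classify : ∀ x : P, (σ x = x) ∨ (∃ i, x = A i) := by
    intro x
    by_cases hx : σ x = x
    · exact Or.inl hx
    · exact Or.inr (Hcov x hx)
  have hmono : Monotone ⇑τ := by
    intro x y hxy
    rcases classify x with hx | ⟨i, rfl⟩
    · rcases classify y with hy | ⟨j, rfl⟩
      · rw [hfix x hx, hfix y hy]; exact hxy
      · rw [hfix x hx, hτA j]; exact hxA x hx j (swf 0 1 j) hxy
    · rcases classify y with hy | ⟨j, rfl⟩
      · rw [hτA i, hfix y hy]; exact hAx y hy i (swf 0 1 i) hxy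
      · by_cases hij : i = j
        · subst hij; exact le_rfl
        · exact absurd hxy (hAne i j hij)
  let τ' : P ≃o P := { toEquiv := τ, map_rel_iff' := le_iff_of_monotone_equiv τ hmono }
  rcases key τ' with h1 | h1 | h1
  · have h2 : A (swf 0 1 0) = A 0 := by
      rw [← hτA 0]
      exact congrArg (fun f : P ≃o P => f (A 0)) h1
    exact absurd (hAinj _ _ h2) (by decide)
  · have h2 : A (swf 0 1 2) = A (2 + 1) := by
      rw [← hτA 2, ← hA 2]
      exact congrArg (fun f : P ≃o P => f (A 2)) h1
    exact absurd (hAinj _ _ h2) (by decide)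
  · have h2 : A (swf 0 1 0) = A (0 + 1 + 1) := by
      rw [← hτA 0, ← hA (0+1), ← hA 0]
      exact congrArg (fun f : P ≃o P => f (A 0)) h1
    exact absurd (hAinj _ _ h2) (by decide)

/-- boolean pattern on `ZMod 3` -/
abbrev DD (b0 b1 b2 : Bool) : ZMod 3 → Bool := fun k => if k = 0 then b0 else if k = 1 then b1 else b2



lemma build (σ : P ≃o P) (hσ : ∀ x, σ (σ (σ x)) = x) (x : P) (hx : σ x ≠ x) :
    ∃ X : ZMod 3 → P, X 0 = x ∧ X 1 = σ x ∧ X 2 = σ (σ x) ∧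
      (∀ i, σ (X i) = X (i + 1)) ∧ (∀ i j, i ≠ j → ¬ X i ≤ X j) := by
  classical
  have hx1 : σ (σ x) ≠ σ x := fun hh => hx (σ.injective hh)
  have hx2 : σ (σ (σ x)) ≠ σ (σ x) := fun hh => hx1 (σ.injective hh)
  refine ⟨fun i => if i = 0 then x else if i = 1 then σ x else σ (σ x), ?_, ?_, ?_, ?_, ?_⟩
  · simp
  · beta_reduce
    rw [if_neg (by decide), if_pos rfl]
  · beta_reduce
    rw [if_neg (by decide), if_neg (by decide)]
  · have tri : ∀ k : ZMod 3, k = 0 ∨ k = 1 ∨ k = 2 := by decide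
    intro i
    rcases tri i with rfl | rfl | rfl <;> beta_reduce
    · rw [if_pos rfl, show (0:ZMod 3)+1 = 1 from by decide, if_neg (by decide), if_pos rfl]
    · rw [if_neg (by decide), if_pos rfl, show (1:ZMod 3)+1 = 2 from by decide,
        if_neg (by decide), if_neg (by decide)]
    · rw [if_neg (by decide), if_neg (by decide), show (2:ZMod 3)+1 = 0 from by decide,
        if_pos rfl, hσ x]
  · have n01 : ¬ x ≤ σ x := incomp1 σ hσ x hx
    have n02 : ¬ x ≤ σ (σ x) := incomp2 σ hσ x hx
    have n12 : ¬ σ x ≤ σ (σ x) := incomp1 σ hσ (σ x) hx1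
    have n10 : ¬ σ x ≤ x := by
      have h2 := incomp2 σ hσ (σ x) hx1
      rwa [hσ x] at h2
    have n20 : ¬ σ (σ x) ≤ x := by
      have h2 := incomp1 σ hσ (σ (σ x)) hx2
      rwa [hσ x] at h2
    have n21 : ¬ σ (σ x) ≤ σ x := by
      have h2 := incomp2 σ hσ (σ (σ x)) hx2
      rwa [hσ (σ x)] at h2
    have tri : ∀ k : ZMod 3, k = 0 ∨ k = 1 ∨ k = 2 := by decide
    intro i j hij
    rcases tri i with rfl | rfl | rfl <;> rcases tri j with rfl | rfl | rfl <;>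
      simp only [if_pos rfl, if_neg (show (1:ZMod 3) ≠ 0 from by decide),
        if_neg (show (2:ZMod 3) ≠ 0 from by decide),
        if_neg (show (2:ZMod 3) ≠ 1 from by decide)]
    · exact absurd rfl hij
    · exact n01
    · exact n02
    · exact n10
    · exact absurd rfl hij
    · exact n12
    · exact n20
    · exact n21
    · exact absurd rfl hij

lemma crossne (σ : P ≃o P) (A B : ZMod 3 → P)
    (hA : ∀ i, σ (A i) = A (i + 1)) (hB : ∀ i, σ (B i) = B (i + 1))
    (hB0 : ∀ i, B 0 ≠ A i) : ∀ i j, A i ≠ B j := by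
  have tri : ∀ k : ZMod 3, k = 0 ∨ k = 1 ∨ k = 2 := by decide
  have hshift : ∀ i j, A i = B j → A (i + 1) = B (j + 1) := fun i j hh => by
    rw [← hA, ← hB, hh]
  intro i j hh
  rcases tri j with rfl | rfl | rfl
  · exact hB0 i hh.symm
  · have h2 := hshift _ _ (hshift _ _ hh)
    rw [show (1:ZMod 3)+1+1 = 0 from by decide] at h2
    exact hB0 _ h2.symm
  · have h2 := hshift _ _ hh
    rw [show (2:ZMod 3)+1 = 0 from by decide] at h2
    exact hB0 _ h2.symm

end ThreeOrbitsAux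

open ThreeOrbitsAux in
/-- If `P` is a finite poset whose automorphism group is isomorphic to the cyclic group
`ℤ/3`, then the natural action of `Aut P` on `P` (by evaluation) has at least three
distinct orbits of cardinality exactly `3`; in particular `P` has at least `9`
elements. -/
theorem three_orbits_of_aut_iso_zmod_three (P : Type*) [PartialOrder P] [Fintype P]
    (h : Nonempty ((P ≃o P) ≃* Multiplicative (ZMod 3))) :
    (∃ x y z : P,
      {w : P | ∃ f : P ≃o P, f x = w} ≠ {w : P | ∃ f : P ≃o P, f y = w} ∧
      {w : P | ∃ f : P ≃o P, f x = w} ≠ {w : P | ∃ f : P ≃o P, f z = w} ∧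
      {w : P | ∃ f : P ≃o P, f y = w} ≠ {w : P | ∃ f : P ≃o P, f z = w} ∧
      Set.ncard {w : P | ∃ f : P ≃o P, f x = w} = 3 ∧
      Set.ncard {w : P | ∃ f : P ≃o P, f y = w} = 3 ∧
      Set.ncard {w : P | ∃ f : P ≃o P, f z = w} = 3) ∧
    9 ≤ Fintype.card P := by
  classical
  obtain ⟨e⟩ := h
  set σ : P ≃o P := e.symm (Multiplicative.ofAdd 1) with hσdef
  have key : ∀ f : P ≃o P, f = 1 ∨ f = σ ∨ f = σ * σ := by
    intro f
    have hf : e.symm (e f) = f := e.symm_apply_apply f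
    rcases (by decide : ∀ z : Multiplicative (ZMod 3), z = 1 ∨ z = Multiplicative.ofAdd 1 ∨
        z = Multiplicative.ofAdd 1 * Multiplicative.ofAdd 1) (e f) with hz | hz | hz
    · left; rw [← hf, hz, map_one]
    · right; left; rw [← hf, hz]
    · right; right; rw [← hf, hz, map_mul]
  have hσ3 : σ * σ * σ = 1 := by
    rw [hσdef, ← map_mul, ← map_mul,
      (by decide : (Multiplicative.ofAdd (1 : ZMod 3)) * Multiplicative.ofAdd 1 *
        Multiplicative.ofAdd 1 = 1), map_one]
  have hσ : ∀ x : P, σ (σ (σ x)) = x := by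
    intro x
    exact congrArg (fun f : P ≃o P => f x) hσ3
  have hamoved : ∃ a : P, σ a ≠ a := by
    by_contra hcon
    push_neg at hcon
    have hσ1 : σ = 1 := DFunLike.ext σ 1 fun x => hcon x
    have h2 : e.symm (Multiplicative.ofAdd 1) = e.symm 1 := by
      rw [hσdef] at hσ1
      rw [hσ1, (map_one e.symm : e.symm 1 = 1)]
    exact absurd (e.symm.injective h2) (by decide)
  obtain ⟨a, ha⟩ := hamoved
  obtain ⟨A, hA0, hA1, hA2, hA, hAne⟩ := build σ hσ a ha
  obtain ⟨b, hb, hbA⟩ : ∃ b : P, σ b ≠ b ∧ ∀ i, b ≠ A i := by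
    by_contra hcon
    push_neg at hcon
    exact master1 σ key A hA hAne hcon
  obtain ⟨B, hB0, hB1, hB2, hB, hBne⟩ := build σ hσ b hb
  have hAB : ∀ i j, A i ≠ B j := crossne σ A B hA hB (fun i => by rw [hB0]; exact hbA i)
  have tri : ∀ k : ZMod 3, k = 0 ∨ k = 1 ∨ k = 2 := by decide
  obtain ⟨c, hc, hcA, hcB⟩ : ∃ c : P, σ c ≠ c ∧ (∀ i, c ≠ A i) ∧ (∀ i, c ≠ B i) := by
    by_contra hcon
    push_neg at hcon
    have Hcov : ∀ x : P, σ x ≠ x → (∃ i, x = A i) ∨ (∃ i, x = B i) := by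
      intro x hx
      by_cases hxa : ∃ i, x = A i
      · exact Or.inl hxa
      · push_neg at hxa
        exact Or.inr (hcon x hx hxa)
    have rsh : ∀ m l, A m ≤ B l ↔ A 0 ≤ B (l - m) :=
      rel_shift (R := fun m l => A m ≤ B l) (fun m l hh => by
        have h2 := σ.monotone hh; rwa [hA, hB] at h2)
    have ssh : ∀ m l, B l ≤ A m ↔ B (l - m) ≤ A 0 :=
      rel_shift (R := fun m l => B l ≤ A m) (fun m l hh => by
        have h2 := σ.monotone hh; rwa [hA, hB] at h2)
    have csh : ∀ m l, (A m ≤ B l ∨ B l ≤ A m) ↔ (A 0 ≤ B (l - m) ∨ B (l - m) ≤ A 0) :=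
      fun m l => or_congr (rsh m l) (ssh m l)
    rcases em (A 0 ≤ B 0 ∨ B 0 ≤ A 0) with h0 | h0 <;>
      rcases em (A 0 ≤ B 1 ∨ B 1 ≤ A 0) with h1 | h1 <;>
        rcases em (A 0 ≤ B 2 ∨ B 2 ≤ A 0) with h2 | h2
    · refine master2 σ key A B hA hB hAne hBne hAB Hcov 0 1 0 0 ?_ (by decide) (by decide) (by decide)
      intro m l hcmp
      rw [csh m l] at hcmp
      rw [csh _ _]
      have hD : ∀ k, (A 0 ≤ B k ∨ B k ≤ A 0) ↔ DD true true true k = true := by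
        intro k
        rcases tri k with rfl | rfl | rfl
        · exact iff_of_true h0 (by decide)
        · exact iff_of_true h1 (by decide)
        · exact iff_of_true h2 (by decide)
      rw [hD] at hcmp ⊢
      exact (by decide : ∀ m l : ZMod 3, DD true true true (l - m) = true →
        DD true true true (swf 0 0 l - swf 0 1 m) = true) m l hcmp
    · refine master2 σ key A B hA hB hAne hBne hAB Hcov 1 2 0 1 ?_ (by decide) (by decide) (by decide)
      intro m l hcmp
      rw [csh m l] at hcmp
      rw [csh _ _]
      have hD : ∀ k, (A 0 ≤ B k ∨ B k ≤ A 0) ↔ DD true true false k = true := by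
        intro k
        rcases tri k with rfl | rfl | rfl
        · exact iff_of_true h0 (by decide)
        · exact iff_of_true h1 (by decide)
        · exact iff_of_false h2 (by decide)
      rw [hD] at hcmp ⊢
      exact (by decide : ∀ m l : ZMod 3, DD true true false (l - m) = true →
        DD true true false (swf 0 1 l - swf 1 2 m) = true) m l hcmp
    · refine master2 σ key A B hA hB hAne hBne hAB Hcov 1 2 0 2 ?_ (by decide) (by decide) (by decide)
      intro m l hcmp
      rw [csh m l] at hcmp
      rw [csh _ _]
      have hD : ∀ k, (A 0 ≤ B k ∨ B k ≤ A 0) ↔ DD true false true k = true := by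
        intro k
        rcases tri k with rfl | rfl | rfl
        · exact iff_of_true h0 (by decide)
        · exact iff_of_false h1 (by decide)
        · exact iff_of_true h2 (by decide)
      rw [hD] at hcmp ⊢
      exact (by decide : ∀ m l : ZMod 3, DD true false true (l - m) = true →
        DD true false true (swf 0 2 l - swf 1 2 m) = true) m l hcmp
    · refine master2 σ key A B hA hB hAne hBne hAB Hcov 0 1 0 1 ?_ (by decide) (by decide) (by decide)
      intro m l hcmp
      rw [csh m l] at hcmp
      rw [csh _ _]
      have hD : ∀ k, (A 0 ≤ B k ∨ B k ≤ A 0) ↔ DD true false false k = true := by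
        intro k
        rcases tri k with rfl | rfl | rfl
        · exact iff_of_true h0 (by decide)
        · exact iff_of_false h1 (by decide)
        · exact iff_of_false h2 (by decide)
      rw [hD] at hcmp ⊢
      exact (by decide : ∀ m l : ZMod 3, DD true false false (l - m) = true →
        DD true false false (swf 0 1 l - swf 0 1 m) = true) m l hcmp
    · refine master2 σ key A B hA hB hAne hBne hAB Hcov 1 2 1 2 ?_ (by decide) (by decide) (by decide)
      intro m l hcmp
      rw [csh m l] at hcmp
      rw [csh _ _]
      have hD : ∀ k, (A 0 ≤ B k ∨ B k ≤ A 0) ↔ DD false true true k = true := by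
        intro k
        rcases tri k with rfl | rfl | rfl
        · exact iff_of_false h0 (by decide)
        · exact iff_of_true h1 (by decide)
        · exact iff_of_true h2 (by decide)
      rw [hD] at hcmp ⊢
      exact (by decide : ∀ m l : ZMod 3, DD false true true (l - m) = true →
        DD false true true (swf 1 2 l - swf 1 2 m) = true) m l hcmp
    · refine master2 σ key A B hA hB hAne hBne hAB Hcov 0 1 1 2 ?_ (by decide) (by decide) (by decide)
      intro m l hcmp
      rw [csh m l] at hcmp
      rw [csh _ _]
      have hD : ∀ k, (A 0 ≤ B k ∨ B k ≤ A 0) ↔ DD false true false k = true := by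
        intro k
        rcases tri k with rfl | rfl | rfl
        · exact iff_of_false h0 (by decide)
        · exact iff_of_true h1 (by decide)
        · exact iff_of_false h2 (by decide)
      rw [hD] at hcmp ⊢
      exact (by decide : ∀ m l : ZMod 3, DD false true false (l - m) = true →
        DD false true false (swf 1 2 l - swf 0 1 m) = true) m l hcmp
    · refine master2 σ key A B hA hB hAne hBne hAB Hcov 0 1 2 0 ?_ (by decide) (by decide) (by decide)
      intro m l hcmp
      rw [csh m l] at hcmp
      rw [csh _ _]
      have hD : ∀ k, (A 0 ≤ B k ∨ B k ≤ A 0) ↔ DD false false true k = true := by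
        intro k
        rcases tri k with rfl | rfl | rfl
        · exact iff_of_false h0 (by decide)
        · exact iff_of_false h1 (by decide)
        · exact iff_of_true h2 (by decide)
      rw [hD] at hcmp ⊢
      exact (by decide : ∀ m l : ZMod 3, DD false false true (l - m) = true →
        DD false false true (swf 2 0 l - swf 0 1 m) = true) m l hcmp
    · refine master2 σ key A B hA hB hAne hBne hAB Hcov 0 1 0 0 ?_ (by decide) (by decide) (by decide)
      intro m l hcmp
      rw [csh m l] at hcmp
      rw [csh _ _]
      have hD : ∀ k, (A 0 ≤ B k ∨ B k ≤ A 0) ↔ DD false false false k = true := by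
        intro k
        rcases tri k with rfl | rfl | rfl
        · exact iff_of_false h0 (by decide)
        · exact iff_of_false h1 (by decide)
        · exact iff_of_false h2 (by decide)
      rw [hD] at hcmp ⊢
      exact (by decide : ∀ m l : ZMod 3, DD false false false (l - m) = true →
        DD false false false (swf 0 0 l - swf 0 1 m) = true) m l hcmp

  obtain ⟨C, hC0, hC1, hC2, hC, hCne⟩ := build σ hσ c hc
  have hAC : ∀ i j, A i ≠ C j := crossne σ A C hA hC (fun i => by rw [hC0]; exact hcA i)
  have hBC : ∀ i j, B i ≠ C j := crossne σ B C hB hC (fun i => by rw [hC0]; exact hcB i)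
  have orbdesc : ∀ (X : ZMod 3 → P), (∀ i, σ (X i) = X (i + 1)) →
      {w : P | ∃ f : P ≃o P, f (X 0) = w} = Set.range X := by
    intro X hX
    ext w
    simp only [Set.mem_setOf_eq, Set.mem_range]
    constructor
    · rintro ⟨f, rfl⟩
      rcases key f with rfl | rfl | rfl
      · exact ⟨0, rfl⟩
      · exact ⟨1, by rw [← show (0:ZMod 3)+1 = 1 from by decide, ← hX 0]⟩
      · refine ⟨2, ?_⟩
        show X 2 = σ (σ (X 0))
        rw [hX 0, show (0:ZMod 3)+1 = 1 from by decide, hX 1,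
          show (1:ZMod 3)+1 = 2 from by decide]
    · rintro ⟨i, rfl⟩
      rcases tri i with rfl | rfl | rfl
      · exact ⟨1, rfl⟩
      · exact ⟨σ, by rw [hX 0, show (0:ZMod 3)+1 = 1 from by decide]⟩
      · refine ⟨σ * σ, ?_⟩
        show σ (σ (X 0)) = X 2
        rw [hX 0, show (0:ZMod 3)+1 = 1 from by decide, hX 1,
          show (1:ZMod 3)+1 = 2 from by decide]
  have OAdef : {w : P | ∃ f : P ≃o P, f a = w} = Set.range A := by
    have h2 := orbdesc A hA
    rwa [hA0] at h2
  have OBdef : {w : P | ∃ f : P ≃o P, f b = w} = Set.range B := by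
    have h2 := orbdesc B hB
    rwa [hB0] at h2
  have OCdef : {w : P | ∃ f : P ≃o P, f c = w} = Set.range C := by
    have h2 := orbdesc C hC
    rwa [hC0] at h2
  have ncard3 : ∀ (X : ZMod 3 → P), (∀ i j, i ≠ j → ¬ X i ≤ X j) →
      (Set.range X).ncard = 3 := by
    intro X hXne
    have hr : Set.range X = {X 0, X 1, X 2} := by
      ext w
      simp only [Set.mem_range, Set.mem_insert_iff, Set.mem_singleton_iff]
      constructor
      · rintro ⟨i, rfl⟩
        rcases tri i with rfl | rfl | rfl
        · exact Or.inl rfl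
        · exact Or.inr (Or.inl rfl)
        · exact Or.inr (Or.inr rfl)
      · rintro (rfl | rfl | rfl)
        exacts [⟨0, rfl⟩, ⟨1, rfl⟩, ⟨2, rfl⟩]
    rw [hr]
    exact Set.ncard_eq_three.mpr ⟨X 0, X 1, X 2, fun hh => hXne 0 1 (by decide) (le_of_eq hh),
      fun hh => hXne 0 2 (by decide) (le_of_eq hh),
      fun hh => hXne 1 2 (by decide) (le_of_eq hh), rfl⟩
  have disj : ∀ (X Y : ZMod 3 → P), (∀ i j, X i ≠ Y j) →
      Disjoint (Set.range X) (Set.range Y) := by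
    intro X Y hXY
    rw [Set.disjoint_left]
    rintro w ⟨i, rfl⟩ ⟨j, hj⟩
    exact hXY i j hj.symm
  constructor
  · refine ⟨a, b, c, ?_, ?_, ?_, ?_, ?_, ?_⟩
    · rw [OAdef, OBdef]
      intro hEq
      have hmem : b ∈ Set.range A := hEq ▸ ⟨0, hB0⟩
      obtain ⟨i, hi⟩ := hmem
      exact hbA i hi.symm
    · rw [OAdef, OCdef]
      intro hEq
      have hmem : c ∈ Set.range A := hEq ▸ ⟨0, hC0⟩
      obtain ⟨i, hi⟩ := hmem
      exact hcA i hi.symm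
    · rw [OBdef, OCdef]
      intro hEq
      have hmem : c ∈ Set.range B := hEq ▸ ⟨0, hC0⟩
      obtain ⟨i, hi⟩ := hmem
      exact hcB i hi.symm
    · rw [OAdef]; exact ncard3 A hAne
    · rw [OBdef]; exact ncard3 B hBne
    · rw [OCdef]; exact ncard3 C hCne
  · have hunion : (Set.range A ∪ (Set.range B ∪ Set.range C)).ncard = 9 := by
      rw [Set.ncard_union_eq (by
          rw [Set.disjoint_union_right]
          exact ⟨disj A B hAB, disj A C hAC⟩) (Set.toFinite _) (Set.toFinite _),
        Set.ncard_union_eq (disj B C hBC) (Set.toFinite _) (Set.toFinite _),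
        ncard3 A hAne, ncard3 B hBne, ncard3 C hCne]
    calc (9 : ℕ) = (Set.range A ∪ (Set.range B ∪ Set.range C)).ncard := hunion.symm
      _ ≤ (Set.univ : Set P).ncard := Set.ncard_le_ncard (Set.subset_univ _) (Set.toFinite _)
      _ = Fintype.card P := by rw [Set.ncard_univ, Nat.card_eq_fintype_card]
end

section
/- For every prime p ≥ 3, the subdivided crown poset Q' has automorphism group Aut(Q') isomorphic to the cyclic group Z/p; moreover, any automorphism of Q' that fixes some point of Q' is the identity. In particular, taking p = 3 gives a partially ordered set with exactly 9 elements whose automorphism group is isomorphic to Z/3. -/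
/-- The subdivided crown poset on `(ℤ/p) × {0,1,2}`: the underlying type. -/
structure SubdividedCrown (p : ℕ) where
  idx : ZMod p
  lvl : Fin 3

/-- The partial order on the subdivided crown generated by the relations
`(i,0) < (i,1) < (i,2)` and `(i+1,0) < (i,2)` for every `i ∈ ℤ/p`. -/
instance SubdividedCrown.instPartialOrder (p : ℕ) : PartialOrder (SubdividedCrown p) where
  le a b := a = b ∨ (a.idx = b.idx ∧ a.lvl.val < b.lvl.val) ∨
    (a.lvl.val = 0 ∧ b.lvl.val = 2 ∧ a.idx = b.idx + 1)
  le_refl a := Or.inl rfl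
  le_trans a b c hab hbc := by
    rcases hab with rfl | ⟨h1, h2⟩ | ⟨h1, h2, h3⟩
    · exact hbc
    · rcases hbc with rfl | ⟨g1, g2⟩ | ⟨g1, g2, g3⟩
      · exact Or.inr (Or.inl ⟨h1, h2⟩)
      · exact Or.inr (Or.inl ⟨h1.trans g1, h2.trans g2⟩)
      · omega
    · rcases hbc with rfl | ⟨g1, g2⟩ | ⟨g1, g2, g3⟩
      · exact Or.inr (Or.inr ⟨h1, h2, h3⟩)
      · have := c.lvl.isLt; omega
      · omega
  le_antisymm a b hab hba := by
    rcases hab with rfl | ⟨h1, h2⟩ | ⟨h1, h2, h3⟩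
    · rfl
    · rcases hba with rfl | ⟨g1, g2⟩ | ⟨g1, g2, g3⟩ <;> omega
    · rcases hba with rfl | ⟨g1, g2⟩ | ⟨g1, g2, g3⟩ <;> omega

instance SubdividedCrown.instFintype (p : ℕ) [NeZero p] : Fintype (SubdividedCrown p) :=
  Fintype.ofEquiv (ZMod p × Fin 3)
    ⟨fun x => ⟨x.1, x.2⟩, fun a => (a.idx, a.lvl), fun _ => rfl, fun _ => rfl⟩

namespace SubdividedCrown

variable {p : ℕ}

lemma le_def (a b : SubdividedCrown p) :
    a ≤ b ↔ a = b ∨ (a.idx = b.idx ∧ a.lvl.val < b.lvl.val) ∨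
      (a.lvl.val = 0 ∧ b.lvl.val = 2 ∧ a.idx = b.idx + 1) := Iff.rfl

lemma sc_ext {a b : SubdividedCrown p} (h1 : a.idx = b.idx) (h2 : a.lvl = b.lvl) : a = b := by
  cases a; cases b; simp_all

lemma isMin_iff (x : SubdividedCrown p) : IsMin x ↔ x.lvl.val = 0 := by
  constructor
  · intro h
    by_contra hx
    have hle : (⟨x.idx, 0⟩ : SubdividedCrown p) ≤ x := by
      rw [le_def]; right; left
      refine ⟨rfl, ?_⟩
      show 0 < x.lvl.val
      omega
    have h2 := h hle
    rw [le_def] at h2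
    have h0 : (⟨x.idx, (0 : Fin 3)⟩ : SubdividedCrown p).lvl.val = 0 := rfl
    rcases h2 with heq | ⟨_, h2⟩ | ⟨_, h2, _⟩
    · exact hx (by rw [heq]; exact h0)
    · omega
    · omega
  · intro h y hy
    rw [le_def] at hy
    rcases hy with rfl | ⟨_, h2⟩ | ⟨_, h2, _⟩
    · exact le_refl _
    · omega
    · omega

lemma isMax_iff (x : SubdividedCrown p) : IsMax x ↔ x.lvl.val = 2 := by
  constructor
  · intro h
    by_contra hx
    have hle : x ≤ (⟨x.idx, 2⟩ : SubdividedCrown p) := by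
      rw [le_def]; right; left
      refine ⟨rfl, ?_⟩
      show x.lvl.val < 2
      have := x.lvl.isLt
      omega
    have h2 := h hle
    rw [le_def] at h2
    have h0 : (⟨x.idx, (2 : Fin 3)⟩ : SubdividedCrown p).lvl.val = 2 := rfl
    rcases h2 with heq | ⟨_, h2⟩ | ⟨_, h2, _⟩
    · exact hx (by rw [← heq]; exact h0)
    · omega
    · omega
  · intro h y hy
    rw [le_def] at hy
    rcases hy with rfl | ⟨_, h2⟩ | ⟨h1, _, _⟩
    · exact le_refl _
    · have := y.lvl.isLt; omega
    · omega

lemma lvl_apply (f : SubdividedCrown p ≃o SubdividedCrown p) (x : SubdividedCrown p) :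
    (f x).lvl = x.lvl := by
  have hmin : IsMin (f x) ↔ IsMin x := by
    constructor
    · intro h y hy
      exact f.le_iff_le.mp (h (f.le_iff_le.mpr hy))
    · intro h y hy
      have h1 : f (f.symm y) ≤ f x := by simpa using hy
      have h2 := h (f.le_iff_le.mp h1)
      calc f x ≤ f (f.symm y) := f.le_iff_le.mpr h2
        _ = y := f.apply_symm_apply y
  have hmax : IsMax (f x) ↔ IsMax x := by
    constructor
    · intro h y hy
      exact f.le_iff_le.mp (h (f.le_iff_le.mpr hy))
    · intro h y hy
      have h1 : f x ≤ f (f.symm y) := by simpa using hy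
      have h2 := h (f.le_iff_le.mp h1)
      calc y = f (f.symm y) := (f.apply_symm_apply y).symm
        _ ≤ f x := f.le_iff_le.mpr h2
  rw [isMin_iff, isMin_iff] at hmin
  rw [isMax_iff, isMax_iff] at hmax
  have h1 := (f x).lvl.isLt
  have h2 := x.lvl.isLt
  rw [Fin.ext_iff]
  omega

variable (f : SubdividedCrown p ≃o SubdividedCrown p)

/-- index action of an automorphism, read off from level-1 elements. -/
noncomputable def gidx (i : ZMod p) : ZMod p := (f ⟨i, 1⟩).idx

lemma f1 (i : ZMod p) : f ⟨i, 1⟩ = ⟨gidx f i, 1⟩ := by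
  apply sc_ext
  · rfl
  · simpa using lvl_apply f ⟨i, 1⟩

lemma f2 (i : ZMod p) : f ⟨i, 2⟩ = ⟨gidx f i, 2⟩ := by
  have hlvl : (f ⟨i, 2⟩).lvl = 2 := lvl_apply f ⟨i, 2⟩
  have hle : f ⟨i, 1⟩ ≤ f ⟨i, 2⟩ := f.le_iff_le.mpr
    (by rw [le_def]; right; left; exact ⟨rfl, by norm_num⟩)
  rw [f1] at hle
  rw [le_def] at hle
  apply sc_ext ?_ hlvl
  rcases hle with heq | ⟨h1, _⟩ | ⟨h1, _, _⟩
  · rw [← heq] at hlvl; simp [Fin.ext_iff] at hlvl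
  · exact h1.symm
  · simp at h1

lemma f0 (i : ZMod p) : f ⟨i, 0⟩ = ⟨gidx f i, 0⟩ := by
  have hlvl : (f ⟨i, 0⟩).lvl = 0 := lvl_apply f ⟨i, 0⟩
  have hle : f ⟨i, 0⟩ ≤ f ⟨i, 1⟩ := f.le_iff_le.mpr
    (by rw [le_def]; right; left; exact ⟨rfl, by norm_num⟩)
  rw [f1] at hle
  rw [le_def] at hle
  apply sc_ext ?_ hlvl
  rcases hle with heq | ⟨h1, _⟩ | ⟨_, h2, _⟩
  · rw [heq] at hlvl; simp [Fin.ext_iff] at hlvl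
  · exact h1
  · simp at h2

lemma gidx_succ (hp2 : 2 ≤ p) (i : ZMod p) : gidx f (i + 1) = gidx f i + 1 := by
  haveI : Fact (1 < p) := ⟨by omega⟩
  have hle : (⟨i + 1, 0⟩ : SubdividedCrown p) ≤ ⟨i, 2⟩ := by
    rw [le_def]; right; right; exact ⟨rfl, rfl, rfl⟩
  have hmap := f.le_iff_le.mpr hle
  rw [f0, f2, le_def] at hmap
  rcases hmap with heq | ⟨h1, _⟩ | ⟨_, _, h3⟩
  · simp [SubdividedCrown.mk.injEq, Fin.ext_iff] at heq
  · exfalso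
    simp only at h1
    have heq2 : f ⟨i + 1, 1⟩ = f ⟨i, 1⟩ := by rw [f1, f1, h1]
    have h2 : (⟨i + 1, 1⟩ : SubdividedCrown p) = ⟨i, 1⟩ := f.injective heq2
    simp only [SubdividedCrown.mk.injEq] at h2
    exact one_ne_zero (by linear_combination h2.1)
  · exact h3

lemma gidx_formula (hp2 : 2 ≤ p) (i : ZMod p) : gidx f i = i + gidx f 0 := by
  haveI : NeZero p := ⟨by omega⟩
  have hnat : ∀ n : ℕ, gidx f (n : ZMod p) = (n : ZMod p) + gidx f 0 := by
    intro n
    induction n with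
    | zero => simp
    | succ k ih =>
      push_cast
      rw [gidx_succ f hp2, ih]; ring
  have := hnat i.val
  rwa [ZMod.natCast_val, ZMod.cast_id] at this

lemma key (hp2 : 2 ≤ p) (x : SubdividedCrown p) :
    f x = ⟨x.idx + gidx f 0, x.lvl⟩ := by
  obtain ⟨i, l⟩ := x
  fin_cases l
  · show f ⟨i, 0⟩ = ⟨i + gidx f 0, _⟩
    rw [f0, gidx_formula f hp2]; rfl
  · show f ⟨i, 1⟩ = ⟨i + gidx f 0, _⟩
    rw [f1, gidx_formula f hp2]; rfl
  · show f ⟨i, 2⟩ = ⟨i + gidx f 0, _⟩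
    rw [f2, gidx_formula f hp2]; rfl

/-- shift automorphism -/
def shift (c : ZMod p) : SubdividedCrown p ≃o SubdividedCrown p where
  toFun x := ⟨x.idx + c, x.lvl⟩
  invFun x := ⟨x.idx - c, x.lvl⟩
  left_inv x := by apply sc_ext <;> simp
  right_inv x := by apply sc_ext <;> simp
  map_rel_iff' := by
    intro a b
    show (⟨a.idx + c, a.lvl⟩ : SubdividedCrown p) ≤ ⟨b.idx + c, b.lvl⟩ ↔ a ≤ b
    rw [le_def, le_def]
    constructor
    · rintro (heq | ⟨h1, h2⟩ | ⟨h1, h2, h3⟩)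
      · left
        simp only [SubdividedCrown.mk.injEq] at heq
        exact sc_ext (by linear_combination heq.1) heq.2
      · right; left; exact ⟨by simpa using h1, h2⟩
      · right; right
        refine ⟨h1, h2, ?_⟩
        simp only at h3
        linear_combination h3
    · rintro (rfl | ⟨h1, h2⟩ | ⟨h1, h2, h3⟩)
      · left; rfl
      · right; left; exact ⟨by simp [h1], h2⟩
      · right; right; exact ⟨h1, h2, by simp only; linear_combination h3⟩

theorem aux (p : ℕ) (hp2 : 2 ≤ p) :
    Nonempty ((SubdividedCrown p ≃o SubdividedCrown p) ≃* Multiplicative (ZMod p)) ∧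
    (∀ f : SubdividedCrown p ≃o SubdividedCrown p, (∃ x, f x = x) → ∀ y, f y = y) := by
  constructor
  · refine ⟨{ toFun := fun f => Multiplicative.ofAdd (f ⟨0, 1⟩).idx
              invFun := fun c => shift c.toAdd
              left_inv := ?_, right_inv := ?_, map_mul' := ?_ }⟩
    · intro f
      ext x
      have hk := key f hp2 x
      show (⟨x.idx + (f ⟨0, 1⟩).idx, x.lvl⟩ : SubdividedCrown p) = f x
      rw [hk]
      apply sc_ext
      · show x.idx + (f ⟨0, 1⟩).idx = x.idx + gidx f 0
        rw [f1]
      · rfl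
    · intro c
      show Multiplicative.ofAdd ((0 : ZMod p) + Multiplicative.toAdd c) = c
      simp
    · intro f g
      show Multiplicative.ofAdd ((f (g ⟨0, 1⟩)).idx)
          = Multiplicative.ofAdd ((f ⟨0, 1⟩).idx + (g ⟨0, 1⟩).idx)
      rw [key f hp2 (g ⟨0, 1⟩)]
      show Multiplicative.ofAdd ((g ⟨0, 1⟩).idx + gidx f 0)
          = Multiplicative.ofAdd ((f ⟨0, 1⟩).idx + (g ⟨0, 1⟩).idx)
      congr 1
      show gidx g 0 + gidx f 0 = gidx f 0 + gidx g 0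
      exact add_comm _ _
  · intro f ⟨x, hx⟩ y
    have hk := key f hp2 x
    rw [hx] at hk
    have h := congrArg SubdividedCrown.idx hk
    simp only at h
    have hc : gidx f 0 = 0 := by linear_combination -h
    rw [key f hp2 y, hc]
    exact (sc_ext (by simp) rfl)

end SubdividedCrown

/-- For every prime `p ≥ 3`, the subdivided crown poset `Q'` has automorphism group
isomorphic to the cyclic group `ℤ/p`, and any automorphism of `Q'` fixing some point is
the identity. In particular, for `p = 3` this gives a poset with exactly `9` elements
whose automorphism group is isomorphic to `ℤ/3`. -/
theorem subdividedCrown_aut (p : ℕ) (hp : p.Prime) (hp3 : 3 ≤ p) :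
    Nonempty ((SubdividedCrown p ≃o SubdividedCrown p) ≃* Multiplicative (ZMod p)) ∧
    (∀ f : SubdividedCrown p ≃o SubdividedCrown p, (∃ x, f x = x) → ∀ y, f y = y) ∧
    (Fintype.card (SubdividedCrown 3) = 9 ∧
      Nonempty ((SubdividedCrown 3 ≃o SubdividedCrown 3) ≃* Multiplicative (ZMod 3))) := by
  refine ⟨(SubdividedCrown.aux p (by omega)).1, (SubdividedCrown.aux p (by omega)).2, ?_,
    (SubdividedCrown.aux 3 (by norm_num)).1⟩
  have h : Fintype.card (SubdividedCrown 3) = Fintype.card (ZMod 3 × Fin 3) :=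
    Fintype.ofEquiv_card _
  rw [h]
  simp
end

section
/- Let G be a finite group and H = {h_1, …, h_d} a minimal generating set of G with d ≥ 3, and set h_0 = h_{−1} = e (the identity of G). If k and l are indices with 0 ≤ k, l ≤ d and |k − l| ≥ 3, then for all indices i, j with −1 ≤ i, j ≤ d − 1 one has h_k · h_{i+1}^{−1} · h_i ≠ h_l · h_{j+1}^{−1} · h_j. -/
/-!
Each generator `h t` of a minimal generating set lies outside the subgroup generated by the
others, while every other letter `h m` with `-1 ≤ m ≤ d` (including `h 0 = h (-1) = 1`) lies
inside it. A product in which exactly one factor lies outside a subgroup lies outside it, so the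
word `h k (h (i+1))⁻¹ h i (h j)⁻¹ h (j+1) (h l)⁻¹ = 1` is impossible as soon as some
`t ∈ [1, d]` occurs exactly once among `k, i + 1, i, j, j + 1, l`. When `i ≠ j` and
`|k - l| ≥ 3`, one of `m, m ± 1, m ± 2` with `m = max k l` is such a `t`; when `i = j` the
equation collapses to `h k = h l`.
-/

open Set

theorem List.prod_notMem_of_countP_notMem_eq_one {G : Type*} [Group G] {K : Subgroup G}
    [DecidablePred (· ∈ K)] : ∀ {l : List G}, l.countP (· ∉ K) = 1 → l.prod ∉ K
  | [], hl => by simp at hl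
  | x :: l, hl => by
    rw [List.countP_cons, List.prod_cons] at *
    by_cases hx : x ∈ K
    · rw [Subgroup.mul_mem_cancel_left K hx]
      exact List.prod_notMem_of_countP_notMem_eq_one (by simpa [hx] using hl)
    · have hl' : ∀ y ∈ l, y ∈ K := by simpa [hx] using hl
      rwa [Subgroup.mul_mem_cancel_right K (K.list_prod_mem hl')]

theorem List.countP_map_eq_count {α β : Type*} [DecidableEq α] {p : β → Prop} [DecidablePred p]
    {f : α → β} {t : α} {l : List α} (hf : ∀ m ∈ l, p (f m) ↔ m = t) :
    (l.map f).countP p = l.count t := by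
  rw [List.countP_map, List.count_eq_countP]
  exact List.countP_congr fun m hm => by simpa using hf m hm

theorem Subgroup.notMem_closure_sdiff_singleton {G : Type*} [Group G] {S : Set G}
    (hgen : closure S = ⊤) (hmin : ∀ s ⊂ S, closure s ≠ ⊤) {x : G} (hx : x ∈ S) :
    x ∉ closure (S \ {x}) := by
  intro hmem
  refine hmin _ (sdiff_singleton_ssubset.2 hx) (eq_top_iff.2 ?_)
  rw [← hgen, closure_le]
  exact (subset_insert_sdiff_singleton x S).trans (insert_subset hmem subset_closure)

theorem exists_count_eq_one {d k l i j : ℤ} (hk : k ∈ Icc 0 d) (hl : l ∈ Icc 0 d)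
    (hkl : 3 ≤ |k - l|) (hi : i ∈ Icc (-1) (d - 1)) (hj : j ∈ Icc (-1) (d - 1)) (hij : i ≠ j) :
    ∃ t ∈ Icc 1 d, [k, i + 1, i, j, j + 1, l].count t = 1 := by
  wlog hlk : l + 3 ≤ k generalizing k l i j
  · obtain ⟨t, ht, hcount⟩ := this hl hk (by rwa [abs_sub_comm]) hj hi hij.symm
      (by cases abs_cases (k - l) <;> omega)
    exact ⟨t, ht, by rw [← List.count_reverse]; exact hcount⟩
  simp only [mem_Icc] at hk hl hi hj ⊢
  -- `t = k` unless `k` cancels against a neighbouring letter; then a neighbour of `k` works.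
  refine if hi₁ : i = k - 1 then if hj₂ : j = k - 2 then ⟨k - 2, ?_⟩ else ⟨k - 1, ?_⟩
    else if hi₀ : i = k then if hj₁ : j = k + 1 then ⟨k + 2, ?_⟩ else ⟨k + 1, ?_⟩
    else if hj₁ : j = k - 1 then if hi₂ : i = k - 2 then ⟨k - 2, ?_⟩ else ⟨k - 1, ?_⟩
    else if hj₀ : j = k then if hi₁ : i = k + 1 then ⟨k + 2, ?_⟩ else ⟨k + 1, ?_⟩
    else ⟨k, ?_⟩
  all_goals
    refine ⟨by omega, ?_⟩
    simp only [List.count_cons, List.count_nil, beq_iff_eq]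
    split_ifs <;> omega

theorem apply_notMem_closure_image_sdiff_singleton_iff {G : Type*} [Group G] {d : ℤ}
    {h : ℤ → G} (h0 : h 0 = 1) (hneg1 : h (-1) = 1) (hinj : InjOn h (Icc 1 d))
    (hgen : Subgroup.closure (h '' Icc 1 d) = ⊤)
    (hmin : ∀ s : Set G, s ⊂ h '' Icc 1 d → Subgroup.closure s ≠ ⊤)
    {t m : ℤ} (ht : t ∈ Icc 1 d) (hm : m ∈ Icc (-1) d) :
    h m ∉ Subgroup.closure (h '' (Icc 1 d \ {t})) ↔ m = t := by
  refine ⟨fun hnotMem => by_contra fun hmt => hnotMem ?_, ?_⟩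
  · obtain hm1 | rfl | rfl : 1 ≤ m ∨ m = 0 ∨ m = -1 := by have := hm.1; omega
    · exact Subgroup.subset_closure ⟨m, ⟨⟨hm1, hm.2⟩, hmt⟩, rfl⟩
    · exact h0 ▸ one_mem _
    · exact hneg1 ▸ one_mem _
  · rintro rfl
    rw [hinj.image_sdiff_subset (singleton_subset_iff.2 ht), image_singleton]
    exact Subgroup.notMem_closure_sdiff_singleton hgen hmin (mem_image_of_mem h ht)

theorem minimal_generating_set_products_ne_general (G : Type*) [Group G]
    (d : ℤ) (h : ℤ → G) (h0 : h 0 = 1) (hneg1 : h (-1) = 1)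
    (hinj : Set.InjOn h (Set.Icc 1 d))
    (hgen : Subgroup.closure (h '' Set.Icc 1 d) = ⊤)
    (hmin : ∀ s : Set G, s ⊂ h '' Set.Icc 1 d → Subgroup.closure s ≠ ⊤)
    (k l i j : ℤ) (hk : k ∈ Set.Icc 0 d) (hl : l ∈ Set.Icc 0 d) (hkl : 3 ≤ |k - l|)
    (hi : i ∈ Set.Icc (-1) (d - 1)) (hj : j ∈ Set.Icc (-1) (d - 1)) :
    h k * (h (i + 1))⁻¹ * h i ≠ h l * (h (j + 1))⁻¹ * h j := by
  classical
  intro E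
  have hnotMem_iff :=
    @apply_notMem_closure_image_sdiff_singleton_iff _ _ _ _ h0 hneg1 hinj hgen hmin
  simp only [mem_Icc] at hk hl hi hj
  rcases eq_or_ne i j with rfl | hij
  · have hhkl : h k = h l := mul_right_cancel (mul_right_cancel E)
    have hne : k ≠ l := by rintro rfl; simp at hkl
    have ht : max k l ∈ Icc 1 d := by rw [mem_Icc]; omega
    have := hnotMem_iff ht (m := k) (by rw [mem_Icc]; omega)
    rw [hhkl, hnotMem_iff ht (by rw [mem_Icc]; omega)] at this
    omega
  obtain ⟨t, ht, hcount⟩ := exists_count_eq_one hk hl hkl hi hj hij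
  set K := Subgroup.closure (h '' (Icc 1 d \ {t}))
  have hword : [h k, (h (i + 1))⁻¹, h i, (h j)⁻¹, h (j + 1), (h l)⁻¹].prod = 1 := by
    simp [← mul_assoc, E]
  refine List.prod_notMem_of_countP_notMem_eq_one (K := K) ?_ (hword ▸ one_mem K)
  calc _ = ([k, i + 1, i, j, j + 1, l].map h).countP (· ∉ K) := by
        simp only [List.map_cons, List.map_nil, List.countP_cons, inv_mem_iff]
    _ = [k, i + 1, i, j, j + 1, l].count t := List.countP_map_eq_count fun m hm =>
        hnotMem_iff ht (by
          simp only [List.mem_cons, List.not_mem_nil, or_false] at hm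
          rw [mem_Icc]; omega)
    _ = 1 := hcount

/-- Let `G` be a finite group and `h 1, …, h d` a minimal generating set of `G` (no
proper subset generates) with `d ≥ 3`, with the convention `h 0 = h (-1) = 1`. If
`0 ≤ k, l ≤ d` with `|k - l| ≥ 3`, then for all `-1 ≤ i, j ≤ d - 1` one has
`h k * (h (i+1))⁻¹ * h i ≠ h l * (h (j+1))⁻¹ * h j`. -/
theorem minimal_generating_set_products_ne (G : Type*) [Group G] [Fintype G]
    (d : ℤ) (hd : 3 ≤ d) (h : ℤ → G) (h0 : h 0 = 1) (hneg1 : h (-1) = 1)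
    (hinj : Set.InjOn h (Set.Icc 1 d))
    (hgen : Subgroup.closure (h '' Set.Icc 1 d) = ⊤)
    (hmin : ∀ s : Set G, s ⊂ h '' Set.Icc 1 d → Subgroup.closure s ≠ ⊤)
    (k l i j : ℤ) (hk : k ∈ Set.Icc 0 d) (hl : l ∈ Set.Icc 0 d) (hkl : 3 ≤ |k - l|)
    (hi : i ∈ Set.Icc (-1) (d - 1)) (hj : j ∈ Set.Icc (-1) (d - 1)) :
    h k * (h (i + 1))⁻¹ * h i ≠ h l * (h (j + 1))⁻¹ * h j :=
  minimal_generating_set_products_ne_general G d h h0 hneg1 hinj hgen hmin k l i j hk hl hkl hi hj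
end

section
/- Let G be a finite group and H = {h_1, …, h_d} a minimal generating set of G with d ≥ 3. Let S = {e, h_1, h_1^{−1}h_2, h_2^{−1}h_3, …, h_{d−1}^{−1}h_d} ⊆ G. If g ∈ G satisfies g·S = S (where g·S = {g·s : s ∈ S}), then g = e. -/
/-!
Let `C` be the subgroup generated by `h 1, …, h (d-1)`. By minimality `h d ∉ C`, so the only
element of `S` outside `C` is `u = (h (d-1))⁻¹ * h d`. Now `g ∈ g • S = S` since `1 ∈ S`. If
`g ∈ C`, then `g * u ∉ C` forces `g * u = u`; otherwise `g = u`, and `g * h 1 ∉ C` forces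
`g * h 1 = u = g`, contradicting `h 1 ≠ 1`.
-/

open Set

namespace Subgroup

variable {G : Type*} [Group G] {s : Set G}

theorem notMem_closure_sdiff_singleton_of_minimal (hgen : closure s = ⊤)
    (hmin : ∀ t : Set G, t ⊂ s → closure t ≠ ⊤) {x : G} (hx : x ∈ s) :
    x ∉ closure (s \ {x}) := by
  intro hxc
  refine hmin (s \ {x}) (sdiff_singleton_ssubset.2 hx) (eq_top_iff.2 ?_)
  rw [← hgen, closure_le]
  intro y hy
  obtain rfl | hyx := eq_or_ne y x
  · exact hxc
  · exact subset_closure ⟨hy, hyx⟩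

theorem one_notMem_of_minimal (hgen : closure s = ⊤)
    (hmin : ∀ t : Set G, t ⊂ s → closure t ≠ ⊤) : (1 : G) ∉ s :=
  fun h1 => notMem_closure_sdiff_singleton_of_minimal hgen hmin h1 (one_mem _)

theorem eq_one_of_image_mul_subset {C : Subgroup G} {u a g : G} (hsC : s \ C = {u})
    (h1 : (1 : G) ∈ s) (ha : a ∈ s) (haC : a ∈ C) (ha1 : a ≠ 1)
    (hg : (g * ·) '' s ⊆ s) : g = 1 := by
  have outside {x : G} (hx : x ∈ s) (hxC : x ∉ C) : x = u := by
    have hx' : x ∈ s \ C := ⟨hx, hxC⟩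
    rwa [hsC] at hx'
  have ⟨hu, huC⟩ : u ∈ s \ C := hsC ▸ rfl
  have hgs : g ∈ s := by simpa using hg (mem_image_of_mem _ h1)
  by_cases hgC : g ∈ C
  · have hguC : g * u ∉ C := (C.mul_mem_cancel_left hgC).not.2 huC
    exact mul_eq_right.1 (outside (hg (mem_image_of_mem _ hu)) hguC)
  · have hgaC : g * a ∉ C := (C.mul_mem_cancel_right haC).not.2 hgC
    have hga : g * a = g := (outside (hg (mem_image_of_mem _ ha)) hgaC).trans
      (outside hgs hgC).symm
    exact absurd (mul_eq_left.1 hga) ha1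

end Subgroup

section stepSet

variable {G : Type*} [Group G]

def stepSet (h : ℤ → G) (n : ℤ) : Set G :=
  insert 1 (insert (h 1) ((fun i => (h i)⁻¹ * h (i + 1)) '' Icc 1 n))

theorem stepSet_sdiff_closure {h : ℤ → G} {n : ℤ} (hn : 1 ≤ n)
    (hlast : h (n + 1) ∉ Subgroup.closure (h '' Icc 1 n)) :
    stepSet h n \ Subgroup.closure (h '' Icc 1 n) = {(h n)⁻¹ * h (n + 1)} := by
  have mem {i : ℤ} (hi1 : 1 ≤ i) (hin : i ≤ n) : h i ∈ Subgroup.closure (h '' Icc 1 n) :=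
    Subgroup.subset_closure (mem_image_of_mem h ⟨hi1, hin⟩)
  ext x
  constructor
  · rintro ⟨rfl | rfl | ⟨i, ⟨hi1, hin⟩, rfl⟩, hxC⟩
    · exact absurd (one_mem _) hxC
    · exact absurd (mem le_rfl hn) hxC
    · obtain rfl | hi := hin.eq_or_lt
      · rfl
      · exact absurd (mul_mem (inv_mem (mem hi1 hin)) (mem (by omega) hi)) hxC
  · rintro rfl
    refine ⟨mem_insert_of_mem _ (mem_insert_of_mem _ ⟨n, ⟨hn, le_rfl⟩, rfl⟩), ?_⟩
    exact (mul_mem_cancel_left (inv_mem (mem hn le_rfl))).not.2 hlast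

end stepSet

theorem eq_one_of_smul_set_eq_general (G : Type*) [Group G]
    (d : ℤ) (hd : 3 ≤ d) (h : ℤ → G)
    (hinj : Set.InjOn h (Set.Icc 1 d))
    (hgen : Subgroup.closure (h '' Set.Icc 1 d) = ⊤)
    (hmin : ∀ s : Set G, s ⊂ h '' Set.Icc 1 d → Subgroup.closure s ≠ ⊤)
    (g : G)
    (hS : (g * ·) ''
        (insert 1 (insert (h 1) ((fun i => (h i)⁻¹ * h (i + 1)) '' Set.Icc 1 (d - 1)))) =
      insert 1 (insert (h 1) ((fun i => (h i)⁻¹ * h (i + 1)) '' Set.Icc 1 (d - 1)))) :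
    g = 1 := by
  obtain ⟨n, rfl⟩ : ∃ n, d = n + 1 := ⟨d - 1, by ring⟩
  rw [add_sub_cancel_right] at hS
  have hprefix : h '' Icc 1 n ⊆ h '' Icc 1 (n + 1) \ {h (n + 1)} := by
    rintro _ ⟨i, ⟨hi1, hin⟩, rfl⟩
    refine ⟨mem_image_of_mem h ⟨hi1, by omega⟩, fun heq => ?_⟩
    have := hinj ⟨hi1, by omega⟩ ⟨by omega, le_rfl⟩ heq
    omega
  have hlast : h (n + 1) ∉ Subgroup.closure (h '' Icc 1 n) := fun hmem =>
    Subgroup.notMem_closure_sdiff_singleton_of_minimal hgen hmin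
      (mem_image_of_mem h ⟨by omega, le_rfl⟩) (Subgroup.closure_mono hprefix hmem)
  have h1_mem : h 1 ∈ h '' Icc 1 (n + 1) := mem_image_of_mem h ⟨le_rfl, by omega⟩
  exact Subgroup.eq_one_of_image_mul_subset (stepSet_sdiff_closure (by omega) hlast)
    (mem_insert _ _) (mem_insert_of_mem _ (mem_insert _ _))
    (Subgroup.subset_closure (mem_image_of_mem h ⟨le_rfl, by omega⟩))
    (fun h1_eq => Subgroup.one_notMem_of_minimal hgen hmin (h1_eq ▸ h1_mem)) hS.le

/-- Let `G` be a finite group and `h 1, …, h d` a minimal generating set of `G` (no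
proper subset generates) with `d ≥ 3`. Let
`S = {1, h 1, (h 1)⁻¹ * h 2, (h 2)⁻¹ * h 3, …, (h (d-1))⁻¹ * h d}`. If `g • S = S`
(left translation), then `g = 1`. -/
theorem eq_one_of_smul_set_eq (G : Type*) [Group G] [Fintype G]
    (d : ℤ) (hd : 3 ≤ d) (h : ℤ → G)
    (hinj : Set.InjOn h (Set.Icc 1 d))
    (hgen : Subgroup.closure (h '' Set.Icc 1 d) = ⊤)
    (hmin : ∀ s : Set G, s ⊂ h '' Set.Icc 1 d → Subgroup.closure s ≠ ⊤)
    (g : G)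
    (hS : (g * ·) ''
        (insert 1 (insert (h 1) ((fun i => (h i)⁻¹ * h (i + 1)) '' Set.Icc 1 (d - 1)))) =
      insert 1 (insert (h 1) ((fun i => (h i)⁻¹ * h (i + 1)) '' Set.Icc 1 (d - 1)))) :
    g = 1 :=
  eq_one_of_smul_set_eq_general G d hd h hinj hgen hmin g hS
end

section
/- Let G be a finite group and H = {h_1, …, h_d} a minimal generating set of G with d ≥ 3. Let S = {e, h_1^{−1}h_2, h_2^{−1}h_3, …, h_{d−1}^{−1}h_d} ⊆ G. If g ∈ G satisfies g·S = S (where g·S = {g·s : s ∈ S}), then g = e. -/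
/-!
Let `T` be the subgroup generated by `h 1, …, h (d-1)`. Minimality forces `h d ∉ T`, so the
element `(h (d-1))⁻¹ * h d` is the only element of `S` outside `T`, while `1` and
`(h 1)⁻¹ * h 2 ≠ 1` lie in `S ∩ T` because `d ≥ 3`. If `g ∈ T`, left translation by `g`
preserves `T` and its complement, so it fixes the unique element of `S` outside `T` and
`g = 1`. If `g ∉ T`, it sends both `1` and `(h 1)⁻¹ * h 2` outside `T`, hence to the same
element of `S`, which is impossible.
-/

open Set Subgroup

namespace Subgroup

variable {G : Type*} [Group G]

theorem notMem_closure_diff_singleton {s : Set G} (hgen : closure s = ⊤)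
    (hmin : ∀ t ⊂ s, closure t ≠ ⊤) {x : G} (hx : x ∈ s) : x ∉ closure (s \ {x}) := by
  intro hmem
  refine hmin (s \ {x}) (sdiff_singleton_ssubset.2 hx) (eq_top_iff.2 ?_)
  rw [← hgen, closure_le]
  intro y hy
  by_cases hyx : y = x
  · exact hyx ▸ hmem
  · exact subset_closure ⟨hy, hyx⟩

theorem eq_one_of_mapsTo_mul_left (T : Subgroup G) {S : Set G} {a b g : G}
    (haS : a ∈ S) (haT : a ∉ T) (hS : ∀ x ∈ S, x ∉ T → x = a)
    (h1S : 1 ∈ S) (hbS : b ∈ S) (hbT : b ∈ T) (hb : b ≠ 1)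
    (hg : MapsTo (g * ·) S S) : g = 1 := by
  by_cases hgT : g ∈ T
  · have hga : g * a ∉ T := fun h => haT (by simpa using T.mul_mem (T.inv_mem hgT) h)
    simpa using hS _ (hg haS) hga
  · have hg1 : g * 1 = a := hS _ (hg h1S) (by simpa using hgT)
    have hgb : g * b = a := hS _ (hg hbS) fun h => hgT (by simpa using T.mul_mem h (T.inv_mem hbT))
    exact absurd (mul_left_cancel (hgb.trans hg1.symm)) hb

end Subgroup

theorem apply_notMem_closure_image_Icc_pred {G : Type*} [Group G] {d : ℤ} (hd : 1 ≤ d)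
    {h : ℤ → G} (hinj : InjOn h (Icc 1 d)) (hgen : closure (h '' Icc 1 d) = ⊤)
    (hmin : ∀ s ⊂ h '' Icc 1 d, closure s ≠ ⊤) : h d ∉ closure (h '' Icc 1 (d - 1)) := by
  have hsub : h '' Icc 1 (d - 1) ⊆ h '' Icc 1 d \ {h d} := by
    rintro _ ⟨i, ⟨hi1, hi2⟩, rfl⟩
    refine ⟨mem_image_of_mem h ⟨hi1, by omega⟩, fun hid => ?_⟩
    have := hinj ⟨hi1, by omega⟩ ⟨hd, le_rfl⟩ hid
    omega
  exact fun hmem => notMem_closure_diff_singleton hgen hmin (mem_image_of_mem h ⟨hd, le_rfl⟩)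
    (closure_mono hsub hmem)

theorem eq_one_of_smul_set_eq'_general (G : Type*) [Group G]
    (d : ℤ) (hd : 3 ≤ d) (h : ℤ → G)
    (hinj : Set.InjOn h (Set.Icc 1 d))
    (hgen : Subgroup.closure (h '' Set.Icc 1 d) = ⊤)
    (hmin : ∀ s : Set G, s ⊂ h '' Set.Icc 1 d → Subgroup.closure s ≠ ⊤)
    (g : G)
    (hS : (g * ·) '' (insert 1 ((fun i => (h i)⁻¹ * h (i + 1)) '' Set.Icc 1 (d - 1))) =
      insert 1 ((fun i => (h i)⁻¹ * h (i + 1)) '' Set.Icc 1 (d - 1))) :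
    g = 1 := by
  set s : ℤ → G := fun i => (h i)⁻¹ * h (i + 1)
  set T := closure (h '' Icc 1 (d - 1))
  have hsT : ∀ i, 1 ≤ i → i ≤ d - 2 → s i ∈ T := fun i hi1 hi2 =>
    T.mul_mem (T.inv_mem (subset_closure ⟨i, ⟨hi1, by omega⟩, rfl⟩))
      (subset_closure ⟨i + 1, ⟨by omega, by omega⟩, rfl⟩)
  have hlast : s (d - 1) ∉ T := fun hmem =>
    apply_notMem_closure_image_Icc_pred (by omega) hinj hgen hmin <| by
      simpa [s] using T.mul_mem (subset_closure ⟨d - 1, ⟨by omega, le_rfl⟩, rfl⟩) hmem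
  have hsS : ∀ i ∈ Icc 1 (d - 1), s i ∈ insert 1 (s '' Icc 1 (d - 1)) := fun i hi =>
    mem_insert_of_mem _ (mem_image_of_mem s hi)
  refine T.eq_one_of_mapsTo_mul_left (hsS (d - 1) ⟨by omega, le_rfl⟩) hlast ?_ (mem_insert _ _)
    (hsS 1 ⟨le_rfl, by omega⟩) (hsT 1 le_rfl (by omega)) ?_
    (mapsTo_iff_image_subset.2 hS.subset)
  · rintro _ (rfl | ⟨i, ⟨hi1, hi2⟩, rfl⟩) hx
    · exact absurd T.one_mem hx
    · obtain rfl : i = d - 1 := by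
        by_contra hne
        exact hx (hsT i hi1 (by omega))
      rfl
  · intro h12
    have := hinj ⟨le_rfl, by omega⟩ ⟨by omega, by omega⟩ (inv_mul_eq_one.1 h12)
    omega

/-- Let `G` be a finite group and `h 1, …, h d` a minimal generating set of `G` (no
proper subset generates) with `d ≥ 3`. Let
`S = {1, (h 1)⁻¹ * h 2, (h 2)⁻¹ * h 3, …, (h (d-1))⁻¹ * h d}`. If `g • S = S`
(left translation), then `g = 1`. -/
theorem eq_one_of_smul_set_eq' (G : Type*) [Group G] [Fintype G]
    (d : ℤ) (hd : 3 ≤ d) (h : ℤ → G)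
    (hinj : Set.InjOn h (Set.Icc 1 d))
    (hgen : Subgroup.closure (h '' Set.Icc 1 d) = ⊤)
    (hmin : ∀ s : Set G, s ⊂ h '' Set.Icc 1 d → Subgroup.closure s ≠ ⊤)
    (g : G)
    (hS : (g * ·) '' (insert 1 ((fun i => (h i)⁻¹ * h (i + 1)) '' Set.Icc 1 (d - 1))) =
      insert 1 ((fun i => (h i)⁻¹ * h (i + 1)) '' Set.Icc 1 (d - 1))) :
    g = 1 :=
  eq_one_of_smul_set_eq'_general G d hd h hinj hgen hmin g hS
end
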